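/- arXiv:1903.03573 — 9 statements merged into one kernel-verified Lean document; each statement's English description precedes it below -/
import Mathlib

section
/- Let H be a simple r-uniform, r-partite hypergraph with at least one hyperedge and let I = I(H) be its edge ideal in a polynomial ring over a field. Then for every m ≥ 1 the least degree of a nonzero homogeneous element of I^(m) equals r·m, i.e. α(I^(m)) = rm; consequently the Waldschmidt constant lim_{m→∞} α(I^(m))/m equals r. -/
open MvPolynomial Filter

/-- The `n`-th symbolic power of an ideal: the intersection of the `n`-th powers of the
minimal primes of `I`. -/
def symbolicPower {R : Type*} [CommRing R] (I : Ideal R) (n : ℕ) : Ideal R :=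
  ⨅ p ∈ I.minimalPrimes, p ^ n

/-- The edge ideal of a hypergraph with hyperedge set `H` on a vertex set `V`,
in the polynomial ring `k[x_v : v ∈ V]`. -/
noncomputable def edgeIdeal (k : Type*) [Field k] {V : Type*}
    (H : Set (Finset V)) : Ideal (MvPolynomial V k) :=
  Ideal.span ((fun E : Finset V => ∏ v ∈ E, X v) '' H)

section Aux

variable (k : Type*) [Field k] {V : Type*} [DecidableEq V]

/-- The ideal of polynomials all of whose monomials have degree at least `m`
in the variables from `s`. -/
def partIdeal (s : Finset V) (m : ℕ) : Ideal (MvPolynomial V k) where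
  carrier := {f | ∀ μ ∈ f.support, m ≤ ∑ v ∈ s, μ v}
  zero_mem' := by simp
  add_mem' := by
    intro a b ha hb μ hμ
    rcases Finset.mem_union.mp (MvPolynomial.support_add hμ) with h | h
    · exact ha μ h
    · exact hb μ h
  smul_mem' := by
    intro c f hf μ hμ
    have := MvPolynomial.support_mul c f (by rwa [smul_eq_mul] at hμ)
    rcases Finset.mem_add.mp this with ⟨α, hα, β, hβ, rfl⟩
    have : m ≤ ∑ v ∈ s, β v := hf β hβ
    calc m ≤ ∑ v ∈ s, β v := this
      _ ≤ ∑ v ∈ s, (α + β) v := Finset.sum_le_sum (fun v _ => by simp)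

lemma mul_mem_partIdeal {s : Finset V} {a b : ℕ} {f g : MvPolynomial V k}
    (hf : f ∈ partIdeal k s a) (hg : g ∈ partIdeal k s b) :
    f * g ∈ partIdeal k s (a + b) := by
  intro μ hμ
  rcases Finset.mem_add.mp (MvPolynomial.support_mul f g hμ) with ⟨α, hα, β, hβ, rfl⟩
  have h1 := hf α hα
  have h2 := hg β hβ
  calc a + b ≤ (∑ v ∈ s, α v) + ∑ v ∈ s, β v := add_le_add h1 h2
    _ = ∑ v ∈ s, (α + β) v := by rw [← Finset.sum_add_distrib]; simp

lemma span_X_pow_le_partIdeal (s : Finset V) (m : ℕ) :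
    Ideal.span ((X : V → MvPolynomial V k) '' ↑s) ^ m ≤ partIdeal k s m := by
  induction m with
  | zero => intro f _ μ _; exact Nat.zero_le _
  | succ n ih =>
    rw [pow_succ]
    apply Ideal.mul_le.mpr
    intro f hf g hg
    refine mul_mem_partIdeal k (ih hf) ?_
    have hspan : Ideal.span ((X : V → MvPolynomial V k) '' ↑s) ≤ partIdeal k s 1 := by
      rw [Ideal.span_le]
      rintro _ ⟨v, hv, rfl⟩ μ hμ
      rw [MvPolynomial.support_X, Finset.mem_singleton] at hμ
      subst hμ
      calc (1:ℕ) = Finsupp.single v 1 v := by simp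
        _ ≤ ∑ w ∈ s, Finsupp.single v 1 w :=
            Finset.single_le_sum (f := fun w => (Finsupp.single v 1) w)
              (fun _ _ => Nat.zero_le _) (Finset.mem_coe.mp hv)
    exact hspan hg

/-- The substitution killing variables from `s`. -/
noncomputable def killMap (s : Finset V) : MvPolynomial V k →ₐ[k] MvPolynomial V k :=
  aeval (fun v => if v ∈ s then 0 else X v)

lemma killMap_X (s : Finset V) (v : V) :
    killMap k s (X v) = if v ∈ s then 0 else X v :=
  aeval_X _ v

lemma sub_killMap_mem (s : Finset V) (f : MvPolynomial V k) :
    f - killMap k s f ∈ Ideal.span ((X : V → MvPolynomial V k) '' ↑s) := by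
  induction f using MvPolynomial.induction_on with
  | C a => simp [killMap]
  | add p q hp hq =>
    have : p + q - killMap k s (p + q) = (p - killMap k s p) + (q - killMap k s q) := by
      rw [map_add]; ring
    rw [this]; exact Ideal.add_mem _ hp hq
  | mul_X p v hp =>
    rw [map_mul, killMap_X]
    by_cases hv : v ∈ s
    · rw [if_pos hv, mul_zero, sub_zero]
      exact Ideal.mul_mem_left _ p (Ideal.subset_span ⟨v, hv, rfl⟩)
    · rw [if_neg hv]
      have heq : p * X v - killMap k s p * X v = (p - killMap k s p) * X v := by ring
      rw [heq]
      exact Ideal.mul_mem_right _ _ hp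

lemma span_X_isPrime (s : Finset V) :
    (Ideal.span ((X : V → MvPolynomial V k) '' ↑s)).IsPrime := by
  have heq : Ideal.span ((X : V → MvPolynomial V k) '' ↑s)
      = RingHom.ker (killMap k s).toRingHom := by
    apply le_antisymm
    · rw [Ideal.span_le]
      rintro _ ⟨v, hv, rfl⟩
      simp [RingHom.mem_ker, killMap_X, Finset.mem_coe.mp hv]
    · intro f hf
      have h0 : killMap k s f = 0 := hf
      have := sub_killMap_mem k s f
      rwa [h0, sub_zero] at this
  rw [heq]
  exact RingHom.ker_isPrime _

end Aux

/-- For a simple `r`-uniform `r`-partite hypergraph `H` with at least one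
hyperedge, the least degree of a nonzero homogeneous element of `I⁽ᵐ⁾` is `r·m` for every
`m ≥ 1`; consequently the Waldschmidt constant `lim α(I⁽ᵐ⁾)/m` equals `r`. -/
theorem alpha_symbolicPower_of_r_partite
    (k : Type*) [Field k] {V : Type*} [Fintype V] [DecidableEq V]
    (r : ℕ) (H : Set (Finset V)) (X : Fin r → Finset V)
    -- the parts are pairwise disjoint and cover the vertex set
    (hdisj : ∀ i j : Fin r, i ≠ j → Disjoint (X i) (X j))
    (hcover : ∀ v : V, ∃ i : Fin r, v ∈ X i)
    -- `H` is simple: no hyperedge contains another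
    (hsimple : ∀ E ∈ H, ∀ F ∈ H, E ⊆ F → E = F)
    -- `H` is `r`-uniform
    (huniform : ∀ E ∈ H, E.card = r)
    -- `H` is `r`-partite with respect to the partition `X`
    (hpartite : ∀ E ∈ H, ∀ i : Fin r, (E ∩ X i).card = 1)
    -- `H` has at least one hyperedge
    (hne : H.Nonempty) :
    (∀ m : ℕ, 1 ≤ m →
      IsLeast {d : ℕ | ∃ f ∈ symbolicPower (edgeIdeal k H) m, f ≠ 0 ∧
        MvPolynomial.IsHomogeneous f d} (r * m)) ∧
    Tendsto (fun m : ℕ =>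
        ((sInf {d : ℕ | ∃ f ∈ symbolicPower (edgeIdeal k H) m, f ≠ 0 ∧
          MvPolynomial.IsHomogeneous f d} : ℕ) : ℝ) / (m : ℝ))
      atTop (nhds (r : ℝ)) := by
  obtain ⟨E, hE⟩ := hne
  have key : ∀ m : ℕ, 1 ≤ m →
      IsLeast {d : ℕ | ∃ f ∈ symbolicPower (edgeIdeal k H) m, f ≠ 0 ∧
        MvPolynomial.IsHomogeneous f d} (r * m) := by
    intro m hm
    constructor
    · -- r * m is attained
      refine ⟨(∏ v ∈ E, MvPolynomial.X v) ^ m, ?_, ?_, ?_⟩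
      · have h1 : (∏ v ∈ E, (MvPolynomial.X v : MvPolynomial V k)) ∈ edgeIdeal k H :=
          Ideal.subset_span ⟨E, hE, rfl⟩
        have h2 : (∏ v ∈ E, (MvPolynomial.X v : MvPolynomial V k)) ^ m
            ∈ (edgeIdeal k H) ^ m := Ideal.pow_mem_pow h1 m
        simp only [symbolicPower, Ideal.mem_iInf]
        intro p hp
        exact Ideal.pow_right_mono hp.1.2 m h2
      · exact pow_ne_zero _ (Finset.prod_ne_zero_iff.mpr
          fun v _ => MvPolynomial.X_ne_zero v)
      · have h := MvPolynomial.IsHomogeneous.prod E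
          (fun v => (MvPolynomial.X v : MvPolynomial V k)) (fun _ => 1)
          (fun v _ => MvPolynomial.isHomogeneous_X k v)
        have h2 : (∏ v ∈ E, (MvPolynomial.X v : MvPolynomial V k)).IsHomogeneous r := by
          simpa [huniform E hE] using h
        exact h2.pow m
    · -- lower bound
      rintro d ⟨f, hf, hf0, hfh⟩
      obtain ⟨μ, hμ⟩ := (MvPolynomial.support_nonempty (p := f)).mpr hf0
      have hdeg : ∀ i : Fin r, m ≤ ∑ v ∈ X i, μ v := by
        intro i
        haveI hprime := span_X_isPrime k (X i)
        have hle : edgeIdeal k H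
            ≤ Ideal.span ((MvPolynomial.X : V → MvPolynomial V k) '' ↑(X i)) := by
          rw [edgeIdeal, Ideal.span_le]
          rintro _ ⟨F, hF, rfl⟩
          dsimp only
          have hcard := hpartite F hF i
          obtain ⟨v, hv⟩ := Finset.card_pos.mp (by rw [hcard]; norm_num)
          rw [Finset.mem_inter] at hv
          rw [← Finset.mul_prod_erase _ _ hv.1]
          exact Ideal.mul_mem_right _ _ (Ideal.subset_span ⟨v, hv.2, rfl⟩)
        obtain ⟨p, hp, hple⟩ := Ideal.exists_minimalPrimes_le hle
        have hf' : f ∈ p ^ m := by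
          simp only [symbolicPower, Ideal.mem_iInf] at hf
          exact hf p hp
        exact span_X_pow_le_partIdeal k (X i) m
          (Ideal.pow_right_mono hple m hf') μ hμ
      choose π hπ using hcover
      have hfib : ∀ i : Fin r, X i = Finset.univ.filter (fun v => π v = i) := by
        intro i
        ext v
        simp only [Finset.mem_filter, Finset.mem_univ, true_and]
        constructor
        · intro hv
          by_contra hne'
          exact Finset.disjoint_left.mp (hdisj (π v) i hne') (hπ v) hv
        · rintro rfl
          exact hπ v
      have hd : d = ∑ v, μ v := by
        have hw := hfh (MvPolynomial.mem_support_iff.mp hμ)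
        rw [show (1 : V → ℕ) = fun _ => 1 from rfl, ← Finsupp.degree_eq_weight_one] at hw
        rw [← hw, Finsupp.degree]
        refine Finset.sum_subset (f := fun v => μ v) (Finset.subset_univ μ.support) ?_
        intro x _ hx
        exact Finsupp.notMem_support_iff.mp hx
      calc r * m = ∑ _i : Fin r, m := by simp [mul_comm]
        _ ≤ ∑ i : Fin r, ∑ v ∈ X i, μ v := Finset.sum_le_sum fun i _ => hdeg i
        _ = ∑ i : Fin r, ∑ v ∈ Finset.univ.filter (fun v => π v = i), μ v := by
            refine Finset.sum_congr rfl fun i _ => ?_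
            rw [hfib i]
        _ = ∑ v, μ v := Finset.sum_fiberwise_of_maps_to
            (fun x _ => Finset.mem_univ (π x)) μ
        _ = d := hd.symm
  refine ⟨key, ?_⟩
  have hev : (fun m : ℕ =>
      ((sInf {d : ℕ | ∃ f ∈ symbolicPower (edgeIdeal k H) m, f ≠ 0 ∧
        MvPolynomial.IsHomogeneous f d} : ℕ) : ℝ) / (m : ℝ))
      =ᶠ[atTop] fun _ => (r : ℝ) := by
    refine eventually_atTop.mpr ⟨1, fun m hm => ?_⟩
    dsimp only
    rw [(key m hm).csInf_eq]
    have hm0 : (m : ℝ) ≠ 0 := Nat.cast_ne_zero.mpr (by omega)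
    push_cast
    rw [mul_div_assoc, div_self hm0, mul_one]
  exact Tendsto.congr' hev.symm tendsto_const_nhds
end

section
/- Let H be a simple 3-uniform, 3-partite hypergraph and I = I(H) its edge ideal in a polynomial ring over a field. If I^(2) ≠ I^2, then H contains a bad subhypergraph of length 3, i.e. there exist six distinct vertices v_1,…,v_6 of H such that {v_1,v_2,v_3}, {v_3,v_4,v_5} and {v_5,v_6,v_2} are all hyperedges of H. -/
open MvPolynomial

/-- `H` contains a bad subhypergraph of length 3: six distinct vertices `v 0, …, v 5` such
that `{v 0, v 1, v 2}`, `{v 2, v 3, v 4}` and `{v 4, v 5, v 1}` are hyperedges of `H`. -/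
def HasBadSubhypergraph {V : Type*} [DecidableEq V] (H : Set (Finset V)) : Prop :=
  ∃ v : Fin 6 → V, Function.Injective v ∧
    ({v 0, v 1, v 2} : Finset V) ∈ H ∧
    ({v 2, v 3, v 4} : Finset V) ∈ H ∧
    ({v 4, v 5, v 1} : Finset V) ∈ H

/-!
For every vertex cover `C` the monomial prime `(x_v : v ∈ C)` contains `I`, so its square
contains `I⁽²⁾`: every monomial `x^d` occurring in an element of `I⁽²⁾` has degree at least two
on every vertex cover. It lies in `I²` as soon as `x_E x_F ∣ x^d` for two edges `E, F`. If there
are no such edges, testing suitable covers shows that the edges inside the support of `d` form a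
nonempty family in which any two edges share a vertex of multiplicity one, while every such vertex
is avoided by some edge. In a 3-uniform 3-partite family this produces two edges `P, Q` meeting in
a single vertex `c`, and an edge avoiding `c` closes up the bad triangle.
-/

open Finset

theorem pow_le_symbolicPower {R : Type*} [CommRing R] (I : Ideal R) (n : ℕ) :
    I ^ n ≤ symbolicPower I n :=
  le_iInf₂ fun _ hp => Ideal.pow_right_mono hp.1.2 n

theorem symbolicPower_le_pow_of_le {R : Type*} [CommRing R] {I P : Ideal R} [P.IsPrime]
    (hIP : I ≤ P) (n : ℕ) : symbolicPower I n ≤ P ^ n := by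
  obtain ⟨p, hp, hpP⟩ := Ideal.exists_minimalPrimes_le hIP
  exact (iInf₂_le p hp).trans (Ideal.pow_right_mono hpP n)

namespace MvPolynomial

variable {σ R : Type*}

theorem span_X_image_eq_ker_aeval [CommRing R] (s : Set σ) [DecidablePred (· ∈ s)] :
    Ideal.span (X '' s : Set (MvPolynomial σ R)) =
      RingHom.ker (aeval fun i => if i ∈ s then 0 else X i :
        MvPolynomial σ R →ₐ[R] MvPolynomial σ R) := by
  set I := Ideal.span (X '' s : Set (MvPolynomial σ R))
  set φ : MvPolynomial σ R →ₐ[R] MvPolynomial σ R := aeval fun i => if i ∈ s then 0 else X i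
  apply le_antisymm
  · rw [Ideal.span_le]
    rintro _ ⟨i, hi, rfl⟩
    simp [φ, hi]
  · -- `φ` only kills generators of `I`, so it is the identity modulo `I`
    have hφ : (Ideal.Quotient.mkₐ R I).comp φ = Ideal.Quotient.mkₐ R I := by
      ext i
      by_cases hi : i ∈ s
      · simp only [φ, AlgHom.comp_apply, aeval_X, hi, if_true, map_zero]
        exact (Ideal.Quotient.eq_zero_iff_mem.2
          (Ideal.subset_span (Set.mem_image_of_mem X hi))).symm
      · simp [φ, hi]
    intro f hf
    rw [← Ideal.Quotient.eq_zero_iff_mem, ← Ideal.Quotient.mkₐ_eq_mk R, ← hφ,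
      AlgHom.comp_apply, RingHom.mem_ker.1 hf, map_zero]

theorem isPrime_span_X_image [CommRing R] [IsDomain R] (s : Set σ) :
    (Ideal.span (X '' s : Set (MvPolynomial σ R))).IsPrime := by
  classical
  rw [span_X_image_eq_ker_aeval]
  exact RingHom.ker_isPrime _

theorem span_X_image_pow_le [CommSemiring R] (C : Finset σ) (n : ℕ) :
    Ideal.span (X '' C : Set (MvPolynomial σ R)) ^ n ≤
      Ideal.span ((monomial · (1 : R)) '' {d | n ≤ ∑ i ∈ C, d i}) := by
  induction n with
  | zero =>
    rw [pow_zero, Ideal.one_eq_top, top_le_iff, Ideal.eq_top_iff_one]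
    exact Ideal.subset_span ⟨0, by simp, by simp⟩
  | succ n ih =>
    rw [pow_succ]
    refine (Ideal.mul_mono_left ih).trans ?_
    rw [Ideal.span_mul_span', Ideal.span_le]
    rintro _ ⟨_, ⟨d, hd, rfl⟩, _, ⟨i, hi, rfl⟩, rfl⟩
    classical
    refine Ideal.subset_span ⟨d + Finsupp.single i 1, ?_, by simp [X, monomial_mul]⟩
    simpa [sum_add_distrib, Finsupp.single_apply, Finset.mem_coe.1 hi] using hd

theorem le_sum_of_mem_span_X_image_pow [CommSemiring R] {C : Finset σ} {n : ℕ}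
    {f : MvPolynomial σ R} (hf : f ∈ Ideal.span (X '' C : Set (MvPolynomial σ R)) ^ n)
    {d : σ →₀ ℕ} (hd : d ∈ f.support) : n ≤ ∑ i ∈ C, d i := by
  obtain ⟨e, he, hed⟩ := mem_ideal_span_monomial_image.1 (span_X_image_pow_le C n hf) d hd
  exact he.trans (sum_le_sum fun i _ => hed i)

end MvPolynomial

theorem fin_three_eq_of_ne {i j a b : Fin 3} (hij : i ≠ j) (hai : a ≠ i) (haj : a ≠ j)
    (hbi : b ≠ i) (hbj : b ≠ j) : a = b := by
  revert i j a b
  decide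

theorem Finset.exists_eq_insert_pair_of_card_eq_three {α : Type*} [DecidableEq α] {E : Finset α}
    (hE : E.card = 3) {a b : α} (ha : a ∈ E) (hb : b ∈ E) (hab : a ≠ b) :
    ∃ x, x ≠ a ∧ x ≠ b ∧ E = {x, a, b} := by
  have hb' : b ∈ E.erase a := mem_erase.2 ⟨hab.symm, hb⟩
  obtain ⟨x, hx⟩ := card_eq_one.1 <| by
    rw [card_erase_of_mem hb', card_erase_of_mem ha, hE]
  have hxE : x ∈ (E.erase a).erase b := hx ▸ mem_singleton_self x
  refine ⟨x, ne_of_mem_erase (mem_of_mem_erase hxE), ne_of_mem_erase hxE, ?_⟩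
  rw [← insert_erase ha, ← insert_erase hb', hx, pair_comm, insert_comm]

theorem HasBadSubhypergraph.mono {V : Type*} [DecidableEq V] {H H' : Set (Finset V)}
    (hHH' : H ⊆ H') (hH : HasBadSubhypergraph H) : HasBadSubhypergraph H' :=
  let ⟨v, hv, h₁, h₂, h₃⟩ := hH
  ⟨v, hv, hHH' h₁, hHH' h₂, hHH' h₃⟩

section Rainbow

variable {V : Type*} [DecidableEq V] {𝓔 : Set (Finset V)} {col : V → Fin 3}

theorem card_inter_eq_one_or_erase_subset {E K : Finset V} (hE : E.card = 3) {b : V}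
    (hbE : b ∈ E) (hbK : b ∉ K) (hEK : (E ∩ K).Nonempty) : (E ∩ K).card = 1 ∨ E.erase b ⊆ K := by
  have hsub : E ∩ K ⊆ E.erase b := fun v hv =>
    mem_erase.2 ⟨fun h => hbK (h ▸ (mem_inter.1 hv).2), (mem_inter.1 hv).1⟩
  have hcard : (E.erase b).card = 2 := by rw [card_erase_of_mem hbE, hE]
  have hle := card_le_card hsub
  have hpos := hEK.card_pos
  rcases (by omega : (E ∩ K).card = 1 ∨ (E ∩ K).card = 2) with h | h
  · exact Or.inl h
  · right
    rw [← eq_of_subset_of_card_le hsub (by omega)]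
    exact inter_subset_right

theorem exists_card_inter_eq_one (h3 : ∀ E ∈ 𝓔, E.card = 3) (hcol : ∀ E ∈ 𝓔, Set.InjOn col E)
    {B : Set V} (hne : 𝓔.Nonempty) (hmeet : ∀ E ∈ 𝓔, ∀ F ∈ 𝓔, ∃ v ∈ E ∩ F, v ∈ B)
    (havoid : ∀ b ∈ B, ∃ E ∈ 𝓔, b ∉ E) : ∃ P ∈ 𝓔, ∃ Q ∈ 𝓔, (P ∩ Q).card = 1 := by
  have hmeet' : ∀ E ∈ 𝓔, ∀ F ∈ 𝓔, (E ∩ F).Nonempty := fun E hE F hF =>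
    let ⟨v, hv, _⟩ := hmeet E hE F hF
    ⟨v, hv⟩
  obtain ⟨E, hE⟩ := hne
  obtain ⟨b₀, hb₀E, hb₀B⟩ := hmeet E hE E hE
  rw [inter_self] at hb₀E
  obtain ⟨G, hG, hb₀G⟩ := havoid b₀ hb₀B
  obtain ⟨b₁, hb₁, hb₁B⟩ := hmeet E hE G hG
  obtain ⟨hb₁E, hb₁G⟩ := mem_inter.1 hb₁
  obtain ⟨K, hK, hb₁K⟩ := havoid b₁ hb₁B
  rcases card_inter_eq_one_or_erase_subset (h3 E hE) hb₀E hb₀G (hmeet' E hE G hG) with h | hEG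
  · exact ⟨E, hE, G, hG, h⟩
  rcases card_inter_eq_one_or_erase_subset (h3 E hE) hb₁E hb₁K (hmeet' E hE K hK) with h | hEK
  · exact ⟨E, hE, K, hK, h⟩
  rcases card_inter_eq_one_or_erase_subset (h3 G hG) hb₁G hb₁K (hmeet' G hG K hK) with h | hGK
  · exact ⟨G, hG, K, hK, h⟩
  exfalso
  have hb₀₁ : b₀ ≠ b₁ := fun h => hb₀G (h ▸ hb₁G)
  obtain ⟨t, htb₀, htb₁, rfl⟩ := exists_eq_insert_pair_of_card_eq_three (h3 E hE) hb₀E hb₁E hb₀₁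
  have htG : t ∈ G := hEG (mem_erase.2 ⟨htb₀, by simp⟩)
  obtain ⟨y, hyb₁, hyt, rfl⟩ :=
    exists_eq_insert_pair_of_card_eq_three (h3 G hG) hb₁G htG htb₁.symm
  -- `b₀` and `y` both avoid the colours of `b₁` and `t`, yet both lie in `K`
  have hcol_eq : col b₀ = col y :=
    fin_three_eq_of_ne ((hcol _ hE).ne hb₁E (by simp) htb₁.symm)
      ((hcol _ hE).ne hb₀E hb₁E hb₀₁) ((hcol _ hE).ne hb₀E (by simp) htb₀.symm)
      ((hcol _ hG).ne (by simp) hb₁G hyb₁) ((hcol _ hG).ne (by simp) htG hyt)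
  have := hcol K hK (hEK (mem_erase.2 ⟨hb₀₁, hb₀E⟩)) (hGK (mem_erase.2 ⟨hyb₁, by simp⟩)) hcol_eq
  exact hb₀G (this ▸ by simp)

theorem hasBadSubhypergraph_of_inter_eq_singleton (h3 : ∀ E ∈ 𝓔, E.card = 3)
    (hcol : ∀ E ∈ 𝓔, Set.InjOn col E) {P Q G : Finset V} (hP : P ∈ 𝓔) (hQ : Q ∈ 𝓔) (hG : G ∈ 𝓔)
    {c e f : V} (hPQ : P ∩ Q = {c}) (hcG : c ∉ G) (heG : e ∈ G) (heP : e ∈ P) (hfG : f ∈ G)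
    (hfQ : f ∈ Q) : HasBadSubhypergraph 𝓔 := by
  have hPQc : ∀ v ∈ P, v ∈ Q → v = c := fun v hvP hvQ =>
    mem_singleton.1 (hPQ ▸ mem_inter.2 ⟨hvP, hvQ⟩)
  obtain ⟨hcP, hcQ⟩ := mem_inter.1 (hPQ ▸ mem_singleton_self c)
  have hec : e ≠ c := fun h => hcG (h ▸ heG)
  have hfc : f ≠ c := fun h => hcG (h ▸ hfG)
  have hef : e ≠ f := fun h => hec (hPQc e heP (h ▸ hfQ))
  obtain ⟨x, hxe, hxc, rfl⟩ := exists_eq_insert_pair_of_card_eq_three (h3 P hP) heP hcP hec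
  obtain ⟨y, hyc, hyf, rfl⟩ :=
    exists_eq_insert_pair_of_card_eq_three (h3 Q hQ) hcQ hfQ hfc.symm
  obtain ⟨g, hgf, hge, rfl⟩ := exists_eq_insert_pair_of_card_eq_three (h3 G hG) hfG heG hef.symm
  have hgc : g ≠ c := fun h => hcG (h ▸ by simp)
  have hxy : x ≠ y := fun h => hxc (hPQc x (by simp) (h ▸ by simp))
  have hxf : x ≠ f := fun h => hfc (hPQc f (h ▸ by simp) hfQ)
  have hey : e ≠ y := fun h => hec (hPQc e heP (h ▸ by simp))
  have hcol_eq : col c = col g :=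
    fin_three_eq_of_ne ((hcol _ hG).ne heG hfG hef) ((hcol _ hP).ne hcP heP hec.symm)
      ((hcol _ hQ).ne hcQ hfQ hfc.symm) ((hcol _ hG).ne (by simp) heG hge)
      ((hcol _ hG).ne (by simp) hfG hgf)
  have hxg : x ≠ g := fun h => (hcol _ hP).ne (by simp) hcP hxc (h ▸ hcol_eq.symm)
  have hyg : y ≠ g := fun h => (hcol _ hQ).ne (by simp) hcQ hyc (h ▸ hcol_eq.symm)
  refine ⟨![x, e, c, y, f, g], ?_, hP, ?_, ?_⟩
  · simp only [← List.nodup_ofFn, List.ofFn_succ, Matrix.cons_val_zero, Matrix.cons_val_succ,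
      Matrix.cons_val_fin_one, List.ofFn_zero, List.nodup_cons, List.mem_cons, List.not_mem_nil,
      or_false, not_or, not_false_eq_true, List.nodup_nil, and_self, and_true]
    exact ⟨⟨hxe, hxc, hxy, hxf, hxg⟩, ⟨hec, hey, hef, hge.symm⟩, ⟨hyc.symm, hfc.symm, hgc.symm⟩,
      ⟨hyf, hyg⟩, hgf.symm⟩
  · show ({c, y, f} : Finset V) ∈ 𝓔
    rwa [insert_comm]
  · show ({f, g, e} : Finset V) ∈ 𝓔
    rwa [insert_comm]

theorem hasBadSubhypergraph_of_pairwise_meet (h3 : ∀ E ∈ 𝓔, E.card = 3)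
    (hcol : ∀ E ∈ 𝓔, Set.InjOn col E) {B : Set V} (hne : 𝓔.Nonempty)
    (hmeet : ∀ E ∈ 𝓔, ∀ F ∈ 𝓔, ∃ v ∈ E ∩ F, v ∈ B) (havoid : ∀ b ∈ B, ∃ E ∈ 𝓔, b ∉ E) :
    HasBadSubhypergraph 𝓔 := by
  obtain ⟨P, hP, Q, hQ, hPQ⟩ := exists_card_inter_eq_one h3 hcol hne hmeet havoid
  obtain ⟨c, hc⟩ := card_eq_one.1 hPQ
  have hcB : c ∈ B := by
    obtain ⟨v, hv, hvB⟩ := hmeet P hP Q hQ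
    rw [hc, mem_singleton] at hv
    exact hv ▸ hvB
  obtain ⟨G, hG, hcG⟩ := havoid c hcB
  obtain ⟨e, he, -⟩ := hmeet G hG P hP
  obtain ⟨f, hf, -⟩ := hmeet G hG Q hQ
  exact hasBadSubhypergraph_of_inter_eq_singleton h3 hcol hP hQ hG hc hcG
    (mem_inter.1 he).1 (mem_inter.1 he).2 (mem_inter.1 hf).1 (mem_inter.1 hf).2

end Rainbow

section VertexCover

variable {V : Type*}

def IsVertexCover (H : Set (Finset V)) (C : Finset V) : Prop :=
  ∀ E ∈ H, ∃ v ∈ E, v ∈ C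

noncomputable def indicatorExponent (E : Finset V) : V →₀ ℕ :=
  ∑ v ∈ E, Finsupp.single v 1

variable [DecidableEq V]

theorem indicatorExponent_apply (E : Finset V) (v : V) :
    indicatorExponent E v = if v ∈ E then 1 else 0 := by
  simp [indicatorExponent, Finsupp.finsetSum_apply, Finsupp.single_apply]

theorem indicatorExponent_add_le {E F : Finset V} {m : V →₀ ℕ} (hE : E ⊆ m.support)
    (hF : F ⊆ m.support) (hEF : ∀ v ∈ E ∩ F, m v ≠ 1) :
    indicatorExponent E + indicatorExponent F ≤ m := by
  intro v
  have hE' : v ∈ E → m v ≠ 0 := fun h => Finsupp.mem_support_iff.1 (hE h)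
  have hF' : v ∈ F → m v ≠ 0 := fun h => Finsupp.mem_support_iff.1 (hF h)
  have hEF' : v ∈ E → v ∈ F → m v ≠ 1 := fun h₁ h₂ => hEF v (mem_inter.2 ⟨h₁, h₂⟩)
  simp only [Finsupp.coe_add, Pi.add_apply, indicatorExponent_apply]
  split_ifs with h₁ h₂ h₂
  · have := hE' h₁; have := hEF' h₁ h₂; omega
  · have := hE' h₁; omega
  · have := hF' h₂; omega
  · omega

variable [Fintype V] {H : Set (Finset V)} {m : V →₀ ℕ}

theorem exists_subset_support_sdiff (hm : ∀ C, IsVertexCover H C → 2 ≤ ∑ v ∈ C, m v)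
    {T : Finset V} (hT : ∑ v ∈ T, m v < 2) : ∃ E ∈ H, E ⊆ m.support \ T := by
  by_contra! h
  have hcover : IsVertexCover H (univ \ (m.support \ T)) := fun E hE => by
    obtain ⟨v, hvE, hv⟩ := not_subset.1 (h E hE)
    exact ⟨v, hvE, mem_sdiff.2 ⟨mem_univ v, hv⟩⟩
  have hle : ∑ v ∈ univ \ (m.support \ T), m v ≤ ∑ v ∈ T, m v :=
    sum_le_sum_of_ne_zero fun v hv hmv => by
      by_contra hvT
      exact (mem_sdiff.1 hv).2 (mem_sdiff.2 ⟨Finsupp.mem_support_iff.2 hmv, hvT⟩)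
  have := hm _ hcover
  omega

theorem exists_indicatorExponent_add_le (col : V → Fin 3) (h3 : ∀ E ∈ H, E.card = 3)
    (hcol : ∀ E ∈ H, Set.InjOn col E) (hbad : ¬ HasBadSubhypergraph H)
    (hm : ∀ C, IsVertexCover H C → 2 ≤ ∑ v ∈ C, m v) :
    ∃ E ∈ H, ∃ F ∈ H, indicatorExponent E + indicatorExponent F ≤ m := by
  by_contra! hno
  refine hbad (HasBadSubhypergraph.mono (H := {E | E ∈ H ∧ E ⊆ m.support})
    (fun E hE => hE.1) ?_)
  refine hasBadSubhypergraph_of_pairwise_meet (col := col) (B := {v | m v = 1})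
    (fun E hE => h3 E hE.1) (fun E hE => hcol E hE.1) ?_ ?_ ?_
  · obtain ⟨E, hE, hEs⟩ := exists_subset_support_sdiff hm (T := ∅) (by simp)
    exact ⟨E, hE, by simpa using hEs⟩
  · intro E hE F hF
    by_contra! h
    exact hno E hE.1 F hF.1 (indicatorExponent_add_le hE.2 hF.2 h)
  · intro b hb
    obtain ⟨E, hE, hEs⟩ := exists_subset_support_sdiff hm (T := {b}) (by simp [hb.out])
    exact ⟨E, ⟨hE, hEs.trans sdiff_subset⟩,
      fun hbE => (mem_sdiff.1 (hEs hbE)).2 (mem_singleton_self b)⟩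

end VertexCover

section EdgeIdeal

variable {k : Type*} [Field k] {V : Type*} {H : Set (Finset V)}

theorem prod_X_eq_monomial_indicatorExponent (E : Finset V) :
    ∏ v ∈ E, X v = monomial (indicatorExponent E) (1 : k) := by
  rw [indicatorExponent, monomial_sum_one]
  rfl

theorem edgeIdeal_le_span_X_image {C : Finset V} (hC : IsVertexCover H C) :
    edgeIdeal k H ≤ Ideal.span (X '' C) := by
  rw [edgeIdeal, Ideal.span_le]
  rintro _ ⟨E, hE, rfl⟩
  obtain ⟨v, hvE, hvC⟩ := hC E hE
  exact Ideal.mem_of_dvd _ (dvd_prod_of_mem X hvE) (Ideal.subset_span ⟨v, hvC, rfl⟩)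

theorem monomial_mem_edgeIdeal_sq {E F : Finset V} (hE : E ∈ H) (hF : F ∈ H) {d : V →₀ ℕ}
    (hd : indicatorExponent E + indicatorExponent F ≤ d) (c : k) :
    monomial d c ∈ edgeIdeal k H ^ 2 := by
  have hEF : (∏ v ∈ E, X v) * ∏ v ∈ F, X v ∈ edgeIdeal k H ^ 2 :=
    pow_two (edgeIdeal k H) ▸
      Ideal.mul_mem_mul (Ideal.subset_span ⟨E, hE, rfl⟩) (Ideal.subset_span ⟨F, hF, rfl⟩)
  refine Ideal.mem_of_dvd _ ?_ hEF
  rw [prod_X_eq_monomial_indicatorExponent, prod_X_eq_monomial_indicatorExponent, monomial_mul,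
    one_mul, monomial_dvd_monomial]
  exact ⟨Or.inr hd, one_dvd c⟩

theorem symbolicPower_two_le_edgeIdeal_sq [Fintype V] [DecidableEq V] (col : V → Fin 3)
    (h3 : ∀ E ∈ H, E.card = 3) (hcol : ∀ E ∈ H, Set.InjOn col E)
    (hbad : ¬ HasBadSubhypergraph H) : symbolicPower (edgeIdeal k H) 2 ≤ edgeIdeal k H ^ 2 := by
  intro f hf
  rw [f.as_sum]
  refine Ideal.sum_mem _ fun d hd => ?_
  have hcover : ∀ C, IsVertexCover H C → 2 ≤ ∑ v ∈ C, d v := by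
    intro C hC
    have := isPrime_span_X_image (R := k) (C : Set V)
    exact le_sum_of_mem_span_X_image_pow
      (symbolicPower_le_pow_of_le (edgeIdeal_le_span_X_image hC) 2 hf) hd
  obtain ⟨E, hE, F, hF, hEF⟩ := exists_indicatorExponent_add_le col h3 hcol hbad hcover
  exact monomial_mem_edgeIdeal_sq hE hF hEF _

end EdgeIdeal

theorem hasBad_of_symbolicPower_two_ne_general
    (k : Type*) [Field k] {V : Type*} [Fintype V] [DecidableEq V]
    (H : Set (Finset V)) (X : Fin 3 → Finset V)
    -- the parts are pairwise disjoint and cover the vertex set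
    (hcover : ∀ v : V, ∃ i : Fin 3, v ∈ X i)
    -- `H` is 3-uniform
    (huniform : ∀ E ∈ H, E.card = 3)
    -- `H` is 3-partite with respect to the partition `X`
    (hpartite : ∀ E ∈ H, ∀ i : Fin 3, (E ∩ X i).card = 1)
    (hne : symbolicPower (edgeIdeal k H) 2 ≠ (edgeIdeal k H) ^ 2) :
    HasBadSubhypergraph H := by
  choose col hcol using hcover
  have hrainbow : ∀ E ∈ H, Set.InjOn col E := fun E hE u hu v hv huv =>
    card_le_one.1 (hpartite E hE (col u)).le u (mem_inter.2 ⟨hu, hcol u⟩) v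
      (mem_inter.2 ⟨hv, huv ▸ hcol v⟩)
  by_contra hbad
  exact hne (le_antisymm (symbolicPower_two_le_edgeIdeal_sq col huniform hrainbow hbad)
    (pow_le_symbolicPower _ 2))

/-- For a simple 3-uniform 3-partite hypergraph `H` with edge ideal `I`,
if `I⁽²⁾ ≠ I²` then `H` contains a bad subhypergraph of length 3. -/
theorem hasBad_of_symbolicPower_two_ne
    (k : Type*) [Field k] {V : Type*} [Fintype V] [DecidableEq V]
    (H : Set (Finset V)) (X : Fin 3 → Finset V)
    -- the parts are pairwise disjoint and cover the vertex set
    (hdisj : ∀ i j : Fin 3, i ≠ j → Disjoint (X i) (X j))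
    (hcover : ∀ v : V, ∃ i : Fin 3, v ∈ X i)
    -- `H` is simple: no hyperedge contains another
    (hsimple : ∀ E ∈ H, ∀ F ∈ H, E ⊆ F → E = F)
    -- `H` is 3-uniform
    (huniform : ∀ E ∈ H, E.card = 3)
    -- `H` is 3-partite with respect to the partition `X`
    (hpartite : ∀ E ∈ H, ∀ i : Fin 3, (E ∩ X i).card = 1)
    (hne : symbolicPower (edgeIdeal k H) 2 ≠ (edgeIdeal k H) ^ 2) :
    HasBadSubhypergraph H :=
  hasBad_of_symbolicPower_two_ne_general k H X hcover huniform hpartite hne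
end

section
/- Let H be a simple 3-uniform, 3-partite hypergraph and I = I(H) its edge ideal in a polynomial ring over a field. If there do not exist six distinct vertices v_1,…,v_6 of H with {v_1,v_2,v_3}, {v_3,v_4,v_5}, {v_5,v_6,v_2} all hyperedges of H (i.e. H has no bad subhypergraph of length 3), then I^(2) = I^2. -/
open MvPolynomial

section Mon
set_option linter.unusedSectionVars false
variable {k : Type*} [Field k] {V : Type*} [Fintype V] [DecidableEq V]

/-- exponent vector of an edge -/
noncomputable def chiE (E : Finset V) : V →₀ ℕ := ∑ v ∈ E, Finsupp.single v 1

lemma chiE_apply (E : Finset V) (v : V) : chiE E v = if v ∈ E then 1 else 0 := by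
  classical
  rw [chiE, Finsupp.finset_sum_apply]
  simp [Finsupp.single_apply]

lemma prod_X_eq_monomial (E : Finset V) :
    (∏ v ∈ E, (X v : MvPolynomial V k)) = monomial (chiE E) 1 := by
  classical
  induction E using Finset.induction with
  | empty => simp [chiE]
  | insert _ _ h ih =>
    rw [Finset.prod_insert h, ih]
    show _ = monomial (∑ v ∈ _, Finsupp.single v 1) 1
    rw [Finset.sum_insert h, X, monomial_mul, one_mul]
    rfl

lemma mem_span_monomials_support {A : Set (V →₀ ℕ)} {f : MvPolynomial V k}
    (hf : f ∈ Ideal.span ((fun a => (monomial a (1:k) : MvPolynomial V k)) '' A)) :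
    ∀ d ∈ f.support, ∃ a ∈ A, a ≤ d := by
  classical
  refine Submodule.span_induction ?_ ?_ ?_ ?_ hf
  · rintro x ⟨a, ha, rfl⟩ d hd
    rw [support_monomial, if_neg (one_ne_zero)] at hd
    simp at hd
    exact ⟨a, ha, le_of_eq hd.symm⟩
  · simp
  · intro x y hx hy ihx ihy d hd
    have := MvPolynomial.support_add hd
    rcases Finset.mem_union.mp this with h | h
    · exact ihx d h
    · exact ihy d h
  · intro r x hx ihx d hd
    have : d ∈ (r * x).support := by simpa [smul_eq_mul] using hd
    have h2 := MvPolynomial.support_mul r x this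
    rcases Finset.mem_add.mp h2 with ⟨d1, hd1, d2, hd2, rfl⟩
    obtain ⟨a, ha, hle⟩ := ihx d2 hd2
    exact ⟨a, ha, hle.trans (le_add_self)⟩

lemma monomial_mem_span {A : Set (V →₀ ℕ)} {d : V →₀ ℕ} (c : k)
    (h : ∃ a ∈ A, a ≤ d) :
    (monomial d c : MvPolynomial V k) ∈ Ideal.span ((fun a => (monomial a (1:k) : MvPolynomial V k)) '' A) := by
  obtain ⟨a, ha, hle⟩ := h
  have : (monomial d c : MvPolynomial V k) = monomial (d - a) c * monomial a 1 := by
    rw [monomial_mul, mul_one, tsub_add_cancel_of_le hle]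
  rw [this]
  exact Ideal.mul_mem_left _ _ (Ideal.subset_span ⟨a, ha, rfl⟩)

lemma mem_span_monomials_of_support {A : Set (V →₀ ℕ)} {f : MvPolynomial V k}
    (h : ∀ d ∈ f.support, ∃ a ∈ A, a ≤ d) :
    f ∈ Ideal.span ((fun a => (monomial a (1:k) : MvPolynomial V k)) '' A) := by
  rw [← MvPolynomial.support_sum_monomial_coeff f]
  exact Ideal.sum_mem _ fun d hd => monomial_mem_span _ (h d hd)

lemma span_monomials_mul (A B : Set (V →₀ ℕ)) :
    Ideal.span ((fun a => (monomial a (1:k) : MvPolynomial V k)) '' A) *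
      Ideal.span ((fun a => (monomial a (1:k) : MvPolynomial V k)) '' B) =
    Ideal.span ((fun a => (monomial a (1:k) : MvPolynomial V k)) '' (Set.image2 (· + ·) A B)) := by
  rw [Ideal.span_mul_span']
  congr 1
  ext f
  constructor
  · rintro ⟨-, ⟨a, ha, rfl⟩, -, ⟨b, hb, rfl⟩, rfl⟩
    exact ⟨a + b, ⟨a, ha, b, hb, rfl⟩, by simp [monomial_mul]⟩
  · rintro ⟨-, ⟨a, ha, b, hb, rfl⟩, rfl⟩
    exact ⟨monomial a 1, ⟨a, ha, rfl⟩, monomial b 1, ⟨b, hb, rfl⟩, by simp [monomial_mul]⟩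

end Mon


section Pr
set_option linter.unusedSectionVars false
variable {k : Type*} [Field k] {V : Type*} [Fintype V] [DecidableEq V]

/-- the retraction killing variables in C -/
noncomputable def phiC (C : Finset V) : MvPolynomial V k →ₐ[k] MvPolynomial V k :=
  aeval (fun w => if w ∈ C then 0 else X w)

lemma phiC_X (C : Finset V) (v : V) :
    phiC (k := k) C (X v) = if v ∈ C then 0 else X v := by
  simp [phiC]

lemma phiC_eq_zero_of_mem_span {C : Finset V} {f : MvPolynomial V k}
    (hf : f ∈ Ideal.span (MvPolynomial.X '' (C : Set V))) : phiC C f = 0 := by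
  refine Submodule.span_induction ?_ ?_ ?_ ?_ hf
  · rintro x ⟨v, hv, rfl⟩
    rw [phiC_X, if_pos (Finset.mem_coe.mp hv)]
  · simp
  · intro x y _ _ hx hy; rw [map_add, hx, hy, add_zero]
  · intro r x _ hx
    rw [smul_eq_mul, map_mul, hx, mul_zero]

lemma sub_phiC_mem_span (C : Finset V) (f : MvPolynomial V k) :
    f - phiC C f ∈ Ideal.span (MvPolynomial.X '' (C : Set V)) := by
  induction f using MvPolynomial.induction_on with
  | C a => simp [phiC]
  | add p q hp hq =>
    have : p + q - phiC C (p + q) = (p - phiC C p) + (q - phiC C q) := by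
      rw [map_add]; ring
    rw [this]; exact Ideal.add_mem _ hp hq
  | mul_X p n hp =>
    have : p * X n - phiC C (p * X n) =
        (p - phiC C p) * X n + phiC C p * (X n - phiC C (X n)) := by
      rw [map_mul]; ring
    rw [this]
    refine Ideal.add_mem _ (Ideal.mul_mem_right _ _ hp) (Ideal.mul_mem_left _ _ ?_)
    rw [phiC_X]
    split
    · rw [sub_zero]; exact Ideal.subset_span ⟨n, by assumption, rfl⟩
    · simp

lemma mem_span_X_iff {C : Finset V} {v : V} :
    (X v : MvPolynomial V k) ∈ Ideal.span (MvPolynomial.X '' (C : Set V)) ↔ v ∈ C := by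
  constructor
  · intro h
    by_contra hv
    have := phiC_eq_zero_of_mem_span (k := k) h
    rw [phiC_X, if_neg hv] at this
    exact X_ne_zero v this
  · intro h; exact Ideal.subset_span ⟨v, h, rfl⟩

lemma isPrime_span_X (C : Finset V) :
    (Ideal.span (MvPolynomial.X '' (C : Set V)) : Ideal (MvPolynomial V k)).IsPrime := by
  constructor
  · intro h
    have h1 : (1 : MvPolynomial V k) ∈ Ideal.span (MvPolynomial.X '' (C : Set V)) := by
      rw [h]; trivial
    have := phiC_eq_zero_of_mem_span (k := k) h1
    rw [map_one] at this
    exact one_ne_zero this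
  · intro a b hab
    have h0 : phiC C a * phiC C b = 0 := by
      rw [← map_mul]; exact phiC_eq_zero_of_mem_span hab
    rcases mul_eq_zero.mp h0 with h | h
    · left
      have := sub_phiC_mem_span C a
      rwa [h, sub_zero] at this
    · right
      have := sub_phiC_mem_span C b
      rwa [h, sub_zero] at this

/-- C is a vertex cover of H -/
def IsCover {V : Type*} [DecidableEq V] (H : Set (Finset V)) (C : Finset V) : Prop :=
  ∀ E ∈ H, (E ∩ C).Nonempty

lemma exists_minimal_cover {H : Set (Finset V)} {C : Finset V} (hC : IsCover H C) :
    ∃ C₀ ⊆ C, IsCover H C₀ ∧ ∀ v ∈ C₀, ¬ IsCover H (C₀.erase v) := by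
  classical
  induction C using Finset.strongInductionOn with
  | _ C ih =>
    by_cases h : ∀ v ∈ C, ¬ IsCover H (C.erase v)
    · exact ⟨C, le_refl _, hC, h⟩
    · push_neg at h
      obtain ⟨v, hv, hcov⟩ := h
      obtain ⟨C₀, hsub, h1, h2⟩ := ih (C.erase v) (Finset.erase_ssubset hv) hcov
      exact ⟨C₀, hsub.trans (Finset.erase_subset _ _), h1, h2⟩

lemma edgeIdeal_le_span_X {H : Set (Finset V)} {C : Finset V} (hC : IsCover H C) :
    edgeIdeal k H ≤ Ideal.span (MvPolynomial.X '' (C : Set V)) := by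
  rw [edgeIdeal, Ideal.span_le]
  rintro x ⟨E, hE, rfl⟩
  obtain ⟨v, hv⟩ := hC E hE
  rw [Finset.mem_inter] at hv
  show (∏ v ∈ E, (X v : MvPolynomial V k)) ∈ _
  rw [← Finset.mul_prod_erase _ _ hv.1]
  exact Ideal.mul_mem_right _ _ (Ideal.subset_span ⟨v, hv.2, rfl⟩)

lemma span_X_mem_minimalPrimes {H : Set (Finset V)} {C : Finset V} (hC : IsCover H C)
    (hmin : ∀ v ∈ C, ¬ IsCover H (C.erase v)) :
    Ideal.span (MvPolynomial.X '' (C : Set V)) ∈ (edgeIdeal k H).minimalPrimes := by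
  constructor
  · exact ⟨isPrime_span_X C, edgeIdeal_le_span_X hC⟩
  · rintro q ⟨hq, hIq⟩ hqle
    -- show span ≤ q
    rw [Ideal.span_le]
    rintro x ⟨v, hv, rfl⟩
    rw [Finset.mem_coe] at hv
    have hnc := hmin v hv
    rw [IsCover] at hnc
    push_neg at hnc
    obtain ⟨E, hE, hne⟩ := hnc
    -- every element of E ∩ C is v
    have hEC : ∀ w ∈ E, w ∈ C → w = v := by
      intro w hw hwC
      by_contra hval
      have : w ∈ E ∩ C.erase v := Finset.mem_inter.mpr ⟨hw, Finset.mem_erase.mpr ⟨hval, hwC⟩⟩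
      rw [hne] at this
      exact absurd this (Finset.notMem_empty w)
    have hprod : (∏ w ∈ E, (X w : MvPolynomial V k)) ∈ q :=
      hIq (Ideal.subset_span ⟨E, hE, rfl⟩)
    haveI := hq
    obtain ⟨w, hwE, hwq⟩ := (Ideal.IsPrime.prod_mem_iff).mp hprod
    have hwC : w ∈ C := mem_span_X_iff.mp (hqle hwq)
    rwa [hEC w hwE hwC] at hwq

end Pr



section Comb
variable {V : Type*} [DecidableEq V]

lemma third_vertex {E : Finset V} {x y : V} (hcard : E.card = 3) (hx : x ∈ E) (hy : y ∈ E)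
    (hxy : x ≠ y) : ∃ z, z ∈ E ∧ z ≠ x ∧ z ≠ y ∧ E = {x, y, z} := by
  classical
  have hsub : ({x, y} : Finset V) ⊆ E := by
    intro t ht; rcases Finset.mem_insert.mp ht with rfl | ht
    · exact hx
    · rw [Finset.mem_singleton.mp ht]; exact hy
  have hc2 : ({x, y} : Finset V).card = 2 := Finset.card_pair hxy
  have hcs : (E \ {x, y}).card = 1 := by
    rw [Finset.card_sdiff_of_subset hsub, hcard, hc2]
  obtain ⟨z, hz⟩ := Finset.card_eq_one.mp hcs
  have hzm : z ∈ E \ ({x, y} : Finset V) := by rw [hz]; exact Finset.mem_singleton_self z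
  rw [Finset.mem_sdiff] at hzm
  refine ⟨z, hzm.1, ?_, ?_, ?_⟩
  · intro h; exact hzm.2 (by rw [h]; exact Finset.mem_insert_self _ _)
  · intro h; exact hzm.2 (by rw [h]; exact Finset.mem_insert_of_mem (Finset.mem_singleton_self y))
  · apply Finset.eq_of_subset_of_card_le
    · intro t ht
      by_cases h1 : t = x
      · subst h1; exact Finset.mem_insert_self _ _
      by_cases h2 : t = y
      · subst h2; exact Finset.mem_insert_of_mem (Finset.mem_insert_self _ _)
      have : t ∈ E \ ({x, y} : Finset V) := by
        rw [Finset.mem_sdiff]; exact ⟨ht, by simp [h1, h2]⟩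
      rw [hz, Finset.mem_singleton] at this
      subst this
      simp
    · rw [hcard]
      exact le_trans (Finset.card_insert_le _ _)
        (by simpa using Nat.add_le_add_right (Finset.card_insert_le y {z}) 1)

lemma fin3_eq {x y p q : Fin 3} (hpq : p ≠ q) (hxp : x ≠ p) (hxq : x ≠ q)
    (hyp : y ≠ p) (hyq : y ≠ q) : x = y := by
  fin_cases x <;> fin_cases y <;> fin_cases p <;> fin_cases q <;> simp_all

set_option maxHeartbeats 1000000 in
lemma inj6 {α : Type*} {a b c d e f : α}
    (h1 : a ≠ b) (h2 : a ≠ c) (h3 : a ≠ d) (h4 : a ≠ e) (h5 : a ≠ f)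
    (h6 : b ≠ c) (h7 : b ≠ d) (h8 : b ≠ e) (h9 : b ≠ f)
    (h10 : c ≠ d) (h11 : c ≠ e) (h12 : c ≠ f)
    (h13 : d ≠ e) (h14 : d ≠ f) (h15 : e ≠ f) :
    Function.Injective ![a, b, c, d, e, f] := by
  intro i j hij
  fin_cases i <;> fin_cases j <;>
    first
      | rfl
      | exact absurd hij (by assumption)
      | exact absurd hij.symm (by assumption)

lemma bad_of_triangle {H : Set (Finset V)} (pt : V → Fin 3)
    (hP1 : ∀ E ∈ H, ∀ x ∈ E, ∀ y ∈ E, x ≠ y → pt x ≠ pt y)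
    (hcard : ∀ E ∈ H, E.card = 3)
    {A B C : Finset V} (hA : A ∈ H) (hB : B ∈ H) (hC : C ∈ H)
    {u v w : V} (huA : u ∈ A) (huB : u ∈ B) (hvB : v ∈ B) (hvC : v ∈ C)
    (hwA : w ∈ A) (hwC : w ∈ C) (huC : u ∉ C) (hvA : v ∉ A) (hwB : w ∉ B) :
    HasBadSubhypergraph H := by
  have huv : u ≠ v := fun h => hvA (h ▸ huA)
  have huw : u ≠ w := fun h => hwB (h ▸ huB)
  have hvw : v ≠ w := fun h => hvA ((h ▸ hwA : v ∈ A))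
  obtain ⟨a, haA, hau, haw, hAeq⟩ := third_vertex (hcard A hA) huA hwA huw
  obtain ⟨b, hbB, hbu, hbv, hBeq⟩ := third_vertex (hcard B hB) huB hvB huv
  obtain ⟨c, hcC, hcv, hcw, hCeq⟩ := third_vertex (hcard C hC) hvC hwC hvw
  -- part inequalities within edges
  have pA := fun x hx y hy hxy => hP1 A hA x hx y hy hxy
  have pB := fun x hx y hy hxy => hP1 B hB x hx y hy hxy
  have pC := fun x hx y hy hxy => hP1 C hC x hx y hy hxy
  -- cross distinctness via pigeonhole in Fin 3
  have hab : a ≠ b := by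
    intro h; subst h
    have : pt v = pt w :=
      fin3_eq (pA u huA a haA (Ne.symm hau)) (pB v hvB u huB huv.symm)
        (pB v hvB a hbB hbv.symm) (pA w hwA u huA huw.symm) (pA w hwA a haA (Ne.symm haw.symm).symm)
    exact pC v hvC w hwC hvw this
  have hac : a ≠ c := by
    intro h; subst h
    have : pt u = pt v :=
      fin3_eq (pA w hwA a haA (Ne.symm haw)) (pA u huA w hwA huw)
        (pA u huA a haA (Ne.symm hau)) (pC v hvC w hwC hvw) (pC v hvC a hcC hcv.symm)
    exact pB u huB v hvB huv this
  have hbc : b ≠ c := by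
    intro h; subst h
    have : pt u = pt w :=
      fin3_eq (pB v hvB b hbB (Ne.symm hbv)) (pB u huB v hvB huv)
        (pB u huB b hbB (Ne.symm hbu)) (pC w hwC v hvC hvw.symm) (pC w hwC b hcC hcw.symm)
    exact pA u huA w hwA huw this
  have hav : a ≠ v := fun h => hvA (h ▸ haA)
  have hwb : w ≠ b := fun h => hwB (h ▸ hbB)
  have huc : u ≠ c := fun h => huC (h ▸ hcC)
  refine ⟨![a, w, u, b, v, c], ?_, ?_, ?_, ?_⟩
  · exact inj6 haw hau hab hav hac
      huw.symm hwb hvw.symm (fun h => hcw h.symm)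
      hbu.symm huv huc
      hbv hbc
      (fun h => hcv h.symm)
  · show ({a, w, u} : Finset V) ∈ H
    have : ({a, w, u} : Finset V) = A := by
      rw [hAeq]; ext t; simp; tauto
    rw [this]; exact hA
  · show ({u, b, v} : Finset V) ∈ H
    have : ({u, b, v} : Finset V) = B := by
      rw [hBeq]; ext t; simp; tauto
    rw [this]; exact hB
  · show ({v, c, w} : Finset V) ∈ H
    have : ({v, c, w} : Finset V) = C := by
      rw [hCeq]; ext t; simp; tauto
    rw [this]; exact hC

end Comb

section Core
variable {V : Type*} [DecidableEq V] {H : Set (Finset V)} {pt : V → Fin 3}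
variable {G : Finset V → Prop} {T : V → Prop}

lemma core_step
    (hP1 : ∀ E ∈ H, ∀ x ∈ E, ∀ y ∈ E, x ≠ y → pt x ≠ pt y)
    (hcard : ∀ E ∈ H, E.card = 3)
    (hbad : ¬ HasBadSubhypergraph H)
    (hGH : ∀ E, G E → E ∈ H)
    (hB : ∀ E F, G E → G F → ∃ t, t ∈ E ∧ t ∈ F ∧ T t)
    (hC : ∀ t, T t → ∃ E, G E ∧ t ∉ E)
    {A B C : Finset V} (hGA : G A) (hGB : G B) (hGC : G C)
    {u x : V} (huA : u ∈ A) (huB : u ∈ B) (hAB : A ≠ B) (huC : u ∉ C)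
    (hxB : x ∈ B) (hxC : x ∈ C) (hTx : T x) (hxA : x ∈ A) : False := by
  have hxu : x ≠ u := fun h => huC (h ▸ hxC)
  obtain ⟨a, haA, hau, hax, hAeq⟩ := third_vertex (hcard A (hGH A hGA)) huA hxA hxu.symm
  obtain ⟨b, hbB, hbu, hbx, hBeq⟩ := third_vertex (hcard B (hGH B hGB)) huB hxB hxu.symm
  have hab : a ≠ b := by
    intro h; rw [hAeq, hBeq, h] at hAB; exact hAB rfl
  have hptab : pt a = pt b := by
    have hux : u ≠ x := hxu.symm
    exact fin3_eq (hP1 A (hGH A hGA) u huA x hxA hux)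
      (hP1 A (hGH A hGA) a haA u huA hau) (hP1 A (hGH A hGA) a haA x hxA hax)
      (hP1 B (hGH B hGB) b hbB u huB hbu) (hP1 B (hGH B hGB) b hbB x hxB hbx)
  obtain ⟨D, hGD, hxD⟩ := hC x hTx
  obtain ⟨s, hsB, hsD, _⟩ := hB B D hGB hGD
  obtain ⟨r, hrC, hrD, _⟩ := hB C D hGC hGD
  obtain ⟨s', hs'A, hs'D, _⟩ := hB A D hGA hGD
  -- b ∈ C or bad
  have hbC : b ∈ C := by
    by_cases hrB : r ∈ B
    · -- r = b
      have hru : r ≠ u := fun h => huC (h ▸ hrC)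
      have hrx : r ≠ x := fun h => hxD (h ▸ hrD)
      rw [hBeq] at hrB
      rcases Finset.mem_insert.mp hrB with h | h
      · exact absurd h hru
      rcases Finset.mem_insert.mp h with h | h
      · exact absurd h hrx
      rw [Finset.mem_singleton.mp h] at hrC; exact hrC
    by_cases hsC : s ∈ C
    · -- s = b
      have hsu : s ≠ u := fun h => huC (h ▸ hsC)
      have hsx : s ≠ x := fun h => hxD (h ▸ hsD)
      have := hsB; rw [hBeq] at this
      rcases Finset.mem_insert.mp this with h | h
      · exact absurd h hsu
      rcases Finset.mem_insert.mp h with h | h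
      · exact absurd h hsx
      rw [Finset.mem_singleton.mp h] at hsC; exact hsC
    exact absurd (bad_of_triangle pt hP1 hcard (hGH B hGB) (hGH C hGC) (hGH D hGD)
      hxB hxC hrC hrD hsB hsD hxD hrB hsC) hbad
  have haC : a ∈ C := by
    by_cases hrA : r ∈ A
    · have hru : r ≠ u := fun h => huC (h ▸ hrC)
      have hrx : r ≠ x := fun h => hxD (h ▸ hrD)
      rw [hAeq] at hrA
      rcases Finset.mem_insert.mp hrA with h | h
      · exact absurd h hru
      rcases Finset.mem_insert.mp h with h | h
      · exact absurd h hrx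
      rw [Finset.mem_singleton.mp h] at hrC; exact hrC
    by_cases hs'C : s' ∈ C
    · have hsu : s' ≠ u := fun h => huC (h ▸ hs'C)
      have hsx : s' ≠ x := fun h => hxD (h ▸ hs'D)
      have := hs'A; rw [hAeq] at this
      rcases Finset.mem_insert.mp this with h | h
      · exact absurd h hsu
      rcases Finset.mem_insert.mp h with h | h
      · exact absurd h hsx
      rw [Finset.mem_singleton.mp h] at hs'C; exact hs'C
    exact absurd (bad_of_triangle pt hP1 hcard (hGH A hGA) (hGH C hGC) (hGH D hGD)
      hxA hxC hrC hrD hs'A hs'D hxD hrA hs'C) hbad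
  exact hP1 C (hGH C hGC) a haC b hbC hab hptab

lemma core
    (hP1 : ∀ E ∈ H, ∀ x ∈ E, ∀ y ∈ E, x ≠ y → pt x ≠ pt y)
    (hcard : ∀ E ∈ H, E.card = 3)
    (hbad : ¬ HasBadSubhypergraph H)
    (hGH : ∀ E, G E → E ∈ H)
    (hB : ∀ E F, G E → G F → ∃ t, t ∈ E ∧ t ∈ F ∧ T t)
    (hC : ∀ t, T t → ∃ E, G E ∧ t ∉ E)
    (hA : ∃ E, G E) : False := by
  obtain ⟨E1, hG1⟩ := hA
  obtain ⟨t1, ht1E1, -, hTt1⟩ := hB E1 E1 hG1 hG1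
  obtain ⟨E2, hG2, ht1E2⟩ := hC t1 hTt1
  have hne12 : E1 ≠ E2 := fun h => ht1E2 (h ▸ ht1E1)
  obtain ⟨t2, ht2E1, ht2E2, hTt2⟩ := hB E1 E2 hG1 hG2
  obtain ⟨E3, hG3, ht2E3⟩ := hC t2 hTt2
  obtain ⟨v, hvE2, hvE3, hTv⟩ := hB E2 E3 hG2 hG3
  obtain ⟨w, hwE1, hwE3, hTw⟩ := hB E1 E3 hG1 hG3
  by_cases hvE1 : v ∈ E1
  · exact core_step hP1 hcard hbad hGH hB hC hG1 hG2 hG3 ht2E1 ht2E2 hne12 ht2E3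
      hvE2 hvE3 hTv hvE1
  by_cases hwE2 : w ∈ E2
  · exact core_step hP1 hcard hbad hGH hB hC hG2 hG1 hG3 ht2E2 ht2E1 hne12.symm ht2E3
      hwE1 hwE3 hTw hwE2
  exact absurd (bad_of_triangle pt hP1 hcard (hGH E1 hG1) (hGH E2 hG2) (hGH E3 hG3)
    ht2E1 ht2E2 hvE2 hvE3 hwE1 hwE3 ht2E3 hvE1 hwE2) hbad

end Core


section T
set_option linter.unusedSectionVars false
variable {V : Type*} [Fintype V] [DecidableEq V]

lemma single_two_le {d : V →₀ ℕ} {u v : V} (h : Finsupp.single u 1 + Finsupp.single v 1 ≤ d) :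
    1 ≤ d u ∧ 1 ≤ d v ∧ (u = v → 2 ≤ d u) := by
  refine ⟨?_, ?_, ?_⟩
  · have hu := h u; rw [Finsupp.add_apply, Finsupp.single_eq_same] at hu; omega
  · have hv := h v; rw [Finsupp.add_apply, Finsupp.single_eq_same] at hv; omega
  · rintro rfl
    have hu := h u; rw [Finsupp.add_apply, Finsupp.single_eq_same] at hu; omega

lemma combo {H : Set (Finset V)} (pt : V → Fin 3)
    (hP1 : ∀ E ∈ H, ∀ x ∈ E, ∀ y ∈ E, x ≠ y → pt x ≠ pt y)
    (hcard : ∀ E ∈ H, E.card = 3)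
    (hbad : ¬ HasBadSubhypergraph H)
    (d : V →₀ ℕ)
    (hcov2 : ∀ C : Finset V, IsCover H C →
      ∃ u ∈ C, ∃ v ∈ C, Finsupp.single u 1 + Finsupp.single v 1 ≤ d) :
    ∃ E ∈ H, ∃ F ∈ H, chiE E + chiE F ≤ d := by
  classical
  by_contra hno
  push_neg at hno
  set S : Finset V := d.support with hS
  set G : Finset V → Prop := fun E => E ∈ H ∧ E ⊆ S with hG
  set T : V → Prop := fun t => d t = 1 with hT
  -- (A)
  have hA : ∃ E, G E := by
    by_contra hA'
    push_neg at hA'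
    have hcov : IsCover H (Finset.univ \ S) := by
      intro E hE
      have : ¬ E ⊆ S := fun h => hA' E ⟨hE, h⟩
      obtain ⟨w, hwE, hwS⟩ := Finset.not_subset.mp this
      exact ⟨w, Finset.mem_inter.mpr ⟨hwE, Finset.mem_sdiff.mpr ⟨Finset.mem_univ w, hwS⟩⟩⟩
    obtain ⟨u, hu, v, hv, hle⟩ := hcov2 _ hcov
    have h1 := (single_two_le hle).1
    have huS : u ∈ S := Finsupp.mem_support_iff.mpr (by omega)
    exact (Finset.mem_sdiff.mp hu).2 huS
  -- (C)
  have hC : ∀ t, T t → ∃ E, G E ∧ t ∉ E := by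
    intro t ht
    by_contra hC'
    push_neg at hC'
    have hcov : IsCover H (Finset.univ \ S ∪ {t}) := by
      intro E hE
      by_cases hES : E ⊆ S
      · have : t ∈ E := hC' E ⟨hE, hES⟩
        exact ⟨t, Finset.mem_inter.mpr ⟨this, Finset.mem_union_right _ (Finset.mem_singleton_self t)⟩⟩
      · obtain ⟨w, hwE, hwS⟩ := Finset.not_subset.mp hES
        exact ⟨w, Finset.mem_inter.mpr ⟨hwE, Finset.mem_union_left _
          (Finset.mem_sdiff.mpr ⟨Finset.mem_univ w, hwS⟩)⟩⟩
    obtain ⟨u, hu, v, hv, hle⟩ := hcov2 _ hcov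
    obtain ⟨h1, h2, h3⟩ := single_two_le hle
    have hut : u = t := by
      rcases Finset.mem_union.mp hu with h | h
      · exact absurd (Finsupp.mem_support_iff.mpr (by omega)) (Finset.mem_sdiff.mp h).2
      · exact Finset.mem_singleton.mp h
    have hvt : v = t := by
      rcases Finset.mem_union.mp hv with h | h
      · exact absurd (Finsupp.mem_support_iff.mpr (by omega)) (Finset.mem_sdiff.mp h).2
      · exact Finset.mem_singleton.mp h
    have := h3 (hut.trans hvt.symm)
    rw [hut] at this
    rw [hT] at ht
    omega
  -- (B)
  have hB : ∀ E F, G E → G F → ∃ t, t ∈ E ∧ t ∈ F ∧ T t := by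
    intro E F hGE hGF
    by_contra hB'
    push_neg at hB'
    apply hno E hGE.1 F hGF.1
    intro x
    rw [Finsupp.add_apply, chiE_apply, chiE_apply]
    by_cases hxE : x ∈ E <;> by_cases hxF : x ∈ F <;> simp only [if_pos, if_neg, hxE, hxF, if_true, if_false]
    · have h0 : d x ≠ 0 := Finsupp.mem_support_iff.mp (hGE.2 hxE)
      have h1 : d x ≠ 1 := fun h => hB' x hxE hxF h
      omega
    · have h0 : d x ≠ 0 := Finsupp.mem_support_iff.mp (hGE.2 hxE)
      omega
    · have h0 : d x ≠ 0 := Finsupp.mem_support_iff.mp (hGF.2 hxF)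
      omega
    · omega
  exact core hP1 hcard hbad (fun E h => h.1) hB hC hA
end T

/-- For a simple 3-uniform 3-partite hypergraph `H` with edge ideal `I`,
if `H` has no bad subhypergraph of length 3 then `I⁽²⁾ = I²`. -/
theorem symbolicPower_two_eq_of_no_bad
    (k : Type*) [Field k] {V : Type*} [Fintype V] [DecidableEq V]
    (H : Set (Finset V)) (X : Fin 3 → Finset V)
    -- the parts are pairwise disjoint and cover the vertex set
    (hdisj : ∀ i j : Fin 3, i ≠ j → Disjoint (X i) (X j))
    (hcover : ∀ v : V, ∃ i : Fin 3, v ∈ X i)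
    -- `H` is simple: no hyperedge contains another
    (hsimple : ∀ E ∈ H, ∀ F ∈ H, E ⊆ F → E = F)
    -- `H` is 3-uniform
    (huniform : ∀ E ∈ H, E.card = 3)
    -- `H` is 3-partite with respect to the partition `X`
    (hpartite : ∀ E ∈ H, ∀ i : Fin 3, (E ∩ X i).card = 1)
    (hbad : ¬ HasBadSubhypergraph H) :
    symbolicPower (edgeIdeal k H) 2 = (edgeIdeal k H) ^ 2 := by
  classical
  set pt : V → Fin 3 := fun v => (hcover v).choose with hptdef
  have hptmem : ∀ v, v ∈ X (pt v) := fun v => (hcover v).choose_spec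
  have hP1 : ∀ E ∈ H, ∀ x ∈ E, ∀ y ∈ E, x ≠ y → pt x ≠ pt y := by
    intro E hE x hx y hy hxy hpteq
    have h1 := hpartite E hE (pt x)
    have hxm : x ∈ E ∩ X (pt x) := Finset.mem_inter.mpr ⟨hx, hptmem x⟩
    have hym : y ∈ E ∩ X (pt x) := Finset.mem_inter.mpr ⟨hy, hpteq ▸ hptmem y⟩
    have h2 : 1 < (E ∩ X (pt x)).card := Finset.one_lt_card.mpr ⟨x, hxm, y, hym, hxy⟩
    omega
  apply le_antisymm
  · intro f hf
    have hIeq : edgeIdeal k H =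
        Ideal.span ((fun a => (monomial a (1:k) : MvPolynomial V k)) '' (chiE '' H)) := by
      rw [edgeIdeal, Set.image_image]
      congr 1
      exact Set.image_congr fun E _ => prod_X_eq_monomial E
    have hI2 : (edgeIdeal k H)^2 = Ideal.span ((fun a => (monomial a (1:k) : MvPolynomial V k)) ''
        Set.image2 (· + ·) (chiE '' H) (chiE '' H)) := by
      rw [pow_two, hIeq, span_monomials_mul]
    rw [hI2]
    apply mem_span_monomials_of_support
    intro d hd
    have hcov2 : ∀ C : Finset V, IsCover H C →
        ∃ u ∈ C, ∃ v ∈ C, Finsupp.single u 1 + Finsupp.single v 1 ≤ d := by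
      intro C hc
      obtain ⟨C₀, hsub, hcov₀, hmin₀⟩ := exists_minimal_cover hc
      have hmem := span_X_mem_minimalPrimes (k := k) hcov₀ hmin₀
      have hle2 : symbolicPower (edgeIdeal k H) 2 ≤
          (Ideal.span (MvPolynomial.X '' ((C₀ : Finset V) : Set V)) : Ideal (MvPolynomial V k))^2 := by
        rw [symbolicPower]
        exact iInf₂_le _ hmem
      have hfp := hle2 hf
      have hPeq : (Ideal.span (MvPolynomial.X '' ((C₀ : Finset V) : Set V)) : Ideal (MvPolynomial V k)) =
          Ideal.span ((fun a => (monomial a (1:k) : MvPolynomial V k)) ''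
            ((fun v => Finsupp.single v 1) '' ((C₀ : Finset V) : Set V))) := by
        rw [Set.image_image]
        rfl
      rw [pow_two, hPeq, span_monomials_mul] at hfp
      obtain ⟨a, ha, hlea⟩ := mem_span_monomials_support hfp d hd
      obtain ⟨a1, ⟨u, hu, rfl⟩, a2, ⟨v, hv, rfl⟩, rfl⟩ := ha
      exact ⟨u, hsub (Finset.mem_coe.mp hu), v, hsub (Finset.mem_coe.mp hv), hlea⟩
    obtain ⟨E, hE, F, hF, hle⟩ := combo pt hP1 huniform hbad d hcov2
    exact ⟨chiE E + chiE F, Set.mem_image2_of_mem ⟨E, hE, rfl⟩ ⟨F, hF, rfl⟩, hle⟩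
  · rw [symbolicPower]
    refine le_iInf fun p => le_iInf fun hp => ?_
    have hIp : edgeIdeal k H ≤ p := hp.1.2
    rw [pow_two, pow_two]
    exact Ideal.mul_mono hIp hIp
end

section
/- Let n ≥ 2 and 2 ≤ t ≤ n be integers and let H_t(C_n) be the t-path hypergraph of the cycle C_n on vertices x_1,…,x_n, whose hyperedges are the vertex sets {x_i, x_{i+1}, …, x_{i+t-1}} (indices modulo n) of paths on t consecutive vertices of C_n. Then H_t(C_n) is a t-partite hypergraph if and only if n ≡ 0 (mod t). -/
/-!
If every edge meets a class `S` exactly once, comparing the edges starting at `v` and `v + 1`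
shows that `v ∈ S` forces `v + t ∈ S`. Writing `n = q t + d` with `d < t`, the vertex `d` is then
in the same class as `d + q t = 0`, and both lie on the edge starting at `0`, so `d = 0`.
Conversely, when `t ∣ n`, colouring each vertex by its residue in `ZMod t` is a `t`-partition:
the `t` consecutive vertices of an edge have `t` distinct residues.
-/

/-- The hyperedge of the `t`-path hypergraph of the cycle `C_n` starting at vertex `i`:
the set `{i, i+1, …, i+t-1}` of `t` consecutive vertices (indices modulo `n`). -/
def cyclePathEdge (n t : ℕ) (i : ZMod n) : Finset (ZMod n) :=
  (Finset.range t).image (fun j : ℕ => (i + (j : ZMod n)))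

open Finset

section

variable {n t : ℕ}

theorem mem_cyclePathEdge {i v : ZMod n} : v ∈ cyclePathEdge n t i ↔ ∃ k < t, i + k = v := by
  simp [cyclePathEdge]

theorem add_natCast_mem_cyclePathEdge (i : ZMod n) {k : ℕ} (hk : k < t) :
    i + k ∈ cyclePathEdge n t i :=
  mem_cyclePathEdge.2 ⟨k, hk, rfl⟩

theorem self_mem_cyclePathEdge (i : ZMod n) (ht : 0 < t) : i ∈ cyclePathEdge n t i :=
  mem_cyclePathEdge.2 ⟨0, ht, by simp⟩

theorem natCast_ne_zero_of_pos_of_lt {k : ℕ} (hk : 0 < k) (hkn : k < n) : (k : ZMod n) ≠ 0 :=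
  fun h => hk.ne' (Nat.eq_zero_of_dvd_of_lt ((ZMod.natCast_eq_zero_iff k n).1 h) hkn)

variable {S : Finset (ZMod n)}

theorem add_mem_of_card_cyclePathEdge_inter_eq_one (htn : t ≤ n)
    (hS : ∀ i, #(cyclePathEdge n t i ∩ S) = 1) {v : ZMod n} (hv : v ∈ S) : v + t ∈ S := by
  obtain ⟨u, hu⟩ := card_eq_one.1 (hS (v + 1))
  have huS : u ∈ cyclePathEdge n t (v + 1) ∩ S := hu ▸ mem_singleton_self u
  obtain ⟨k, hk, rfl⟩ := mem_cyclePathEdge.1 (mem_inter.1 huS).1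
  have hshift : v + 1 + k = v + (k + 1 : ℕ) := by push_cast; ring
  rcases (Nat.succ_le_of_lt hk).eq_or_lt with hkt | hkt
  · rw [← hkt]
    exact hshift ▸ (mem_inter.1 huS).2
  · have hv0 : v ∈ cyclePathEdge n t v ∩ S :=
      mem_inter.2 ⟨self_mem_cyclePathEdge v (by omega), hv⟩
    have hvk : v + (k + 1 : ℕ) ∈ cyclePathEdge n t v ∩ S :=
      mem_inter.2 ⟨add_natCast_mem_cyclePathEdge v hkt, hshift ▸ (mem_inter.1 huS).2⟩
    have hk0 : ((k + 1 : ℕ) : ZMod n) = 0 :=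
      add_eq_left.1 (card_le_one.1 (hS v).le _ hvk _ hv0)
    exact absurd hk0 (natCast_ne_zero_of_pos_of_lt k.succ_pos (by omega))

theorem add_mul_mem_of_card_cyclePathEdge_inter_eq_one (htn : t ≤ n)
    (hS : ∀ i, #(cyclePathEdge n t i ∩ S) = 1) {v : ZMod n} (hv : v ∈ S) (m : ℕ) :
    v + m * t ∈ S := by
  induction m with
  | zero => simpa using hv
  | succ m ih =>
    have := add_mem_of_card_cyclePathEdge_inter_eq_one htn hS ih
    rwa [add_assoc, ← add_one_mul, ← Nat.cast_succ] at this

theorem mod_eq_zero_of_card_cyclePathEdge_inter_eq_one (ht : 0 < t) (htn : t ≤ n)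
    (hS : ∀ i, #(cyclePathEdge n t i ∩ S) = 1) (hd : ((n % t : ℕ) : ZMod n) ∈ S) :
    n % t = 0 := by
  have h0 : (0 : ZMod n) ∈ S := by
    have := add_mul_mem_of_card_cyclePathEdge_inter_eq_one htn hS hd (n / t)
    rwa [← Nat.cast_mul, ← Nat.cast_add, Nat.mod_add_div', ZMod.natCast_self] at this
  have hdE : ((n % t : ℕ) : ZMod n) ∈ cyclePathEdge n t 0 := by
    simpa using add_natCast_mem_cyclePathEdge (0 : ZMod n) (Nat.mod_lt n ht)
  have hd0 : ((n % t : ℕ) : ZMod n) = 0 :=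
    card_le_one.1 (hS 0).le _ (mem_inter.2 ⟨hdE, hd⟩) _
      (mem_inter.2 ⟨self_mem_cyclePathEdge 0 ht, h0⟩)
  by_contra hne
  exact natCast_ne_zero_of_pos_of_lt (Nat.pos_of_ne_zero hne)
    ((Nat.mod_lt n ht).trans_le htn) hd0

theorem filter_cyclePathEdge_castHom_eq [NeZero t] (h : t ∣ n) (i : ZMod n) (c : ZMod t) :
    (cyclePathEdge n t i).filter (fun v => ZMod.castHom h (ZMod t) v = c) =
      {i + (c - ZMod.castHom h (ZMod t) i).val} := by
  ext v
  simp only [mem_filter, mem_cyclePathEdge, mem_singleton]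
  constructor
  · rintro ⟨⟨k, hk, rfl⟩, hc⟩
    rw [map_add, map_natCast] at hc
    rw [← hc, add_sub_cancel_left, ZMod.val_natCast_of_lt hk]
  · rintro rfl
    refine ⟨⟨_, ZMod.val_lt _, rfl⟩, ?_⟩
    rw [map_add, map_natCast, ZMod.natCast_zmod_val, add_sub_cancel]

end

theorem cyclePathHypergraph_tPartite_iff_general (n t : ℕ) (ht2 : 2 ≤ t) (htn : t ≤ n) :
    (∃ X : Fin t → Finset (ZMod n),
      (∀ i j : Fin t, i ≠ j → Disjoint (X i) (X j)) ∧
      (∀ v : ZMod n, ∃ i : Fin t, v ∈ X i) ∧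
      (∀ i : ZMod n, ∀ j : Fin t, (cyclePathEdge n t i ∩ X j).card = 1)) ↔
    n % t = 0 := by
  have : NeZero t := ⟨by omega⟩
  have : NeZero n := ⟨by omega⟩
  constructor
  · rintro ⟨X, -, hcover, hcard⟩
    obtain ⟨j, hj⟩ := hcover (n % t : ℕ)
    exact mod_eq_zero_of_card_cyclePathEdge_inter_eq_one (by omega) htn (hcard · j) hj
  · intro hmod
    have h : t ∣ n := Nat.dvd_of_mod_eq_zero hmod
    let residue := ZMod.castHom h (ZMod t)
    refine ⟨fun j => univ.filter (fun v => residue v = ZMod.finEquiv t j), ?_, ?_, ?_⟩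
    · intro i j hij
      refine disjoint_filter.2 fun v _ hi hj => hij ((ZMod.finEquiv t).injective ?_)
      rw [← hi, ← hj]
    · exact fun v => ⟨(ZMod.finEquiv t).symm (residue v), by simp⟩
    · intro i j
      rw [inter_filter, inter_univ, filter_cyclePathEdge_castHom_eq, card_singleton]

/-- For `n ≥ 2` and `2 ≤ t ≤ n`, the `t`-path hypergraph `H_t(C_n)` of the
cycle `C_n` (whose hyperedges are the sets `{x_i, …, x_{i+t-1}}`, indices mod `n`) is
`t`-partite if and only if `n ≡ 0 (mod t)`. -/
theorem cyclePathHypergraph_tPartite_iff (n t : ℕ) (hn : 2 ≤ n) (ht2 : 2 ≤ t) (htn : t ≤ n) :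
    (∃ X : Fin t → Finset (ZMod n),
      (∀ i j : Fin t, i ≠ j → Disjoint (X i) (X j)) ∧
      (∀ v : ZMod n, ∃ i : Fin t, v ∈ X i) ∧
      (∀ i : ZMod n, ∀ j : Fin t, (cyclePathEdge n t i ∩ X j).card = 1)) ↔
    n % t = 0 :=
  cyclePathHypergraph_tPartite_iff_general n t ht2 htn
end

section
/- Let n ≥ 2 and 2 ≤ t ≤ n be integers with n not divisible by t, and let H_t(C_n) be the t-path hypergraph of the cycle C_n, whose hyperedges are the sets {x_i, x_{i+1}, …, x_{i+t-1}} of indices modulo n. Then H_t(C_n) is not Mengerian: there exists c ∈ ℕ^n such that min{c·x : Ax ≥ 𝟙, x ∈ ℕ^n} ≠ max{y·𝟙 : yᵀA ≤ c, y ∈ ℕ^m}, where A is the m × n hyperedge–vertex incidence matrix of H_t(C_n) (A_{E,v} = 1 if v ∈ E and 0 otherwise, m the number of hyperedges). -/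
lemma zmod_natCast_inj (n : ℕ) [NeZero n] {a b : ℕ} (ha : a < n) (hb : b < n)
    (h : (a : ZMod n) = (b : ZMod n)) : a = b := by
  have := congrArg ZMod.val h
  rwa [ZMod.val_cast_of_lt ha, ZMod.val_cast_of_lt hb] at this

lemma card_cyclePathEdge (n t : ℕ) [NeZero n] (htn : t ≤ n) (i : ZMod n) :
    (cyclePathEdge n t i).card = t := by
  rw [cyclePathEdge, Finset.card_image_of_injOn, Finset.card_range]
  intro a ha b hb hab
  simp only [Finset.coe_range, Set.mem_Iio] at ha hb
  exact zmod_natCast_inj n (lt_of_lt_of_le ha htn) (lt_of_lt_of_le hb htn)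
    (add_left_cancel hab)

lemma count_cyclePathEdges (n t : ℕ) [NeZero n] (htn : t ≤ n) (v : ZMod n) :
    (Finset.univ.filter (fun i : ZMod n => v ∈ cyclePathEdge n t i)).card = t := by
  have heq : Finset.univ.filter (fun i : ZMod n => v ∈ cyclePathEdge n t i)
      = (Finset.range t).image (fun j : ℕ => v - (j : ZMod n)) := by
    ext i
    simp only [Finset.mem_filter, Finset.mem_univ, true_and, Finset.mem_image,
      Finset.mem_range, cyclePathEdge]
    constructor
    · rintro ⟨j, hj, hij⟩
      exact ⟨j, hj, by rw [← hij]; ring⟩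
    · rintro ⟨j, hj, rfl⟩
      exact ⟨j, hj, by ring⟩
  rw [heq, Finset.card_image_of_injOn, Finset.card_range]
  intro a ha b hb hab
  simp only [Finset.coe_range, Set.mem_Iio] at ha hb
  exact zmod_natCast_inj n (lt_of_lt_of_le ha htn) (lt_of_lt_of_le hb htn)
    (sub_right_injective hab)

lemma double_count_x (n t : ℕ) [NeZero n] (htn : t ≤ n) (x : ZMod n → ℕ) :
    ∑ i : ZMod n, ∑ v ∈ cyclePathEdge n t i, x v = t * ∑ v : ZMod n, x v := by
  have h1 : ∀ i : ZMod n, ∑ v ∈ cyclePathEdge n t i, x v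
      = ∑ v : ZMod n, if v ∈ cyclePathEdge n t i then x v else 0 := by
    intro i
    rw [← Finset.sum_filter, Finset.filter_mem_eq_inter, Finset.univ_inter]
  calc ∑ i : ZMod n, ∑ v ∈ cyclePathEdge n t i, x v
      = ∑ i : ZMod n, ∑ v : ZMod n, if v ∈ cyclePathEdge n t i then x v else 0 := by
        simp_rw [h1]
    _ = ∑ v : ZMod n, ∑ i : ZMod n, if v ∈ cyclePathEdge n t i then x v else 0 :=
        Finset.sum_comm
    _ = ∑ v : ZMod n, t * x v := by
        refine Finset.sum_congr rfl fun v _ => ?_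
        rw [← Finset.sum_filter, Finset.sum_const, count_cyclePathEdges n t htn v,
          smul_eq_mul]
    _ = t * ∑ v : ZMod n, x v := by rw [Finset.mul_sum]

lemma double_count_y (n t : ℕ) [NeZero n] (htn : t ≤ n) (y : ZMod n → ℕ) :
    ∑ v : ZMod n, ∑ i : ZMod n, (if v ∈ cyclePathEdge n t i then y i else 0)
      = t * ∑ i : ZMod n, y i := by
  rw [Finset.sum_comm]
  calc ∑ i : ZMod n, ∑ v : ZMod n, (if v ∈ cyclePathEdge n t i then y i else 0)
      = ∑ i : ZMod n, t * y i := by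
        refine Finset.sum_congr rfl fun i _ => ?_
        rw [← Finset.sum_filter, Finset.sum_const, Finset.filter_mem_eq_inter,
          Finset.univ_inter, card_cyclePathEdge n t htn i, smul_eq_mul]
    _ = t * ∑ i : ZMod n, y i := by rw [Finset.mul_sum]

/-- For `n ≥ 2`, `2 ≤ t ≤ n` with `t ∤ n`, the `t`-path hypergraph
`H_t(C_n)` of the cycle `C_n` is not Mengerian: there is a weight vector `c ∈ ℕⁿ` for which
the minimum of `c·x` over integer vectors `x ≥ 0` with `Ax ≥ 𝟙` differs from the maximum of
`y·𝟙` over integer vectors `y ≥ 0` with `yᵀA ≤ c`, where `A` is the hyperedge–vertex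
incidence matrix (rows indexed by the starting vertices `i` of the hyperedges
`{i, i+1, …, i+t-1}`, columns by the vertices). -/
theorem cyclePathHypergraph_not_mengerian (n t : ℕ) [NeZero n]
    (hn : 2 ≤ n) (ht2 : 2 ≤ t) (htn : t ≤ n) (hmod : n % t ≠ 0) :
    ∃ c : ZMod n → ℕ,
      sInf {s : ℕ | ∃ x : ZMod n → ℕ,
          (∀ i : ZMod n, 1 ≤ ∑ v ∈ cyclePathEdge n t i, x v) ∧
          s = ∑ v : ZMod n, c v * x v} ≠
      sSup {s : ℕ | ∃ y : ZMod n → ℕ,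
          (∀ v : ZMod n, ∑ i : ZMod n, (if v ∈ cyclePathEdge n t i then y i else 0) ≤ c v) ∧
          s = ∑ i : ZMod n, y i} := by
  refine ⟨fun _ => 1, ?_⟩
  set S := {s : ℕ | ∃ x : ZMod n → ℕ,
      (∀ i : ZMod n, 1 ≤ ∑ v ∈ cyclePathEdge n t i, x v) ∧
      s = ∑ v : ZMod n, (1 : ℕ) * x v} with hS
  set T := {s : ℕ | ∃ y : ZMod n → ℕ,
      (∀ v : ZMod n, ∑ i : ZMod n, (if v ∈ cyclePathEdge n t i then y i else 0) ≤ 1) ∧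
      s = ∑ i : ZMod n, y i} with hT
  have ht0 : 0 < t := by omega
  have hcard : Fintype.card (ZMod n) = n := ZMod.card n
  -- every element of S is at least n/t + 1
  have hSlb : ∀ s ∈ S, n / t + 1 ≤ s := by
    rintro s ⟨x, hx, rfl⟩
    have hsum : n ≤ t * ∑ v : ZMod n, x v := by
      have := double_count_x n t htn x
      calc n = ∑ _i : ZMod n, 1 := by simp [hcard]
        _ ≤ ∑ i : ZMod n, ∑ v ∈ cyclePathEdge n t i, x v :=
            Finset.sum_le_sum fun i _ => hx i
        _ = t * ∑ v : ZMod n, x v := this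
    have : n / t < ∑ v : ZMod n, x v := by
      rcases Nat.lt_or_ge (n / t) (∑ v : ZMod n, x v) with h | h
      · exact h
      · exfalso
        have : t * ∑ v : ZMod n, x v ≤ t * (n / t) := Nat.mul_le_mul_left t h
        have h2 : t * (n / t) < n := by
          have := Nat.div_add_mod n t
          omega
        omega
    simpa using this
  -- every element of T is at most n/t
  have hTub : ∀ s ∈ T, s ≤ n / t := by
    rintro s ⟨y, hy, rfl⟩
    have hsum : t * ∑ i : ZMod n, y i ≤ n := by
      calc t * ∑ i : ZMod n, y i
          = ∑ v : ZMod n, ∑ i : ZMod n, (if v ∈ cyclePathEdge n t i then y i else 0) :=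
            (double_count_y n t htn y).symm
        _ ≤ ∑ _v : ZMod n, 1 := Finset.sum_le_sum fun v _ => hy v
        _ = n := by simp [hcard]
    exact Nat.le_div_iff_mul_le ht0 |>.mpr (by rwa [mul_comm])
  -- S is nonempty
  have hSne : S.Nonempty := by
    refine ⟨∑ v : ZMod n, (1:ℕ) * 1, fun _ => 1, fun i => ?_, rfl⟩
    rw [Finset.sum_const, card_cyclePathEdge n t htn i]
    simp only [smul_eq_mul, mul_one]; omega
  have h1 : n / t + 1 ≤ sInf S := hSlb _ (Nat.sInf_mem hSne)
  have hTne : T.Nonempty := ⟨∑ _i : ZMod n, 0, fun _ => 0, fun v => by simp, rfl⟩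
  have h2 : sSup T ≤ n / t := csSup_le hTne hTub
  omega
end

section
/- Let G be a finite simple graph having a vertex of degree at least 3, and let I = I_3(G) be the cubic path ideal of G in a polynomial ring over a field. Then I^(2) ≠ I^2. -/
open MvPolynomial

/-- The cubic path ideal `I₃(G)` of a graph `G`: the ideal of `k[x_v : v ∈ V]` generated by
the monomials `x_u x_v x_w` over all paths `u–v–w` on three distinct vertices of `G`. -/
noncomputable def pathIdeal3 (k : Type*) [Field k] {V : Type*} (G : SimpleGraph V) :
    Ideal (MvPolynomial V k) :=
  Ideal.span {m | ∃ u v w : V, G.Adj u v ∧ G.Adj v w ∧ u ≠ w ∧ m = X u * X v * X w}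

/-- The ideal of polynomials all of whose monomials have total degree at least 6. -/
def lowDeg6 (k : Type*) [Field k] (V : Type*) [DecidableEq V] : Ideal (MvPolynomial V k) where
  carrier := {f | ∀ d : V →₀ ℕ, (d.sum fun _ n => n) < 6 → coeff d f = 0}
  zero_mem' := by intro d _; simp
  add_mem' := by
    intro f g hf hg d hd
    simp [coeff_add, hf d hd, hg d hd]
  smul_mem' := by
    intro c f hf d hd
    rw [smul_eq_mul, coeff_mul]
    apply Finset.sum_eq_zero
    rintro ⟨u, w⟩ hmem
    rw [Finset.HasAntidiagonal.mem_antidiagonal] at hmem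
    have hw : (w.sum fun _ n => n) < 6 := by
      refine lt_of_le_of_lt ?_ hd
      rw [← hmem, Finsupp.sum_add_index' (by simp) (by simp)]
      exact le_add_self
    rw [hf w hw, mul_zero]

lemma X_eq_monomial {k : Type*} [Field k] {V : Type*} (u : V) :
    (X u : MvPolynomial V k) = monomial (Finsupp.single u 1) 1 := by
  rw [← X_pow_eq_monomial, pow_one]

lemma X3_eq {k : Type*} [Field k] {V : Type*} (u v w : V) :
    (X u * X v * X w : MvPolynomial V k)
      = monomial (Finsupp.single u 1 + Finsupp.single v 1 + Finsupp.single w 1) 1 := by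
  rw [X_eq_monomial, X_eq_monomial, X_eq_monomial, monomial_mul, monomial_mul, mul_one, mul_one]

lemma sq_le_lowDeg6 {k : Type*} [Field k] {V : Type*} [DecidableEq V] (G : SimpleGraph V) :
    (pathIdeal3 k G) ^ 2 ≤ lowDeg6 k V := by
  rw [pow_two, pathIdeal3, Ideal.span_mul_span', Ideal.span_le]
  rintro x hx
  rw [Set.mem_mul] at hx
  obtain ⟨s, hs, t, ht, rfl⟩ := hx
  obtain ⟨u1, v1, w1, -, -, -, rfl⟩ := hs
  obtain ⟨u2, v2, w2, -, -, -, rfl⟩ := ht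
  intro d hd
  rw [X3_eq, X3_eq, monomial_mul, one_mul, coeff_monomial]
  rw [if_neg]
  intro h
  rw [← h, Finsupp.sum_add_index' (by simp) (by simp),
    Finsupp.sum_add_index' (by simp) (by simp),
    Finsupp.sum_add_index' (by simp) (by simp),
    Finsupp.sum_add_index' (by simp) (by simp)] at hd
  rw [Finsupp.sum_add_index' (by simp) (by simp)] at hd
  simp [Finsupp.sum_single_index] at hd

/-- If a finite simple graph `G` has a vertex of degree at least 3, then the
cubic path ideal `I = I₃(G)` satisfies `I⁽²⁾ ≠ I²`. -/
theorem symbolicPower_two_ne_of_degree_three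
    (k : Type*) [Field k] {V : Type*} [Fintype V] [DecidableEq V]
    (G : SimpleGraph V) [DecidableRel G.Adj]
    (hdeg : ∃ v : V, 3 ≤ G.degree v) :
    symbolicPower (pathIdeal3 k G) 2 ≠ (pathIdeal3 k G) ^ 2 := by
  obtain ⟨v, hv⟩ := hdeg
  rw [SimpleGraph.degree] at hv
  obtain ⟨t, hts, htc⟩ := Finset.exists_subset_card_eq hv
  obtain ⟨a, b, c, hab, hac, hbc, rfl⟩ := Finset.card_eq_three.mp htc
  have hva : G.Adj v a := (SimpleGraph.mem_neighborFinset G v a).mp (hts (by simp))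
  have hvb : G.Adj v b := (SimpleGraph.mem_neighborFinset G v b).mp (hts (by simp))
  have hvc : G.Adj v c := (SimpleGraph.mem_neighborFinset G v c).mp (hts (by simp))
  set m : MvPolynomial V k := X v * X v * X a * X b * X c with hm
  intro heq
  -- m is in the symbolic square
  have hmem : m ∈ symbolicPower (pathIdeal3 k G) 2 := by
    rw [symbolicPower]
    simp only [Ideal.mem_iInf]
    intro p hp
    have hprime : p.IsPrime := hp.1.1
    have hle : pathIdeal3 k G ≤ p := hp.1.2
    have hgen : ∀ x y : V, G.Adj v x → G.Adj v y → x ≠ y → X x * X v * X y ∈ p := by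
      intro x y hx hy hxy
      exact hle (Ideal.subset_span ⟨x, v, y, hx.symm, hy, hxy, rfl⟩)
    by_cases hvp : (X v : MvPolynomial V k) ∈ p
    · have : (X v : MvPolynomial V k) * X v ∈ p ^ 2 := by
        rw [pow_two]; exact Ideal.mul_mem_mul hvp hvp
      have := Ideal.mul_mem_right (X a * X b * X c) _ this
      have heq2 : m = X v * X v * (X a * X b * X c) := by rw [hm]; ring
      rwa [heq2]
    · have split : ∀ x y : V, X x * X v * X y ∈ p →
          (X x : MvPolynomial V k) ∈ p ∨ (X y : MvPolynomial V k) ∈ p := by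
        intro x y hxy
        rcases hprime.mem_or_mem hxy with h | h
        · rcases hprime.mem_or_mem h with h | h
          · exact Or.inl h
          · exact absurd h hvp
        · exact Or.inr h
      have h1 := split a b (hgen a b hva hvb hab)
      have h2 := split a c (hgen a c hva hvc hac)
      have h3 := split b c (hgen b c hvb hvc hbc)
      -- get two of X a, X b, X c in p
      have two : ∃ f g h : MvPolynomial V k, f ∈ p ∧ g ∈ p ∧ m = f * g * h := by
        rcases h1 with ha | hb
        · rcases h3 with hb | hc
          · exact ⟨X a, X b, X v * X v * X c, ha, hb, by rw [hm]; ring⟩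
          · exact ⟨X a, X c, X v * X v * X b, ha, hc, by rw [hm]; ring⟩
        · rcases h2 with ha | hc
          · exact ⟨X a, X b, X v * X v * X c, ha, hb, by rw [hm]; ring⟩
          · exact ⟨X b, X c, X v * X v * X a, hb, hc, by rw [hm]; ring⟩
      obtain ⟨f, g, h, hf, hg, hfg⟩ := two
      rw [hfg]
      exact Ideal.mul_mem_right _ _ (by rw [pow_two]; exact Ideal.mul_mem_mul hf hg)
  rw [heq] at hmem
  have hlow := sq_le_lowDeg6 G hmem
  have hcoeff := hlow (Finsupp.single v 1 + Finsupp.single v 1 + Finsupp.single a 1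
      + Finsupp.single b 1 + Finsupp.single c 1) (by
    rw [Finsupp.sum_add_index' (by simp) (by simp),
      Finsupp.sum_add_index' (by simp) (by simp),
      Finsupp.sum_add_index' (by simp) (by simp),
      Finsupp.sum_add_index' (by simp) (by simp)]
    simp)
  rw [hm] at hcoeff
  rw [show (X v * X v * X a * X b * X c : MvPolynomial V k)
      = monomial (Finsupp.single v 1 + Finsupp.single v 1 + Finsupp.single a 1
        + Finsupp.single b 1 + Finsupp.single c 1) 1 by
    simp only [X_eq_monomial, monomial_mul, mul_one]] at hcoeff
  rw [coeff_monomial, if_pos rfl] at hcoeff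
  exact one_ne_zero hcoeff
end

section
/- Let G be a finite simple graph and k ≥ 1 a natural number. If G contains a cycle of length 3k+1 or a cycle of length 3k+2 (as a subgraph), then for the cubic path ideal I = I_3(G) one has I^(k+1) ≠ I^{k+1}. -/
/-! The witness is the product `m` of the variables along the cycle, of degree `ℓ = 3k + 1` or
`3k + 2`. A prime containing `I₃(G)` contains a variable from every three consecutive vertices
of the cycle, hence at least `⌈ℓ / 3⌉ = k + 1` of them, so `m` lies in `p ^ (k + 1)` for every
minimal prime `p`. Sending every variable to `t` maps `I₃(G) ^ (k + 1)` into `(t ^ (3k + 3))`,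
which does not contain the image `t ^ ℓ` of `m`. -/

open MvPolynomial

open Finset SimpleGraph
open scoped Polynomial Pointwise

lemma Ideal.prod_mem_pow_of_subset {R ι : Type*} [CommRing R] {P : Ideal R} {s t : Finset ι}
    {f : ι → R} {j : ℕ} (hts : t ⊆ s) (ht : ∀ i ∈ t, f i ∈ P) (hj : j ≤ #t) :
    ∏ i ∈ s, f i ∈ P ^ j := by
  classical
  rw [← Finset.prod_sdiff hts]
  refine Ideal.mul_mem_left _ _ (Ideal.pow_le_pow_right hj ?_)
  rw [← Finset.prod_const]
  exact Ideal.prod_mem_prod ht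

lemma Finset.card_le_card_mul_of_forall_exists_add_mem {A : Type*} [AddGroup A] [Fintype A]
    [DecidableEq A] {S T : Finset A} (h : ∀ a, ∃ s ∈ S, a + s ∈ T) :
    Fintype.card A ≤ #T * #S := by
  calc Fintype.card A = #(univ : Finset A) := card_univ.symm
    _ ≤ #(T - S) := card_le_card fun a _ => by
        obtain ⟨s, hs, has⟩ := h a
        exact mem_sub.2 ⟨a + s, has, s, hs, add_sub_cancel_right a s⟩
    _ ≤ #T * #S := card_sub_le

lemma mem_symbolicPower_iff {R : Type*} [CommRing R] {I : Ideal R} {n : ℕ} {x : R} :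
    x ∈ symbolicPower I n ↔ ∀ p ∈ I.minimalPrimes, x ∈ p ^ n := by
  simp [symbolicPower]

section

variable {K : Type*} [Field K] {V : Type*} {G : SimpleGraph V}

lemma X_mul_X_mul_X_mem_pathIdeal3 {u v w : V} (huv : G.Adj u v) (hvw : G.Adj v w)
    (huw : u ≠ w) : X u * X v * X w ∈ pathIdeal3 K G :=
  Ideal.subset_span ⟨u, v, w, huv, hvw, huw, rfl⟩

lemma map_pathIdeal3_le_span_X_pow_three :
    (pathIdeal3 K G).map (aeval fun _ : V => (Polynomial.X : K[X])) ≤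
      Ideal.span {(Polynomial.X : K[X]) ^ 3} := by
  rw [pathIdeal3, Ideal.map_span, Ideal.span_le]
  rintro _ ⟨_, ⟨u, v, w, -, -, -, rfl⟩, rfl⟩
  apply Ideal.subset_span
  simp only [map_mul, aeval_X, Set.mem_singleton_iff]
  ring

lemma prod_X_notMem_pathIdeal3_pow {ι : Type*} (s : Finset ι) (f : ι → V) {j : ℕ}
    (hs : #s < 3 * j) : ∏ i ∈ s, X (f i) ∉ pathIdeal3 K G ^ j := by
  intro hmem
  set φ : MvPolynomial V K →ₐ[K] K[X] := aeval fun _ => Polynomial.X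
  have hφ : φ (∏ i ∈ s, X (f i)) ∈ Ideal.span {(Polynomial.X : K[X]) ^ 3} ^ j := by
    have := Ideal.mem_map_of_mem φ hmem
    rw [Ideal.map_pow] at this
    exact Ideal.pow_right_mono map_pathIdeal3_le_span_X_pow_three j this
  simp only [φ, map_prod, aeval_X, prod_const, Ideal.span_singleton_pow,
    Ideal.mem_span_singleton, ← pow_mul] at hφ
  rw [pow_dvd_pow_iff Polynomial.X_ne_zero Polynomial.not_isUnit_X] at hφ
  omega

variable {n : ℕ} (c : Copy (cycleGraph (n + 3)) G)

lemma SimpleGraph.Copy.adj_cycleGraph_add_one (i : Fin (n + 3)) : G.Adj (c i) (c (i + 1)) :=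
  c.toHom.map_adj (by simp [cycleGraph_adj])

lemma SimpleGraph.Copy.ne_cycleGraph_add_two (i : Fin (n + 3)) : c i ≠ c (i + 2) := by
  refine c.injective.ne fun h => ?_
  simp only [left_eq_add, Fin.ext_iff, Fin.val_zero] at h
  rw [Fin.val_two] at h
  exact two_ne_zero h

lemma exists_X_mem_of_pathIdeal3_le {P : Ideal (MvPolynomial V K)} [P.IsPrime]
    (hP : pathIdeal3 K G ≤ P) (i : Fin (n + 3)) :
    ∃ t ∈ ({0, 1, 2} : Finset (Fin (n + 3))), X (c (i + t)) ∈ P := by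
  have hpath := hP (X_mul_X_mul_X_mem_pathIdeal3 (K := K) (c.adj_cycleGraph_add_one i)
    (by simpa only [show i + 1 + 1 = i + 2 by grind] using c.adj_cycleGraph_add_one (i + 1))
    (c.ne_cycleGraph_add_two i))
  rcases Ideal.IsPrime.mem_or_mem ‹_› hpath with h | h
  · rcases Ideal.IsPrime.mem_or_mem ‹_› h with h | h
    · exact ⟨0, by simp, by simpa using h⟩
    · exact ⟨1, by simp, h⟩
  · exact ⟨2, by simp, h⟩

lemma prod_X_mem_pow_of_pathIdeal3_le {P : Ideal (MvPolynomial V K)} [P.IsPrime]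
    (hP : pathIdeal3 K G ≤ P) {j : ℕ} (hj : 3 * j ≤ n + 3 + 2) : ∏ i, X (c i) ∈ P ^ j := by
  classical
  set T := univ.filter fun i => X (c i) ∈ P
  have hwindows : ∀ i, ∃ t ∈ ({0, 1, 2} : Finset (Fin (n + 3))), i + t ∈ T := by
    simpa [T] using exists_X_mem_of_pathIdeal3_le c hP
  have hcard : n + 3 ≤ #T * 3 := by
    calc n + 3 = Fintype.card (Fin (n + 3)) := (Fintype.card_fin _).symm
      _ ≤ #T * #({0, 1, 2} : Finset (Fin (n + 3))) :=
          card_le_card_mul_of_forall_exists_add_mem hwindows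
      _ ≤ #T * 3 := Nat.mul_le_mul_left _ card_le_three
  exact Ideal.prod_mem_pow_of_subset (subset_univ T) (fun i hi => (mem_filter.1 hi).2) (by omega)

lemma prod_X_mem_symbolicPower {j : ℕ} (hj : 3 * j ≤ n + 3 + 2) :
    ∏ i, X (c i) ∈ symbolicPower (pathIdeal3 K G) j :=
  mem_symbolicPower_iff.2 fun _ hP =>
    have := hP.1.1
    prod_X_mem_pow_of_pathIdeal3_le c hP.1.2 hj

end

theorem symbolicPower_ne_of_cycle_general
    (K : Type*) [Field K] {V : Type*}
    (G : SimpleGraph V) (k : ℕ)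
    (hcycle : ∃ (v : V) (p : G.Walk v v), p.IsCycle ∧
      (p.length = 3 * k + 1 ∨ p.length = 3 * k + 2)) :
    symbolicPower (pathIdeal3 K G) (k + 1) ≠ (pathIdeal3 K G) ^ (k + 1) := by
  obtain ⟨v, p, hp, hlen⟩ := hcycle
  obtain ⟨n, hn⟩ : ∃ n, p.length = n + 3 := ⟨p.length - 3, by have := hp.three_le_length; omega⟩
  obtain ⟨c⟩ := (cycleGraph_isContained_iff (by omega : 2 < n + 3)).2 ⟨v, p, hp, hn⟩
  intro h
  refine prod_X_notMem_pathIdeal3_pow univ c ?_ (h ▸ prod_X_mem_symbolicPower (K := K) c ?_)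
  · rw [card_univ, Fintype.card_fin]
    omega
  · omega

/-- If a finite simple graph `G` contains a cycle of length `3k+1` or of
length `3k+2` (for a natural number `k ≥ 1`), then the cubic path ideal `I = I₃(G)`
satisfies `I⁽ᵏ⁺¹⁾ ≠ Iᵏ⁺¹`. -/
theorem symbolicPower_ne_of_cycle
    (K : Type*) [Field K] {V : Type*} [Fintype V] [DecidableEq V]
    (G : SimpleGraph V) (k : ℕ) (hk : 1 ≤ k)
    (hcycle : ∃ (v : V) (p : G.Walk v v), p.IsCycle ∧
      (p.length = 3 * k + 1 ∨ p.length = 3 * k + 2)) :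
    symbolicPower (pathIdeal3 K G) (k + 1) ≠ (pathIdeal3 K G) ^ (k + 1) :=
  symbolicPower_ne_of_cycle_general K G k hcycle
end

section
/- Let k > 3 be an integer, let J = I_3(C_{3k}) be the cubic path ideal of the cycle C_{3k} in a polynomial ring over a field, and let x be any variable (vertex) of C_{3k}. Then for the colon ideal (J : x) one has (J : x)^(k+1) ≠ (J : x)^{k+1}. -/
open MvPolynomial SimpleGraph

set_option linter.unnecessarySimpa false
set_option maxHeartbeats 1000000

namespace PathIdeal3Aux

open Fin.NatCast Fin.CommRing



/-! ### Numeric combinatorial lemma -/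

private lemma sum3 (g : ℕ → ℕ) (k : ℕ) :
    ∑ t ∈ Finset.range (3*k), g t
      = ∑ j ∈ Finset.range k, (g (3*j) + g (3*j+1) + g (3*j+2)) := by
  induction k with
  | zero => simp
  | succ k ih =>
      have h3 : 3*(k+1) = (3*k + 1 + 1) + 1 := by ring
      rw [h3, Finset.sum_range_succ, Finset.sum_range_succ, Finset.sum_range_succ,
        Finset.sum_range_succ, ih]
      omega

lemma comb (k : ℕ) (hk : 4 ≤ k) (T : ℕ → Prop) [DecidablePred T]
    (h0 : ¬ T 0) (hq3 : T 1 ∨ T 2) (hq2 : T (3*k-1) ∨ T 1)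
    (hq1 : T (3*k-2) ∨ T (3*k-1))
    (hwin : ∀ t, t + 2 < 3*k → T t ∨ T (t+1) ∨ T (t+2)) :
    k + 1 ≤ ∑ t ∈ Finset.range (3*k),
      (if T t then (if t = 4 ∨ t = 8 then 2 else 1) else 0) := by
  set g : ℕ → ℕ := fun t => (if T t then (if t = 4 ∨ t = 8 then 2 else 1) else 0) with hg
  have hgT : ∀ t, T t → 1 ≤ g t := by
    intro t ht; simp only [hg, if_pos ht]; split <;> omega
  have hgT2 : ∀ t, T t → (t = 4 ∨ t = 8) → 2 ≤ g t := by
    intro t ht h48; simp only [hg, if_pos ht, if_pos h48]; omega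
  rw [sum3]
  set G : ℕ → ℕ := fun j => g (3*j) + g (3*j+1) + g (3*j+2) with hG
  have hG1 : ∀ j, j < k → 1 ≤ G j := by
    intro j hj
    rcases hwin (3*j) (by omega) with h | h | h
    · have := hgT _ h; simp only [hG]; omega
    · have := hgT _ h; simp only [hG]; omega
    · have := hgT _ h; simp only [hG]; omega
  by_cases hstrict : ∃ j ∈ Finset.range k, 2 ≤ G j
  · obtain ⟨j0, hj0, hj02⟩ := hstrict
    have : ∑ j ∈ Finset.range k, (fun _ => 1) j < ∑ j ∈ Finset.range k, G j := by
      apply Finset.sum_lt_sum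
      · intro i hi; exact hG1 i (Finset.mem_range.mp hi)
      · exact ⟨j0, hj0, by omega⟩
    simpa using this
  · push_neg at hstrict
    exfalso
    have hGe : ∀ j, j < k → G j = 1 := by
      intro j hj
      have := hG1 j hj
      have := hstrict j (Finset.mem_range.mpr hj)
      omega
    set r : ℕ → ℕ := fun j => if T (3*j) then 0 else if T (3*j+1) then 1 else 2 with hr
    have hrle : ∀ j, r j ≤ 2 := by intro j; simp only [hr]; split <;> [omega; (split <;> omega)]
    have hTr : ∀ j, j < k → T (3*j + r j) := by
      intro j hj
      by_cases h1 : T (3*j)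
      · simpa [hr, h1] using h1
      · by_cases h2 : T (3*j+1)
        · simpa [hr, h1, h2] using h2
        · have h3 : T (3*j+2) := by
            rcases hwin (3*j) (by omega) with h | h | h
            · exact absurd h h1
            · exact absurd h h2
            · exact h
          simpa [hr, h1, h2] using h3
    have huniq : ∀ j, j < k → ∀ t, t ≤ 2 → T (3*j + t) → t = r j := by
      intro j hj t ht hTt
      by_contra hne
      have hTrj := hTr j hj
      have h1 := hgT _ hTt
      have h2 := hgT _ hTrj
      have hGj : g (3*j) + g (3*j+1) + g (3*j+2) = 1 := hGe j hj
      have hrj := hrle j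
      rcases (by omega : t = 0 ∨ t = 1 ∨ t = 2) with rfl | rfl | rfl <;>
        rcases (by omega : r j = 0 ∨ r j = 1 ∨ r j = 2) with he | he | he <;>
          rw [he] at h2 hne <;> (try simp only [Nat.add_zero] at h1 h2) <;> omega
    have hnf : ∀ j, j < k → 3*j + r j ≠ 4 ∧ 3*j + r j ≠ 8 := by
      intro j hj
      have hTrj := hTr j hj
      have hrj := hrle j
      have hGj : g (3*j) + g (3*j+1) + g (3*j+2) = 1 := hGe j hj
      constructor <;> intro h48 <;>
        [have h2 := hgT2 _ hTrj (Or.inl h48); have h2 := hgT2 _ hTrj (Or.inr h48)] <;>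
        rcases (by omega : r j = 0 ∨ r j = 1 ∨ r j = 2) with he | he | he <;>
          rw [he] at h2 <;> (try simp only [Nat.add_zero] at h2) <;> omega
    have hmono : ∀ j, j + 1 < k → r (j+1) ≤ r j := by
      intro j hj
      have rule1 : r j = 1 ∨ r j = 2 ∨ r (j+1) = 0 := by
        rcases hwin (3*j+1) (by omega) with h | h | h
        · exact Or.inl ((huniq j (by omega) 1 (by omega) h).symm)
        · have e : 3*j+1+1 = 3*j+2 := by omega
          rw [e] at h
          exact Or.inr (Or.inl ((huniq j (by omega) 2 (by omega) h).symm))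
        · have e : 3*j+1+2 = 3*(j+1)+0 := by omega
          rw [e] at h
          have := huniq (j+1) hj 0 (by omega) h
          omega
      have rule2 : r j = 2 ∨ r (j+1) = 0 ∨ r (j+1) = 1 := by
        rcases hwin (3*j+2) (by omega) with h | h | h
        · exact Or.inl ((huniq j (by omega) 2 (by omega) h).symm)
        · have e : 3*j+2+1 = 3*(j+1)+0 := by omega
          rw [e] at h
          have := huniq (j+1) hj 0 (by omega) h
          omega
        · have e : 3*j+2+2 = 3*(j+1)+1 := by omega
          rw [e] at h
          have := huniq (j+1) hj 1 (by omega) h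
          omega
      have := hrle j; have := hrle (j+1)
      omega
    have hchain : ∀ j, j < k → ∀ i, i ≤ j → r j ≤ r i := by
      intro j
      induction j with
      | zero =>
          intro _ i hi
          have : i = 0 := by omega
          subst this; exact le_refl _
      | succ j ih =>
          intro hjk i hi
          rcases Nat.eq_or_lt_of_le hi with h | h
          · subst h; exact le_refl _
          · exact le_trans (hmono j hjk) (ih (by omega) i (by omega))
    have hr0 : 1 ≤ r 0 := by
      rcases Nat.eq_zero_or_pos (r 0) with h | h
      · exfalso; apply h0
        have h2 := hTr 0 (by omega)
        have e : 3*0 + r 0 = 0 := by omega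
        rw [e] at h2; exact h2
      · exact h
    have hrk : 1 ≤ r (k-1) := by
      rcases hq1 with h | h
      · have : (1:ℕ) = r (k-1) := huniq (k-1) (by omega) 1 (by omega) (by
          have : 3*(k-1)+1 = 3*k-2 := by omega
          rw [this]; exact h)
        omega
      · have : (2:ℕ) = r (k-1) := huniq (k-1) (by omega) 2 (by omega) (by
          have : 3*(k-1)+2 = 3*k-1 := by omega
          rw [this]; exact h)
        omega
    have hr0le := hrle 0
    rcases (by omega : r 0 = 1 ∨ r 0 = 2) with h1 | h2
    · -- r 1 ≤ 1, r 1 ≠ 1 (position 4) ⇒ r 1 = 0 ⇒ r (k-1) = 0 contra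
      have hm : r 1 ≤ r 0 := by simpa using hmono 0 (by omega)
      have hn := (hnf 1 (by omega)).1
      have hr1 : r 1 = 0 := by omega
      have := hchain (k-1) (by omega) 1 (by omega)
      omega
    · -- r 0 = 2: hq2 forces r (k-1) = 2; but r 2 ≤ 1 (position 8)
      have hrk2 : r (k-1) = 2 := by
        rcases hq2 with h | h
        · have : (2:ℕ) = r (k-1) := huniq (k-1) (by omega) 2 (by omega) (by
            have : 3*(k-1)+2 = 3*k-1 := by omega
            rw [this]; exact h)
          omega
        · have e : 3*0+1 = 1 := by omega
          have : (1:ℕ) = r 0 := huniq 0 (by omega) 1 (by omega) (by rw [e]; exact h)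
          omega
      have hm1 : r 1 ≤ r 0 := by simpa using hmono 0 (by omega)
      have hm2 : r 2 ≤ r 1 := by simpa using hmono 1 (by omega)
      have hn := (hnf 2 (by omega)).2
      have := hchain (k-1) (by omega) 2 (by omega)
      omega



section Gadgets

variable {n : ℕ} [NeZero n]

/-- `x + t` in `Fin n`. -/
def nuE (x : Fin n) (t : ℕ) : Fin n := x + (t : Fin n)

lemma nuE_zero (x : Fin n) : nuE x 0 = x := by simp [nuE]

lemma nuE_n (x : Fin n) : nuE x n = x := by simp [nuE]

lemma nuE_succ (x : Fin n) (t : ℕ) : nuE x (t+1) = nuE x t + 1 := by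
  simp only [nuE, Nat.cast_add, Nat.cast_one]; ring

lemma nuE_one (x : Fin n) : nuE x 1 = x + 1 := by
  rw [← nuE_zero x, ← nuE_succ, nuE_zero]

lemma natCast_fin_inj {a b : ℕ} (ha : a < n) (hb : b < n) (h : (a : Fin n) = b) : a = b := by
  have := congrArg Fin.val h
  rwa [Fin.val_cast_of_lt ha, Fin.val_cast_of_lt hb] at this

lemma nuE_inj {x : Fin n} {a b : ℕ} (ha : a < n) (hb : b < n) : nuE x a = nuE x b ↔ a = b := by
  constructor
  · intro h; exact natCast_fin_inj ha hb (add_left_cancel h)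
  · rintro rfl; rfl

lemma nuE_sub_one (x : Fin n) {t : ℕ} (ht : 1 ≤ t) : nuE x t - 1 = nuE x (t-1) := by
  have h : nuE x (t-1) + 1 = nuE x t := by
    rw [← nuE_succ]; congr 1; omega
  rw [← h, add_sub_cancel_right]

lemma sub_one_eq_nuE (x : Fin n) : x - 1 = nuE x (n-1) := by
  have h := nuE_sub_one x (show 1 ≤ n from Nat.one_le_iff_ne_zero.mpr (NeZero.ne n))
  rw [nuE_n] at h; exact h

lemma nuE_ne_self {x : Fin n} {t : ℕ} (h1 : 1 ≤ t) (h2 : t < n) : nuE x t ≠ x := by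
  conv_rhs => rw [← nuE_zero x]
  rw [Ne, nuE_inj h2 (Nat.pos_of_ne_zero (NeZero.ne n))]
  omega

/-- exponent vector of the cubic path monomial centered at `v` -/
noncomputable def cub (v : Fin n) : Fin n →₀ ℕ :=
  Finsupp.single (v-1) 1 + Finsupp.single v 1 + Finsupp.single (v+1) 1

/-- exponent vector of a quadratic monomial -/
noncomputable def qd (a b : Fin n) : Fin n →₀ ℕ := Finsupp.single a 1 + Finsupp.single b 1

lemma cub_apply (v u : Fin n) :
    cub v u = (if v-1 = u then 1 else 0) + (if v = u then 1 else 0)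
        + (if v+1 = u then 1 else 0) := by
  simp [cub, Finsupp.single_apply]

lemma qd_apply (a b u : Fin n) :
    qd a b u = (if a = u then 1 else 0) + (if b = u then 1 else 0) := by
  simp [qd, Finsupp.single_apply]

/-- total degree of an exponent vector -/
def deg (e : Fin n →₀ ℕ) : ℕ := ∑ u, e u

lemma deg_add (e f : Fin n →₀ ℕ) : deg (e+f) = deg e + deg f := by
  simp [deg, Finset.sum_add_distrib]

lemma deg_single (a : Fin n) : deg (Finsupp.single a 1) = 1 := by
  simp [deg, Finsupp.single_apply]

lemma deg_cub (v : Fin n) : deg (cub v) = 3 := by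
  simp [cub, deg_add, deg_single]

lemma deg_qd (a b : Fin n) : deg (qd a b) = 2 := by
  simp [qd, deg_add, deg_single]

lemma deg_mono {e f : Fin n →₀ ℕ} (h : e ≤ f) : deg e ≤ deg f :=
  Finset.sum_le_sum fun u _ => (Finsupp.le_def.mp h) u

lemma deg_fsum {m : ℕ} (f : Fin m → (Fin n →₀ ℕ)) :
    deg (∑ i, f i) = ∑ i, deg (f i) := by
  simp only [deg, Finsupp.finset_sum_apply]
  exact Finset.sum_comm

variable {K : Type*} [Field K]

lemma X_mul_X_mul_X (a b c : Fin n) :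
    (X a * X b * X c : MvPolynomial (Fin n) K)
      = monomial (Finsupp.single a 1 + Finsupp.single b 1 + Finsupp.single c 1) 1 := by
  rw [show (X a : MvPolynomial (Fin n) K) = monomial (Finsupp.single a 1) 1 from rfl,
    show (X b : MvPolynomial (Fin n) K) = monomial (Finsupp.single b 1) 1 from rfl,
    show (X c : MvPolynomial (Fin n) K) = monomial (Finsupp.single c 1) 1 from rfl,
    monomial_mul, monomial_mul]
  simp

lemma X_mul_X (a b : Fin n) :
    (X a * X b : MvPolynomial (Fin n) K) = monomial (qd a b) 1 := by
  rw [show (X a : MvPolynomial (Fin n) K) = monomial (Finsupp.single a 1) 1 from rfl,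
    show (X b : MvPolynomial (Fin n) K) = monomial (Finsupp.single b 1) 1 from rfl,
    monomial_mul]
  simp [qd]

end Gadgets



section Helpers
variable {n : ℕ} [NeZero n] {K : Type*} [Field K]

lemma prod_pow_mem_pow {R ι : Type*} [CommSemiring R] (p : Ideal R) (s : Finset ι)
    (F : ι → R) (c : ι → ℕ) (h : ∀ v ∈ s, F v ∈ p) :
    (∏ v ∈ s, F v ^ c v) ∈ p ^ (∑ v ∈ s, c v) := by
  classical
  induction s using Finset.cons_induction with
  | empty => simp [Ideal.one_eq_top]
  | cons a s ha ih =>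
      rw [Finset.prod_cons, Finset.sum_cons, pow_add]
      exact Ideal.mul_mem_mul (Ideal.pow_mem_pow (h a (Finset.mem_cons_self a s)) _)
        (ih fun v hv => h v (Finset.mem_cons_of_mem hv))

lemma monomial_mem_pow (p : Ideal (MvPolynomial (Fin n) K)) (c : Fin n →₀ ℕ)
    (h : ∀ v ∈ c.support, X v ∈ p) (m : ℕ) (hm : m ≤ ∑ v, c v) :
    (monomial c 1 : MvPolynomial (Fin n) K) ∈ p ^ m := by
  have h1 : (monomial c (1:K)) = ∏ v ∈ c.support, X v ^ c v := by
    rw [monomial_eq]; simp [Finsupp.prod]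
  have h2 : ∑ v ∈ c.support, c v = ∑ v, c v :=
    Finset.sum_subset (Finset.subset_univ _)
      (fun v _ hv => Finsupp.notMem_support_iff.mp hv)
  rw [h1]
  refine Ideal.pow_le_pow_right (by omega) (prod_pow_mem_pow p c.support _ _ h)

lemma one_add_one_ne_zero_fin (hn : 3 ≤ n) : ((1:Fin n) + 1) ≠ 0 := by
  have h2 : ((2:ℕ) : Fin n) = (1:Fin n)+1 := by push_cast; ring
  rw [← h2]
  intro h
  have h0 : ((2:ℕ) : Fin n) = ((0:ℕ) : Fin n) := by rw [h]; simp
  have := congrArg Fin.val h0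
  rw [Fin.val_cast_of_lt (by omega), Fin.val_cast_of_lt (by omega)] at this
  omega

lemma path_mem (hn : 3 ≤ n) (v : Fin n) :
    (X v * X (v+1) * X (v+1+1) : MvPolynomial (Fin n) K) ∈ pathIdeal3 K (cycleGraph n) := by
  apply Ideal.subset_span
  refine ⟨v, v+1, v+1+1, ?_, ?_, ?_, rfl⟩
  · rw [cycleGraph_adj']
    right
    rw [add_sub_cancel_left, Fin.val_one', Nat.mod_eq_of_lt (by omega)]
  · rw [cycleGraph_adj']
    right
    rw [add_sub_cancel_left, Fin.val_one', Nat.mod_eq_of_lt (by omega)]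
  · intro h
    rw [add_assoc] at h
    exact one_add_one_ne_zero_fin hn (left_eq_add.mp h)

end Helpers

section Part1

variable {K : Type*} [Field K]

/-- The witness exponent vector: `1` everywhere except `0` at `x` and `2` at `x+4`, `x+8`. -/
noncomputable def dvec (k : ℕ) [NeZero (3*k)] (x : Fin (3*k)) : Fin (3*k) →₀ ℕ :=
  Finsupp.equivFunOnFinite.symm
    (fun v => if v = x then 0 else if v = nuE x 4 ∨ v = nuE x 8 then 2 else 1)

lemma dvec_apply (k : ℕ) [NeZero (3*k)] (x : Fin (3*k)) (v : Fin (3*k)) :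
    dvec k x v = if v = x then 0 else if v = nuE x 4 ∨ v = nuE x 8 then 2 else 1 := by
  simp [dvec]

lemma dvec_nuE {k : ℕ} [NeZero (3*k)] (hk : 3 < k) (x : Fin (3*k)) {t : ℕ} (ht : t < 3*k) :
    dvec k x (nuE x t) = if t = 0 then 0 else if t = 4 ∨ t = 8 then 2 else 1 := by
  rw [dvec_apply]
  by_cases h0 : t = 0
  · subst h0; simp [nuE_zero]
  · rw [if_neg (nuE_ne_self (by omega) ht), if_neg h0]
    have e4 : (nuE x t = nuE x 4) ↔ t = 4 := nuE_inj ht (by omega)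
    have e8 : (nuE x t = nuE x 8) ↔ t = 8 := nuE_inj ht (by omega)
    simp only [e4, e8]

lemma J_le_colon {k : ℕ} [NeZero (3*k)] (x : Fin (3*k)) :
    pathIdeal3 K (cycleGraph (3*k)) ≤
      (pathIdeal3 K (cycleGraph (3*k))).colon (Ideal.span {(X x : MvPolynomial (Fin (3*k)) K)}) :=
  fun _ hf => Ideal.mem_colon_span_singleton.mpr (Ideal.mul_mem_right _ _ hf)

lemma part1 {k : ℕ} (hk : 3 < k) [NeZero (3*k)] (x : Fin (3*k)) :
    (monomial (dvec k x) 1 : MvPolynomial (Fin (3*k)) K) ∈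
      symbolicPower ((pathIdeal3 K (cycleGraph (3*k))).colon (Ideal.span {(X x : MvPolynomial (Fin (3*k)) K)})) (k+1) := by
  classical
  have hn : 3 ≤ 3*k := by omega
  set L := (pathIdeal3 K (cycleGraph (3*k))).colon (Ideal.span {(X x : MvPolynomial (Fin (3*k)) K)}) with hL
  rw [symbolicPower, Submodule.mem_iInf]
  intro p
  rw [Submodule.mem_iInf]
  intro hp
  obtain ⟨⟨hprime, hle⟩, -⟩ := hp
  -- the three "quadratic" generators of the colon ideal
  have hnu2 : nuE x 2 = x + 1 + 1 := by
    rw [show (2:ℕ) = 1+1 from rfl, nuE_succ, nuE_one]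
  have hq3' : (X (nuE x 1) * X (nuE x 2) : MvPolynomial (Fin (3*k)) K) ∈ L := by
    rw [hL, Ideal.mem_colon_span_singleton]
    have e : (X (nuE x 1) * X (nuE x 2)) * (X x : MvPolynomial (Fin (3*k)) K)
        = X x * X (x+1) * X (x+1+1) := by rw [nuE_one, hnu2]; ring
    rw [e]; exact path_mem hn x
  have hq2' : (X (nuE x (3*k-1)) * X (nuE x 1) : MvPolynomial (Fin (3*k)) K) ∈ L := by
    rw [hL, Ideal.mem_colon_span_singleton]
    set v := nuE x (3*k-1) with hv
    have e1 : v + 1 = x := by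
      rw [hv, ← nuE_succ, show 3*k-1+1 = 3*k by omega, nuE_n]
    have e2 : v + 1 + 1 = nuE x 1 := by rw [e1, nuE_one]
    have e : (X v * X (nuE x 1)) * (X x : MvPolynomial (Fin (3*k)) K)
        = X v * X (v+1) * X (v+1+1) := by rw [e2, e1]; try ring
    rw [e]; exact path_mem hn v
  have hq1' : (X (nuE x (3*k-2)) * X (nuE x (3*k-1)) : MvPolynomial (Fin (3*k)) K) ∈ L := by
    rw [hL, Ideal.mem_colon_span_singleton]
    set v := nuE x (3*k-2) with hv
    have e1 : v + 1 = nuE x (3*k-1) := by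
      rw [hv, ← nuE_succ, show 3*k-2+1 = 3*k-1 by omega]
    have e2 : v + 1 + 1 = x := by
      rw [e1, ← nuE_succ, show 3*k-1+1 = 3*k by omega, nuE_n]
    have e : (X v * X (nuE x (3*k-1))) * (X x : MvPolynomial (Fin (3*k)) K)
        = X v * X (v+1) * X (v+1+1) := by rw [e2, e1]; try ring
    rw [e]; exact path_mem hn v
  -- windows
  have hsplit : ∀ t : ℕ, X (nuE x t) ∈ p ∨ X (nuE x (t+1)) ∈ p ∨ X (nuE x (t+2)) ∈ p := by
    intro t
    have hmem : (X (nuE x t) * X (nuE x t + 1) * X (nuE x t + 1 + 1) :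
        MvPolynomial (Fin (3*k)) K) ∈ p := hle (hL ▸ J_le_colon x (path_mem hn (nuE x t)))
    have e1 : nuE x t + 1 = nuE x (t+1) := (nuE_succ x t).symm
    have e2 : nuE x (t+1) + 1 = nuE x (t+2) := (nuE_succ x (t+1)).symm
    rw [e1, e2] at hmem
    rcases hprime.mem_or_mem hmem with h | h
    · rcases hprime.mem_or_mem h with h' | h'
      · exact Or.inl h'
      · exact Or.inr (Or.inl h')
    · exact Or.inr (Or.inr h)
  set T : ℕ → Prop := fun t => X (nuE x t) ∈ p ∧ nuE x t ≠ x with hT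
  have hsplitq : ∀ a b : ℕ, 1 ≤ a → a < 3*k → 1 ≤ b → b < 3*k →
      (X (nuE x a) * X (nuE x b) : MvPolynomial (Fin (3*k)) K) ∈ L → T a ∨ T b := by
    intro a b ha1 ha2 hb1 hb2 hmem
    rcases hprime.mem_or_mem (hle hmem) with h | h
    · exact Or.inl ⟨h, nuE_ne_self ha1 ha2⟩
    · exact Or.inr ⟨h, nuE_ne_self hb1 hb2⟩
  have h0 : ¬ T 0 := by simp [hT, nuE_zero]
  have hq3T : T 1 ∨ T 2 := hsplitq 1 2 (by omega) (by omega) (by omega) (by omega) hq3'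
  have hq2T : T (3*k-1) ∨ T 1 := hsplitq _ _ (by omega) (by omega) (by omega) (by omega) hq2'
  have hq1T : T (3*k-2) ∨ T (3*k-1) := hsplitq _ _ (by omega) (by omega) (by omega) (by omega) hq1'
  have hwin : ∀ t, t + 2 < 3*k → T t ∨ T (t+1) ∨ T (t+2) := by
    intro t ht
    by_cases ht0 : t = 0
    · subst ht0
      rcases hq3T with h | h
      · exact Or.inr (Or.inl h)
      · exact Or.inr (Or.inr h)
    · rcases hsplit t with h | h | h
      · exact Or.inl ⟨h, nuE_ne_self (by omega) (by omega)⟩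
      · exact Or.inr (Or.inl ⟨h, nuE_ne_self (by omega) (by omega)⟩)
      · exact Or.inr (Or.inr ⟨h, nuE_ne_self (by omega) (by omega)⟩)
  have hcomb := comb k (by omega) T h0 hq3T hq2T hq1T hwin
  -- build the subvector c supported on variables of p
  set c : Fin (3*k) →₀ ℕ := Finsupp.equivFunOnFinite.symm
    (fun v => if X v ∈ p ∧ v ≠ x then dvec k x v else 0) with hc
  have hc_apply : ∀ v, c v = if X v ∈ p ∧ v ≠ x then dvec k x v else 0 := by
    intro v; simp [hc]
  have hcle : c ≤ dvec k x := by
    rw [Finsupp.le_def]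
    intro v
    rw [hc_apply]
    split
    · exact le_refl _
    · exact Nat.zero_le _
  have hsupp : ∀ v ∈ c.support, (X v : MvPolynomial (Fin (3*k)) K) ∈ p := by
    intro v hv
    have := Finsupp.mem_support_iff.mp hv
    rw [hc_apply] at this
    by_cases h : X v ∈ p ∧ v ≠ x
    · exact h.1
    · rw [if_neg h] at this; exact absurd rfl this
  have hsum : k + 1 ≤ ∑ v, c v := by
    have hb1 : ∑ v : Fin (3*k), c v = ∑ v : Fin (3*k), c (x + v) :=
      (Equiv.sum_comp (Equiv.addLeft x) (fun v => c v)).symm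
    have hb2 : ∑ v : Fin (3*k), c (x + v) = ∑ t ∈ Finset.range (3*k), c (nuE x t) := by
      rw [← Fin.sum_univ_eq_sum_range (fun t => c (nuE x t)) (3*k)]
      apply Finset.sum_congr rfl
      intro v _
      congr 1
      rw [nuE]
      congr 1
      exact (Fin.cast_val_eq_self v).symm
    have hb3 : ∑ t ∈ Finset.range (3*k), c (nuE x t)
        = ∑ t ∈ Finset.range (3*k), (if T t then (if t = 4 ∨ t = 8 then 2 else 1) else 0) := by
      apply Finset.sum_congr rfl
      intro t ht
      rw [hc_apply]
      by_cases hTt : T t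
      · rw [if_pos ⟨hTt.1, hTt.2⟩, if_pos hTt, dvec_nuE hk x (Finset.mem_range.mp ht)]
        rw [if_neg (by rintro rfl; exact hTt.2 (nuE_zero x))]
      · simp only [if_neg hTt,
          if_neg (show ¬(X (nuE x t) ∈ p ∧ nuE x t ≠ x) from fun hcon => hTt ⟨hcon.1, hcon.2⟩)]
    rw [hb1, hb2, hb3]
    exact hcomb
  have hmon : (monomial (dvec k x) 1 : MvPolynomial (Fin (3*k)) K)
      = monomial c 1 * monomial (dvec k x - c) 1 := by
    rw [monomial_mul, one_mul, add_tsub_cancel_of_le hcle]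
  rw [hmon]
  exact Ideal.mul_mem_right _ _ (monomial_mem_pow p c hsupp (k+1) hsum)

end Part1

section Part2ab

variable {K : Type*} [Field K]

/-- Monomial generators dominating the colon ideal `(I₃(C_{3k}) : x)`. -/
def Eset {n : ℕ} [NeZero n] (x : Fin n) : Set (Fin n →₀ ℕ) :=
  {e | (∃ v, e = cub v) ∨ e = qd (x-1-1) (x-1) ∨ e = qd (x-1) (x+1) ∨ e = qd (x+1) (x+1+1)}

lemma val_one_fin {n : ℕ} [NeZero n] (hn : 3 ≤ n) (u v : Fin n) (h : (u - v).val = 1) :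
    u = v + 1 := by
  have h1 : u - v = 1 := by
    apply Fin.val_injective
    rw [h, Fin.val_one', Nat.mod_eq_of_lt (by omega)]
  rw [sub_eq_iff_eq_add] at h1
  rw [h1, add_comm]

lemma genset_sub {n : ℕ} [NeZero n] (hn : 3 ≤ n) :
    {m : MvPolynomial (Fin n) K | ∃ u v w : Fin n, (cycleGraph n).Adj u v ∧
        (cycleGraph n).Adj v w ∧ u ≠ w ∧ m = X u * X v * X w}
      ⊆ (fun e => (monomial e 1 : MvPolynomial (Fin n) K)) '' {e | ∃ v, e = cub v} := by
  rintro m ⟨u, v, w, huv, hvw, hne, rfl⟩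
  have hu : u = v + 1 ∨ u = v - 1 := by
    rw [cycleGraph_adj'] at huv
    rcases huv with h | h
    · exact Or.inl (val_one_fin hn u v h)
    · right
      have := val_one_fin hn v u h
      rw [this, add_sub_cancel_right]
  have hw : w = v + 1 ∨ w = v - 1 := by
    rw [cycleGraph_adj'] at hvw
    rcases hvw with h | h
    · right
      have := val_one_fin hn v w h
      rw [this, add_sub_cancel_right]
    · exact Or.inl (val_one_fin hn w v h)
  refine ⟨cub v, ⟨v, rfl⟩, ?_⟩
  rcases hu with rfl | rfl <;> rcases hw with rfl | rfl <;>
    first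
      | exact absurd rfl hne
      | (rw [X_mul_X_mul_X]
         congr 1
         all_goals simp only [cub]
         all_goals try abel)

lemma colon_le_span {n : ℕ} [NeZero n] (hn : 3 ≤ n) (x : Fin n) :
    (pathIdeal3 K (cycleGraph n)).colon (Ideal.span {(X x : MvPolynomial (Fin n) K)})
      ≤ Ideal.span ((fun e => (monomial e 1 : MvPolynomial (Fin n) K)) '' Eset x) := by
  classical
  intro f hf
  rw [mem_ideal_span_monomial_image]
  intro e' he'
  have hfx : f * X x ∈ Ideal.span
      ((fun e => (monomial e 1 : MvPolynomial (Fin n) K)) '' {e | ∃ v, e = cub v}) := by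
    have h1 : f * X x ∈ pathIdeal3 K (cycleGraph n) := Ideal.mem_colon_span_singleton.mp hf
    exact Ideal.span_mono (genset_sub hn) h1
  rw [mem_ideal_span_monomial_image] at hfx
  have he2 : e' + Finsupp.single x 1 ∈ (f * X x).support := by
    rw [support_mul_X]
    exact Finset.mem_map_of_mem _ he'
  obtain ⟨s, ⟨v, rfl⟩, hle⟩ := hfx _ he2
  by_cases hvx : v = x
  · subst hvx
    refine ⟨qd (v-1) (v+1), Or.inr (Or.inr (Or.inl rfl)), ?_⟩
    have hsplit : cub v = qd (v-1) (v+1) + Finsupp.single v 1 := by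
      simp only [cub, qd]; try abel
    rw [hsplit] at hle
    exact le_of_add_le_add_right hle
  · by_cases hvx1 : v = x + 1
    · subst hvx1
      refine ⟨qd (x+1) (x+1+1), Or.inr (Or.inr (Or.inr rfl)), ?_⟩
      have hsplit : cub (x+1) = qd (x+1) (x+1+1) + Finsupp.single x 1 := by
        simp only [cub, qd, add_sub_cancel_right]; try abel
      rw [hsplit] at hle
      exact le_of_add_le_add_right hle
    · by_cases hvx2 : v = x - 1
      · subst hvx2
        refine ⟨qd (x-1-1) (x-1), Or.inr (Or.inl rfl), ?_⟩
        have hsplit : cub (x-1) = qd (x-1-1) (x-1) + Finsupp.single x 1 := by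
          simp only [cub, qd, sub_add_cancel]; try abel
        rw [hsplit] at hle
        exact le_of_add_le_add_right hle
      · refine ⟨cub v, Or.inl ⟨v, rfl⟩, ?_⟩
        rw [Finsupp.le_def]
        intro u
        have hu := Finsupp.le_def.mp hle u
        rw [Finsupp.add_apply] at hu
        by_cases hux : u = x
        · subst hux
          have h0 : cub v u = 0 := by
            have c1 : v - 1 ≠ u := fun h => hvx1 (sub_eq_iff_eq_add.mp h)
            have c3 : v + 1 ≠ u := fun h => hvx2 (eq_sub_iff_add_eq.mpr h)
            rw [cub_apply, if_neg c1, if_neg hvx, if_neg c3]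
          rw [h0]
          exact Nat.zero_le _
        · rwa [Finsupp.single_apply, if_neg (fun h => hux h.symm), add_zero] at hu

/-- Sums of `m` generators. -/
def sums {n : ℕ} [NeZero n] (x : Fin n) (m : ℕ) : Set (Fin n →₀ ℕ) :=
  {e | ∃ f : Fin m → (Fin n →₀ ℕ), (∀ i, f i ∈ Eset x) ∧ e = ∑ i, f i}

lemma pow_le_span_sums {n : ℕ} [NeZero n] (x : Fin n) (m : ℕ) :
    (Ideal.span ((fun e => (monomial e 1 : MvPolynomial (Fin n) K)) '' Eset x)) ^ m
      ≤ Ideal.span ((fun e => (monomial e 1 : MvPolynomial (Fin n) K)) '' sums x m) := by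
  induction m with
  | zero =>
      have h1 : (1 : MvPolynomial (Fin n) K) ∈
          Ideal.span ((fun e => (monomial e 1 : MvPolynomial (Fin n) K)) '' sums x 0) := by
        apply Ideal.subset_span
        refine ⟨0, ⟨Fin.elim0, fun i => i.elim0, by simp⟩, by simp⟩
      rw [pow_zero, Ideal.one_eq_top, (Ideal.eq_top_iff_one _).mpr h1]
  | succ m ih =>
      rw [pow_succ]
      refine le_trans (Ideal.mul_mono ih (le_refl _)) ?_
      rw [Ideal.span_mul_span, Ideal.span_le]
      intro z hz
      rw [Set.mem_mul] at hz
      obtain ⟨a, ⟨e, he, rfl⟩, b, ⟨g, hg, rfl⟩, rfl⟩ := hz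
      obtain ⟨f, hfm, rfl⟩ := he
      apply Ideal.subset_span
      refine ⟨(∑ i, f i) + g, ⟨Fin.snoc f g, ?_, ?_⟩, ?_⟩
      · intro i
        refine Fin.lastCases ?_ ?_ i
        · rw [Fin.snoc_last]; exact hg
        · intro j; rw [Fin.snoc_castSucc]; exact hfm j
      · rw [Fin.sum_univ_castSucc]
        simp [Fin.snoc_castSucc, Fin.snoc_last]
      · rw [monomial_mul, one_mul]

end Part2ab

section Part2c

variable {K : Type*} [Field K]

lemma sum_univ_nuE {n : ℕ} [NeZero n] (x : Fin n) (g : Fin n → ℕ) :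
    ∑ v, g v = ∑ t ∈ Finset.range n, g (nuE x t) := by
  have hb1 : ∑ v : Fin n, g v = ∑ v : Fin n, g (x + v) :=
    (Equiv.sum_comp (Equiv.addLeft x) (fun v => g v)).symm
  have hb2 : ∑ v : Fin n, g (x + v) = ∑ t ∈ Finset.range n, g (nuE x t) := by
    rw [← Fin.sum_univ_eq_sum_range (fun t => g (nuE x t)) n]
    apply Finset.sum_congr rfl
    intro v _
    congr 1
    rw [nuE]
    congr 1
    exact (Fin.cast_val_eq_self v).symm
  rw [hb1, hb2]

lemma deg_dvec {k : ℕ} (hk : 3 < k) [NeZero (3*k)] (x : Fin (3*k)) :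
    deg (dvec k x) = 3*k+1 := by
  rw [deg, sum_univ_nuE x]
  have h1 : ∀ t ∈ Finset.range (3*k), dvec k x (nuE x t)
      = (if t = 4 then 1 else 0) + (if t = 8 then 1 else 0) + (if t = 0 then 0 else 1) := by
    intro t ht
    rw [dvec_nuE hk x (Finset.mem_range.mp ht)]
    split_ifs <;> omega
  rw [Finset.sum_congr rfl h1, Finset.sum_add_distrib, Finset.sum_add_distrib]
  have h4 : ∑ t ∈ Finset.range (3*k), (if t = 4 then (1:ℕ) else 0) = 1 := by
    rw [Finset.sum_ite_eq' (Finset.range (3*k)) 4 (fun _ => (1:ℕ))]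
    rw [if_pos (Finset.mem_range.mpr (by omega))]
  have h8 : ∑ t ∈ Finset.range (3*k), (if t = 8 then (1:ℕ) else 0) = 1 := by
    rw [Finset.sum_ite_eq' (Finset.range (3*k)) 8 (fun _ => (1:ℕ))]
    rw [if_pos (Finset.mem_range.mpr (by omega))]
  have h0' : ∑ t ∈ Finset.range (3*k), (if t = 0 then (1:ℕ) else 0) = 1 := by
    rw [Finset.sum_ite_eq' (Finset.range (3*k)) 0 (fun _ => (1:ℕ))]
    rw [if_pos (Finset.mem_range.mpr (by omega))]
  have h0 : ∑ t ∈ Finset.range (3*k), (if t = 0 then (0:ℕ) else 1) = 3*k - 1 := by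
    have hsplit : (∑ t ∈ Finset.range (3*k), (if t = 0 then (0:ℕ) else 1))
        + (∑ t ∈ Finset.range (3*k), (if t = 0 then (1:ℕ) else 0)) = 3*k := by
      rw [← Finset.sum_add_distrib]
      have : ∀ t ∈ Finset.range (3*k),
          ((if t = 0 then (0:ℕ) else 1) + (if t = 0 then (1:ℕ) else 0)) = 1 := by
        intro t _; split_ifs <;> omega
      rw [Finset.sum_congr rfl this, Finset.sum_const, Finset.card_range, smul_eq_mul, mul_one]
    omega
  rw [h4, h8, h0]
  omega

lemma cub_ne_qd {n : ℕ} [NeZero n] (v a b : Fin n) : cub v ≠ qd a b := by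
  intro h
  have := congrArg deg h
  rw [deg_cub, deg_qd] at this
  omega

lemma contra {k : ℕ} (hk : 3 < k) [NeZero (3*k)] (x : Fin (3*k))
    (f : Fin (k+1) → (Fin (3*k) →₀ ℕ)) (hf : ∀ i, f i ∈ Eset x)
    (hle : (∑ i, f i) ≤ dvec k x) : False := by
  classical
  -- coordinates
  have hcast1 : x + 1 = nuE x 1 := (nuE_one x).symm
  have hcastm1 : x - 1 = nuE x (3*k-1) := sub_one_eq_nuE x
  have hcastm2 : x - 1 - 1 = nuE x (3*k-2) := by
    rw [hcastm1, nuE_sub_one x (by omega : 1 ≤ 3*k-1), show 3*k-1-1 = 3*k-2 by omega]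
  have hcast2 : x + 1 + 1 = nuE x 2 := by
    rw [hcast1, ← nuE_succ]
  set Q1 : Fin (3*k) →₀ ℕ := qd (nuE x (3*k-2)) (nuE x (3*k-1)) with hQ1def
  set Q2 : Fin (3*k) →₀ ℕ := qd (nuE x (3*k-1)) (nuE x 1) with hQ2def
  set Q3 : Fin (3*k) →₀ ℕ := qd (nuE x 1) (nuE x 2) with hQ3def
  have hfE : ∀ i, (∃ v, f i = cub v) ∨ f i = Q1 ∨ f i = Q2 ∨ f i = Q3 := by
    intro i
    rcases hf i with h | h | h | h
    · exact Or.inl h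
    · rw [hcastm2, hcastm1] at h; exact Or.inr (Or.inl h)
    · rw [hcastm1, hcast1] at h; exact Or.inr (Or.inr (Or.inl h))
    · rw [hcast2, hcast1] at h; exact Or.inr (Or.inr (Or.inr h))
  -- evaluation lemmas
  have hcub_nuE : ∀ (t s : ℕ), 1 ≤ t → t+1 < 3*k → s < 3*k →
      cub (nuE x t) (nuE x s) = if t-1 = s ∨ t = s ∨ t+1 = s then 1 else 0 := by
    intro t s ht1 ht2 hs
    have e1 : nuE x t - 1 = nuE x (t-1) := nuE_sub_one x ht1
    have e2 : nuE x t + 1 = nuE x (t+1) := (nuE_succ x t).symm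
    rw [cub_apply, e1, e2]
    have i1 : (nuE x (t-1) = nuE x s) ↔ (t-1 = s) := nuE_inj (by omega) hs
    have i2 : (nuE x t = nuE x s) ↔ (t = s) := nuE_inj (by omega) hs
    have i3 : (nuE x (t+1) = nuE x s) ↔ (t+1 = s) := nuE_inj (by omega) hs
    simp only [i1, i2, i3]
    split_ifs <;> omega
  have hqd_nuE : ∀ (a b s : ℕ), a < 3*k → b < 3*k → s < 3*k →
      qd (nuE x a) (nuE x b) (nuE x s)
        = (if a = s then 1 else 0) + (if b = s then 1 else 0) := by
    intro a b s ha hb hs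
    rw [qd_apply]
    have i1 : (nuE x a = nuE x s) ↔ (a = s) := nuE_inj ha hs
    have i2 : (nuE x b = nuE x s) ↔ (b = s) := nuE_inj hb hs
    simp only [i1, i2]
  -- pointwise inequality & sums
  have hFle : ∀ u, (∑ i, f i u) ≤ dvec k x u := by
    intro u
    have h := Finsupp.le_def.mp hle u
    rwa [Finsupp.finset_sum_apply] at h
  -- degree accounting
  have hdegle : ∑ i, deg (f i) ≤ 3*k+1 := by
    have h1 : ∑ i, deg (f i) = ∑ u, (∑ i, f i u) := by
      simp only [deg]; exact Finset.sum_comm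
    have h2 : ∑ u, (∑ i, f i u) ≤ ∑ u, dvec k x u :=
      Finset.sum_le_sum (fun u _ => hFle u)
    have h3 : ∑ u, dvec k x u = 3*k+1 := deg_dvec hk x
    omega
  set Q : Finset (Fin (k+1)) :=
    Finset.univ.filter (fun i => f i = Q1 ∨ f i = Q2 ∨ f i = Q3) with hQdef
  have hdegQ : ∀ i, deg (f i) + (if i ∈ Q then 1 else 0) = 3 := by
    intro i
    rcases hfE i with ⟨v, hv⟩ | h | h | h
    · have hnotQ : i ∉ Q := by
        intro hiQ
        have h2 : deg (f i) = 2 := by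
          rcases (Finset.mem_filter.mp hiQ).2 with h | h | h <;> rw [h] <;>
            simp [hQ1def, hQ2def, hQ3def, deg_qd]
        rw [hv, deg_cub] at h2
        omega
      rw [hv, deg_cub, if_neg hnotQ]
    · rw [h, hQ1def, deg_qd, if_pos (Finset.mem_filter.mpr ⟨Finset.mem_univ i, Or.inl h⟩)]
    · rw [h, hQ2def, deg_qd, if_pos (Finset.mem_filter.mpr ⟨Finset.mem_univ i, Or.inr (Or.inl h)⟩)]
    · rw [h, hQ3def, deg_qd, if_pos (Finset.mem_filter.mpr ⟨Finset.mem_univ i, Or.inr (Or.inr h)⟩)]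
  have hcard : (∑ i, deg (f i)) + Q.card = 3*(k+1) := by
    have h1 : ∑ i : Fin (k+1), (deg (f i) + (if i ∈ Q then 1 else 0)) = 3*(k+1) := by
      rw [Finset.sum_congr rfl (fun i _ => hdegQ i), Finset.sum_const, Finset.card_univ]
      simp [Fintype.card_fin]; ring
    rw [Finset.sum_add_distrib] at h1
    have h2 : ∑ i : Fin (k+1), (if i ∈ Q then (1:ℕ) else 0) = Q.card := by
      rw [Finset.sum_ite_mem, Finset.univ_inter, Finset.sum_const, smul_eq_mul, mul_one]
    omega
  have hQge2 : 2 ≤ Q.card := by omega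
  -- distinctness of quads
  have hQ12 : Q1 ≠ Q2 := by
    intro h
    have h8 : Q1 (nuE x (3*k-2)) = Q2 (nuE x (3*k-2)) := DFunLike.congr_fun h _
    rw [hQ1def, hQ2def, hqd_nuE _ _ _ (by omega) (by omega) (by omega),
      hqd_nuE _ _ _ (by omega) (by omega) (by omega)] at h8
    first
      | omega
      | (rw [if_pos rfl, if_neg (by omega), if_neg (by omega), if_neg (by omega)] at h8; omega)
      | (split_ifs at h8 <;> omega)
  have hQ13 : Q1 ≠ Q3 := by
    intro h
    have h8 : Q1 (nuE x (3*k-2)) = Q3 (nuE x (3*k-2)) := DFunLike.congr_fun h _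
    rw [hQ1def, hQ3def, hqd_nuE _ _ _ (by omega) (by omega) (by omega),
      hqd_nuE _ _ _ (by omega) (by omega) (by omega)] at h8
    first
      | omega
      | (rw [if_pos rfl, if_neg (by omega), if_neg (by omega), if_neg (by omega)] at h8; omega)
      | (split_ifs at h8 <;> omega)
  have hQ23 : Q2 ≠ Q3 := by
    intro h
    have h8 : Q2 (nuE x (3*k-1)) = Q3 (nuE x (3*k-1)) := DFunLike.congr_fun h _
    rw [hQ2def, hQ3def, hqd_nuE _ _ _ (by omega) (by omega) (by omega),
      hqd_nuE _ _ _ (by omega) (by omega) (by omega)] at h8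
    first
      | omega
      | (rw [if_pos rfl, if_neg (by omega), if_neg (by omega), if_neg (by omega)] at h8; omega)
      | (split_ifs at h8 <;> omega)
  have hQ21 : Q2 ≠ Q1 := fun h => hQ12 h.symm
  have hQ31 : Q3 ≠ Q1 := fun h => hQ13 h.symm
  have hQ32 : Q3 ≠ Q2 := fun h => hQ23 h.symm
  set A1 : ℕ := ∑ i, (if f i = Q1 then 1 else 0) with hA1def
  set A2 : ℕ := ∑ i, (if f i = Q2 then 1 else 0) with hA2def
  set A3 : ℕ := ∑ i, (if f i = Q3 then 1 else 0) with hA3def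
  have hAQ : A1 + A2 + A3 = Q.card := by
    have hpt : ∀ i : Fin (k+1),
        ((if f i = Q1 then (1:ℕ) else 0) + (if f i = Q2 then 1 else 0)
          + (if f i = Q3 then 1 else 0)) = (if i ∈ Q then 1 else 0) := by
      intro i
      by_cases hiQ : i ∈ Q
      · rcases (Finset.mem_filter.mp hiQ).2 with h | h | h
        · rw [if_pos h, if_neg (fun h2 => hQ12 (h.symm.trans h2)),
            if_neg (fun h2 => hQ13 (h.symm.trans h2)), if_pos hiQ]
        · rw [if_neg (fun h2 => hQ12 (h2.symm.trans h)), if_pos h,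
            if_neg (fun h2 => hQ23 (h.symm.trans h2)), if_pos hiQ]
        · rw [if_neg (fun h2 => hQ13 (h2.symm.trans h)),
            if_neg (fun h2 => hQ23 (h2.symm.trans h)), if_pos h, if_pos hiQ]
      · have hn1 : f i ≠ Q1 := fun h => hiQ (Finset.mem_filter.mpr ⟨Finset.mem_univ i, Or.inl h⟩)
        have hn2 : f i ≠ Q2 := fun h =>
          hiQ (Finset.mem_filter.mpr ⟨Finset.mem_univ i, Or.inr (Or.inl h)⟩)
        have hn3 : f i ≠ Q3 := fun h =>
          hiQ (Finset.mem_filter.mpr ⟨Finset.mem_univ i, Or.inr (Or.inr h)⟩)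
        rw [if_neg hn1, if_neg hn2, if_neg hn3, if_neg hiQ]
    have h2 : ∑ i : Fin (k+1), (if i ∈ Q then (1:ℕ) else 0) = Q.card := by
      rw [Finset.sum_ite_mem, Finset.univ_inter, Finset.sum_const, smul_eq_mul, mul_one]
    rw [hA1def, hA2def, hA3def, ← Finset.sum_add_distrib, ← Finset.sum_add_distrib,
      Finset.sum_congr rfl (fun i _ => hpt i), h2]
  -- dvec values
  have hdval1 : ∀ t, t < 3*k → t ≠ 0 → t ≠ 4 → t ≠ 8 → dvec k x (nuE x t) = 1 := by
    intro t ht h0 h4 h8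
    rw [dvec_nuE hk x ht, if_neg h0, if_neg (by omega)]
  have hdval4 : dvec k x (nuE x 4) = 2 := by
    rw [dvec_nuE hk x (by omega), if_neg (by omega), if_pos (Or.inl rfl)]
  -- quad counting
  have hA23 : A2 + A3 ≤ 1 := by
    have hpt : ∀ i : Fin (k+1),
        ((if f i = Q2 then (1:ℕ) else 0) + (if f i = Q3 then 1 else 0)) ≤ f i (nuE x 1) := by
      intro i
      rcases hfE i with ⟨v, hv⟩ | h | h | h
      · rw [if_neg (fun h2 => cub_ne_qd _ _ _ (hv.symm.trans (h2.trans hQ2def))),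
          if_neg (fun h2 => cub_ne_qd _ _ _ (hv.symm.trans (h2.trans hQ3def)))]
        exact Nat.zero_le _
      · rw [if_neg (fun h2 => hQ21 (h2.symm.trans h)),
          if_neg (fun h2 => hQ31 (h2.symm.trans h))]
        exact Nat.zero_le _
      · rw [if_pos h, if_neg (fun h2 => hQ23 (h.symm.trans h2)), h, hQ2def,
          hqd_nuE _ _ _ (by omega) (by omega) (by omega), if_neg (by omega), if_pos rfl]
      · rw [if_neg (fun h2 => hQ23 (h2.symm.trans h)), if_pos h, h, hQ3def,
          hqd_nuE _ _ _ (by omega) (by omega) (by omega), if_pos rfl, if_neg (by omega)]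
    have hsum := Finset.sum_le_sum (fun i (_ : i ∈ Finset.univ) => hpt i)
    rw [Finset.sum_add_distrib] at hsum
    have hF1 := hFle (nuE x 1)
    rw [hdval1 1 (by omega) (by omega) (by omega) (by omega)] at hF1
    rw [hA2def, hA3def]
    omega
  have hA12 : A1 + A2 ≤ 1 := by
    have hpt : ∀ i : Fin (k+1),
        ((if f i = Q1 then (1:ℕ) else 0) + (if f i = Q2 then 1 else 0))
          ≤ f i (nuE x (3*k-1)) := by
      intro i
      rcases hfE i with ⟨v, hv⟩ | h | h | h
      · rw [if_neg (fun h2 => cub_ne_qd _ _ _ (hv.symm.trans (h2.trans hQ1def))),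
          if_neg (fun h2 => cub_ne_qd _ _ _ (hv.symm.trans (h2.trans hQ2def)))]
        exact Nat.zero_le _
      · rw [if_pos h, if_neg (fun h2 => hQ12 (h.symm.trans h2)), h, hQ1def,
          hqd_nuE _ _ _ (by omega) (by omega) (by omega), if_neg (by omega), if_pos rfl]
      · rw [if_neg (fun h2 => hQ12 (h2.symm.trans h)), if_pos h, h, hQ2def,
          hqd_nuE _ _ _ (by omega) (by omega) (by omega), if_pos rfl, if_neg (by omega)]
      · rw [if_neg (fun h2 => hQ13 (h2.symm.trans h)),
          if_neg (fun h2 => hQ23 (h2.symm.trans h))]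
        exact Nat.zero_le _
    have hsum := Finset.sum_le_sum (fun i (_ : i ∈ Finset.univ) => hpt i)
    rw [Finset.sum_add_distrib] at hsum
    have hF1 := hFle (nuE x (3*k-1))
    rw [hdval1 (3*k-1) (by omega) (by omega) (by omega) (by omega)] at hF1
    rw [hA1def, hA2def]
    omega
  have hA3eq : A3 = 1 := by omega
  have hQcard : Q.card = 2 := by omega
  -- full equality of the sum with dvec
  have hFeq : ∀ u, (∑ i, f i u) = dvec k x u := by
    have h1 : ∑ i, deg (f i) = ∑ u, (∑ i, f i u) := by
      simp only [deg]; exact Finset.sum_comm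
    have h3 : ∑ u, dvec k x u = 3*k+1 := deg_dvec hk x
    have hsums : ∑ u, (∑ i, f i u) = ∑ u, dvec k x u := by omega
    intro u
    exact (Finset.sum_eq_sum_iff_of_le (fun u _ => hFle u)).mp hsums u (Finset.mem_univ u)
  -- each entry at x is zero
  have hzero : ∀ i, f i x = 0 := by
    intro i
    have h0 : (∑ i, f i x) = 0 := by
      have := hFeq x
      rwa [show dvec k x x = 0 by rw [dvec_apply, if_pos rfl]] at this
    exact Finset.sum_eq_zero_iff.mp h0 i (Finset.mem_univ i)
  -- classification of cubic pieces
  have hcubt : ∀ i, (∃ v, f i = cub v) →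
      ∃ t, 2 ≤ t ∧ t ≤ 3*k-2 ∧ f i = cub (nuE x t) := by
    rintro i ⟨v, hv⟩
    have hz := hzero i
    rw [hv, cub_apply] at hz
    have c1 : v - 1 ≠ x := by intro h; rw [if_pos h] at hz; omega
    have c2 : v ≠ x := by intro h; rw [if_pos h] at hz; split_ifs at hz <;> omega
    have c3 : v + 1 ≠ x := by intro h; rw [if_pos h] at hz; split_ifs at hz <;> omega
    set t0 := (v - x).val with ht0def
    have hveq : v = nuE x t0 := by
      rw [nuE, ht0def, Fin.cast_val_eq_self, add_comm, sub_add_cancel]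
    have ht0lt : t0 < 3*k := (v - x).isLt
    have ht0ne0 : t0 ≠ 0 := by
      intro h; apply c2; rw [hveq, h, nuE_zero]
    have ht0ne1 : t0 ≠ 1 := by
      intro h
      apply c1
      rw [hveq, h, nuE_sub_one x (by omega), show (1:ℕ)-1 = 0 by omega, nuE_zero]
    have ht0nek : t0 ≠ 3*k-1 := by
      intro h
      apply c3
      rw [hveq, h, ← nuE_succ, show 3*k-1+1 = 3*k by omega, nuE_n]
    exact ⟨t0, by omega, by omega, by rw [hv, hveq]⟩
  -- no cubic centered at position 2
  have hno2 : ∀ i, f i ≠ cub (nuE x 2) := by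
    have hpt : ∀ i : Fin (k+1),
        ((if f i = Q3 then (1:ℕ) else 0) + (if f i = cub (nuE x 2) then 1 else 0))
          ≤ f i (nuE x 1) := by
      intro i
      rcases hfE i with ⟨v, hv⟩ | h | h | h
      · obtain ⟨t0, ht02, ht0k, hv'⟩ := hcubt i ⟨v, hv⟩
        rw [if_neg (fun h2 => cub_ne_qd _ _ _ (hv.symm.trans (h2.trans hQ3def)))]
        by_cases ht0eq : t0 = 2
        · rw [if_pos (by rw [hv', ht0eq]), hv', ht0eq,
            hcub_nuE 2 1 (by omega) (by omega) (by omega), if_pos (by omega)]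
        · rw [if_neg (fun h2 => by
            have := DFunLike.congr_fun (hv'.symm.trans h2) (nuE x 1)
            rw [hcub_nuE t0 1 (by omega) (by omega) (by omega),
              hcub_nuE 2 1 (by omega) (by omega) (by omega),
              if_neg (by omega), if_pos (by omega)] at this
            exact absurd this (by omega))]
          exact Nat.zero_le _
      · rw [if_neg (fun h2 => hQ31 (h2.symm.trans h)),
          if_neg (fun h2 => cub_ne_qd _ _ _ ((h2.symm.trans h).trans hQ1def))]
        exact Nat.zero_le _
      · rw [if_neg (fun h2 => hQ32 (h2.symm.trans h)),
          if_neg (fun h2 => cub_ne_qd _ _ _ ((h2.symm.trans h).trans hQ2def))]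
        exact Nat.zero_le _
      · rw [if_pos h,
          if_neg (fun h2 => cub_ne_qd _ _ _ ((h2.symm.trans h).trans hQ3def)),
          h, hQ3def, hqd_nuE _ _ _ (by omega) (by omega) (by omega),
          if_pos rfl, if_neg (by omega)]
    have hsum := Finset.sum_le_sum (fun i (_ : i ∈ Finset.univ) => hpt i)
    rw [Finset.sum_add_distrib] at hsum
    have hF1 := hFeq (nuE x 1)
    rw [hdval1 1 (by omega) (by omega) (by omega) (by omega)] at hF1
    have hS2 : ∑ i : Fin (k+1), (if f i = cub (nuE x 2) then (1:ℕ) else 0) = 0 := by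
      rw [hA3def] at hA3eq
      omega
    intro i hi
    have := Finset.sum_eq_zero_iff.mp hS2 i (Finset.mem_univ i)
    rw [if_pos hi] at this
    omega
  -- no cubic centered at position 3
  have hno3 : ∀ i, f i ≠ cub (nuE x 3) := by
    have hpt : ∀ i : Fin (k+1),
        ((if f i = Q3 then (1:ℕ) else 0) + (if f i = cub (nuE x 3) then 1 else 0))
          ≤ f i (nuE x 2) := by
      intro i
      rcases hfE i with ⟨v, hv⟩ | h | h | h
      · obtain ⟨t0, ht02, ht0k, hv'⟩ := hcubt i ⟨v, hv⟩
        have ht0ne2 : t0 ≠ 2 := by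
          intro h2; exact hno2 i (by rw [hv', h2])
        rw [if_neg (fun h2 => cub_ne_qd _ _ _ (hv.symm.trans (h2.trans hQ3def)))]
        by_cases ht0eq : t0 = 3
        · rw [if_pos (by rw [hv', ht0eq]), hv', ht0eq,
            hcub_nuE 3 2 (by omega) (by omega) (by omega), if_pos (by omega)]
        · rw [if_neg (fun h2 => by
            have := DFunLike.congr_fun (hv'.symm.trans h2) (nuE x 2)
            rw [hcub_nuE t0 2 (by omega) (by omega) (by omega),
              hcub_nuE 3 2 (by omega) (by omega) (by omega),
              if_neg (by omega), if_pos (by omega)] at this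
            exact absurd this (by omega))]
          exact Nat.zero_le _
      · rw [if_neg (fun h2 => hQ31 (h2.symm.trans h)),
          if_neg (fun h2 => cub_ne_qd _ _ _ ((h2.symm.trans h).trans hQ1def))]
        exact Nat.zero_le _
      · rw [if_neg (fun h2 => hQ32 (h2.symm.trans h)),
          if_neg (fun h2 => cub_ne_qd _ _ _ ((h2.symm.trans h).trans hQ2def))]
        exact Nat.zero_le _
      · rw [if_pos h,
          if_neg (fun h2 => cub_ne_qd _ _ _ ((h2.symm.trans h).trans hQ3def)),
          h, hQ3def, hqd_nuE _ _ _ (by omega) (by omega) (by omega),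
          if_neg (by omega), if_pos rfl]
    have hsum := Finset.sum_le_sum (fun i (_ : i ∈ Finset.univ) => hpt i)
    rw [Finset.sum_add_distrib] at hsum
    have hF1 := hFeq (nuE x 2)
    rw [hdval1 2 (by omega) (by omega) (by omega) (by omega)] at hF1
    have hS3 : ∑ i : Fin (k+1), (if f i = cub (nuE x 3) then (1:ℕ) else 0) = 0 := by
      rw [hA3def] at hA3eq
      omega
    intro i hi
    have := Finset.sum_eq_zero_iff.mp hS3 i (Finset.mem_univ i)
    rw [if_pos hi] at this
    omega
  -- the final contradiction: entries at x+4 dominate entries at x+5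
  have hpt6 : ∀ i : Fin (k+1), f i (nuE x 4) ≤ f i (nuE x 5) := by
    intro i
    rcases hfE i with ⟨v, hv⟩ | h | h | h
    · obtain ⟨t0, ht02, ht0k, hv'⟩ := hcubt i ⟨v, hv⟩
      have ht0ne2 : t0 ≠ 2 := fun h2 => hno2 i (by rw [hv', h2])
      have ht0ne3 : t0 ≠ 3 := fun h2 => hno3 i (by rw [hv', h2])
      rw [hv', hcub_nuE t0 4 (by omega) (by omega) (by omega),
        hcub_nuE t0 5 (by omega) (by omega) (by omega)]
      split_ifs <;> omega
    · rw [h, hQ1def, hqd_nuE _ _ _ (by omega) (by omega) (by omega),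
        hqd_nuE _ _ _ (by omega) (by omega) (by omega),
        if_neg (by omega), if_neg (by omega)]
      exact Nat.zero_le _
    · rw [h, hQ2def, hqd_nuE _ _ _ (by omega) (by omega) (by omega),
        hqd_nuE _ _ _ (by omega) (by omega) (by omega),
        if_neg (by omega), if_neg (by omega)]
      exact Nat.zero_le _
    · rw [h, hQ3def, hqd_nuE _ _ _ (by omega) (by omega) (by omega),
        hqd_nuE _ _ _ (by omega) (by omega) (by omega),
        if_neg (by omega), if_neg (by omega)]
      exact Nat.zero_le _
  have hsum6 := Finset.sum_le_sum (fun i (_ : i ∈ Finset.univ) => hpt6 i)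
  have h4 := hFeq (nuE x 4)
  have h5 := hFeq (nuE x 5)
  rw [hdval4] at h4
  rw [hdval1 5 (by omega) (by omega) (by omega) (by omega)] at h5
  omega

end Part2c

end PathIdeal3Aux

open PathIdeal3Aux in
/-- Let `k > 3`, let `J = I₃(C_{3k})` be the cubic path ideal of the cycle
`C_{3k}` and let `x` be any variable (vertex) of `C_{3k}`. Then
`(J : x)⁽ᵏ⁺¹⁾ ≠ (J : x)ᵏ⁺¹`. -/
theorem colon_symbolicPower_ne_of_cycle3k
    (K : Type*) [Field K] (k : ℕ) (hk : 3 < k) (x : Fin (3 * k)) :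
    symbolicPower
        ((pathIdeal3 K (cycleGraph (3 * k))).colon (Ideal.span {(X x : MvPolynomial (Fin (3 * k)) K)}))
        (k + 1) ≠
      ((pathIdeal3 K (cycleGraph (3 * k))).colon
        (Ideal.span {(X x : MvPolynomial (Fin (3 * k)) K)})) ^ (k + 1) := by
  classical
  haveI : NeZero (3*k) := ⟨by omega⟩
  intro heq
  have hW := part1 (K := K) hk x
  rw [heq] at hW
  have h2 : ((pathIdeal3 K (cycleGraph (3*k))).colon (Ideal.span {(X x : MvPolynomial (Fin (3*k)) K)})) ^ (k+1)
      ≤ (Ideal.span ((fun e => (monomial e 1 : MvPolynomial (Fin (3*k)) K)) '' Eset x)) ^ (k+1) :=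
    Ideal.pow_right_mono (colon_le_span (by omega) x) _
  have hW2 := pow_le_span_sums (K := K) x (k+1) (h2 hW)
  rw [mem_ideal_span_monomial_image] at hW2
  have hsup : dvec k x ∈ (monomial (dvec k x) (1:K)).support := by
    rw [support_monomial, if_neg one_ne_zero]
    exact Finset.mem_singleton_self _
  obtain ⟨e, ⟨g, hg, rfl⟩, hle⟩ := hW2 _ hsup
  exact contra hk x g hg hle
end

section
/- Let I be a squarefree monomial ideal in a polynomial ring over a field and let x be a variable. If I^(n) = I^n for all n ≥ 1, then (I : x)^(n) = (I : x)^n for all n ≥ 1. -/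
open MvPolynomial

section Aux
variable {k : Type*} [Field k] {V : Type*} [Fintype V] [DecidableEq V]

/-- exponent vector of a squarefree monomial -/
noncomputable def SqAux.ind (s : Finset V) : V →₀ ℕ := ∑ v ∈ s, Finsupp.single v 1

namespace SqAux

lemma ind_apply (s : Finset V) (v : V) : ind s v = if v ∈ s then 1 else 0 := by
  classical
  simp [ind, Finsupp.finset_sum_apply, Finsupp.single_apply, Finset.sum_ite_eq]

lemma prod_X_eq (s : Finset V) :
    (∏ v ∈ s, X v : MvPolynomial V k) = monomial (ind s) 1 := by
  rw [ind, monomial_sum_one]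
  refine Finset.prod_congr rfl fun v _ => ?_
  rw [← X_pow_eq_monomial, pow_one]

/-- monomial ideal associated to a set of exponents -/
noncomputable def mSpan (k : Type*) [Field k] {V : Type*} (D : Set (V →₀ ℕ)) : Ideal (MvPolynomial V k) :=
  Ideal.span ((fun d => monomial d (1 : k)) '' D)

lemma mem_mSpan {D : Set (V →₀ ℕ)} {f : MvPolynomial V k} :
    f ∈ mSpan k D ↔ ∀ m ∈ f.support, ∃ d ∈ D, d ≤ m :=
  mem_ideal_span_monomial_image

lemma mSpan_mul (D₁ D₂ : Set (V →₀ ℕ)) :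
    mSpan k D₁ * mSpan k D₂ = mSpan k (Set.image2 (· + ·) D₁ D₂) := by
  rw [mSpan, mSpan, mSpan, Ideal.span_mul_span']
  congr 1
  ext p
  simp only [Set.mem_mul, Set.mem_image, Set.mem_image2]
  constructor
  · rintro ⟨a, ⟨d₁, h₁, rfl⟩, b, ⟨d₂, h₂, rfl⟩, rfl⟩
    exact ⟨d₁ + d₂, ⟨d₁, h₁, d₂, h₂, rfl⟩, by rw [monomial_mul, one_mul]⟩
  · rintro ⟨d, ⟨d₁, h₁, d₂, h₂, rfl⟩, rfl⟩
    exact ⟨_, ⟨d₁, h₁, rfl⟩, _, ⟨d₂, h₂, rfl⟩, by rw [monomial_mul, one_mul]⟩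

/-- `n`-fold sums from `D` -/
def Dpow (n : ℕ) (D : Set (V →₀ ℕ)) : Set (V →₀ ℕ) :=
  {d | ∃ g : Fin n → (V →₀ ℕ), (∀ i, g i ∈ D) ∧ d = ∑ i, g i}

lemma mSpan_pow (D : Set (V →₀ ℕ)) (n : ℕ) :
    mSpan k D ^ n = mSpan k (Dpow n D) := by
  induction n with
  | zero =>
    have h1 : Dpow 0 D = {(0 : V →₀ ℕ)} := by ext d; simp [Dpow]
    rw [pow_zero, h1, mSpan]
    simp [Ideal.span_singleton_one, Ideal.one_eq_top]
  | succ n ih =>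
    rw [pow_succ, ih, mSpan_mul]
    congr 1
    ext d
    constructor
    · rintro ⟨d₁, ⟨g, hg, rfl⟩, d₂, h₂, rfl⟩
      refine ⟨Fin.snoc g d₂, fun i => ?_, ?_⟩
      · induction i using Fin.lastCases with
        | last => simpa using h₂
        | cast j => simpa using hg j
      · rw [Fin.sum_univ_castSucc]; simp
    · rintro ⟨g, hg, rfl⟩
      exact ⟨∑ i : Fin n, g i.castSucc, ⟨fun i => g i.castSucc, fun i => hg _, rfl⟩,
        g (Fin.last n), hg _, by rw [Fin.sum_univ_castSucc]⟩


/-- the prime ideal generated by the variables in `F` -/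
noncomputable def PF (k : Type*) [Field k] {V : Type*} (F : Finset V) : Ideal (MvPolynomial V k) :=
  Ideal.span (X '' (F : Set V))

lemma mem_PF {F : Finset V} {f : MvPolynomial V k} :
    f ∈ PF k F ↔ ∀ m ∈ f.support, ∃ v ∈ F, m v ≠ 0 := by
  rw [PF, mem_ideal_span_X_image]
  simp

lemma X_mem_PF {F : Finset V} {v : V} : (X v : MvPolynomial V k) ∈ PF k F ↔ v ∈ F := by
  constructor
  · intro h
    obtain ⟨u, hu, hne⟩ := mem_PF.mp h (Finsupp.single v 1) (by simp [support_X])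
    rw [Finsupp.single_apply] at hne
    rcases eq_or_ne v u with rfl | hvu
    · exact hu
    · simp [hvu] at hne
  · intro h
    exact Ideal.subset_span ⟨v, h, rfl⟩

lemma PF_le_PF {F G : Finset V} : PF k F ≤ PF (V := V) k G ↔ F ⊆ G := by
  constructor
  · intro h v hv
    exact X_mem_PF.mp (h (X_mem_PF.mpr hv))
  · intro h
    rw [PF, Ideal.span_le]
    rintro _ ⟨v, hv, rfl⟩
    exact Ideal.subset_span ⟨v, h hv, rfl⟩

lemma PF_isPrime (F : Finset V) : (PF k F).IsPrime := by
  set g : V → MvPolynomial V k := fun v => if v ∈ F then 0 else X v with hg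
  have hker : PF k F = RingHom.ker
      ((aeval g : MvPolynomial V k →ₐ[k] MvPolynomial V k) :
        MvPolynomial V k →+* MvPolynomial V k) := by
    apply le_antisymm
    · rw [PF, Ideal.span_le]
      rintro _ ⟨v, hv, rfl⟩
      simp only [SetLike.mem_coe, RingHom.mem_ker, RingHom.coe_coe, aeval_X]
      simp [hg, Finset.mem_coe.mp hv]
    · intro f hf
      rw [RingHom.mem_ker, RingHom.coe_coe] at hf
      rw [mem_PF]
      by_contra hc
      push_neg at hc
      obtain ⟨m, hm, hmF⟩ := hc
      have hterm : ∀ d ∈ f.support, (aeval g) (monomial d (coeff d f)) =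
          if ∀ v ∈ F, d v = 0 then monomial d (coeff d f) else 0 := by
        intro d _
        rw [aeval_monomial]
        split_ifs with h
        · have hprod : (d.prod fun n e => g n ^ e) = monomial d 1 := by
            rw [← prod_X_pow_eq_monomial, Finsupp.prod]
            refine Finset.prod_congr rfl fun v hv => ?_
            have hvF : v ∉ F := fun hvF => (Finsupp.mem_support_iff.mp hv) (h v hvF)
            simp [hg, hvF]
          rw [hprod, algebraMap_eq, C_mul_monomial, mul_one]
        · push_neg at h
          obtain ⟨v, hvF, hdv⟩ := h
          rw [Finsupp.prod]
          refine mul_eq_zero_of_right _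
            (Finset.prod_eq_zero (Finsupp.mem_support_iff.mpr hdv) ?_)
          simp [hg, hvF, zero_pow hdv]
      have hco : coeff m ((aeval g) f) = coeff m f := by
        conv_lhs => rw [f.as_sum, map_sum, Finset.sum_congr rfl hterm]
        rw [coeff_sum]
        rw [Finset.sum_eq_single_of_mem m hm ?_]
        · rw [if_pos hmF, coeff_monomial, if_pos rfl]
        · intro d _ hdm
          split_ifs with h
          · rw [coeff_monomial, if_neg hdm]
          · exact coeff_zero m
      rw [hf, coeff_zero] at hco
      exact Finsupp.mem_support_iff.mp hm hco.symm
  rw [hker]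
  exact RingHom.ker_isPrime _

lemma PF_eq_mSpan (F : Finset V) :
    PF k F = mSpan k ((fun v => Finsupp.single v 1) '' (F : Set V)) := by
  rw [PF, mSpan, ← Set.image_comp]
  refine congrArg _ (Set.image_congr fun v _ => ?_)
  simp only [Function.comp_apply]
  rw [← X_pow_eq_monomial, pow_one]

lemma dpow_le_iff {F : Finset V} {m : V →₀ ℕ} {n : ℕ} :
    (∃ d ∈ Dpow n ((fun v => Finsupp.single v 1) '' (F : Set V)), d ≤ m) ↔
      n ≤ ∑ v ∈ F, m v := by
  constructor
  · rintro ⟨d, ⟨g, hg, rfl⟩, hd⟩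
    have h1 : ∀ i : Fin n, ∑ v ∈ F, g i v = 1 := by
      intro i
      obtain ⟨u, hu, hgu⟩ := hg i
      rw [← hgu]
      rw [Finset.sum_congr rfl fun v _ => Finsupp.single_apply]
      rw [Finset.sum_ite_eq F u (fun _ => 1), if_pos (Finset.mem_coe.mp hu)]
    calc n = ∑ i : Fin n, ∑ v ∈ F, g i v := by simp [h1]
      _ = ∑ v ∈ F, (∑ i : Fin n, g i) v := by
          rw [Finset.sum_comm]
          exact Finset.sum_congr rfl fun v _ => by simp
      _ ≤ ∑ v ∈ F, m v := Finset.sum_le_sum fun v _ => hd v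
  · induction n generalizing m with
    | zero =>
      intro _
      exact ⟨0, ⟨Fin.elim0, fun i => i.elim0, by simp⟩, zero_le⟩
    | succ n ih =>
      intro h
      have hex : ∃ v ∈ F, m v ≠ 0 := by
        by_contra hcon
        push_neg at hcon
        rw [Finset.sum_congr rfl hcon, Finset.sum_const, smul_zero] at h
        omega
      obtain ⟨v₀, hv₀, hm0⟩ := hex
      set m' : V →₀ ℕ := m - Finsupp.single v₀ 1 with hm'
      have hm'app : ∀ v, m' v = m v - (if v = v₀ then 1 else 0) := by
        intro v
        rw [hm', Finsupp.tsub_apply, Finsupp.single_apply]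
        simp [eq_comm]
      have hsum : n ≤ ∑ v ∈ F, m' v := by
        have e1 : ∑ v ∈ F.erase v₀, m' v = ∑ v ∈ F.erase v₀, m v :=
          Finset.sum_congr rfl fun v hv => by
            rw [hm'app, if_neg (Finset.ne_of_mem_erase hv), Nat.sub_zero]
        have e2 : ∑ v ∈ F.erase v₀, m v + m v₀ = ∑ v ∈ F, m v :=
          Finset.sum_erase_add F _ hv₀
        have e3 : ∑ v ∈ F.erase v₀, m' v + m' v₀ = ∑ v ∈ F, m' v :=
          Finset.sum_erase_add F _ hv₀
        have e4 : m' v₀ = m v₀ - 1 := by rw [hm'app]; simp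
        have e5 : 1 ≤ m v₀ := Nat.one_le_iff_ne_zero.mpr hm0
        omega
      obtain ⟨d, ⟨g, hg, rfl⟩, hd⟩ := ih hsum
      refine ⟨Finsupp.single v₀ 1 + ∑ i, g i,
        ⟨Fin.cons (Finsupp.single v₀ 1) g, ?_, ?_⟩, ?_⟩
      · intro i
        induction i using Fin.cases with
        | zero => exact ⟨v₀, hv₀, by simp⟩
        | succ j => simpa using hg j
      · rw [Fin.sum_univ_succ]
        simp
      · intro v
        have h1 := hd v
        rw [hm'app] at h1
        have h2 := hm0
        simp only [Finsupp.coe_add, Pi.add_apply, Finsupp.single_apply]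
        have e5 : 1 ≤ m v₀ := Nat.one_le_iff_ne_zero.mpr hm0
        rcases eq_or_ne v v₀ with rfl | hne
        · simp at h1 ⊢
          omega
        · rw [if_neg (Ne.symm hne)]
          rw [if_neg hne] at h1
          omega

lemma mem_PF_pow {F : Finset V} {n : ℕ} {f : MvPolynomial V k} :
    f ∈ PF k F ^ n ↔ ∀ m ∈ f.support, n ≤ ∑ v ∈ F, m v := by
  rw [PF_eq_mSpan, mSpan_pow, mem_mSpan]
  exact forall₂_congr fun m _ => dpow_le_iff


/-- vertex covers -/
def Cov (S : Set (Finset V)) : Set (Finset V) := {F | ∀ s ∈ S, ∃ v ∈ s, v ∈ F}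

lemma mSpan_ind_le_PF {S : Set (Finset V)} {F : Finset V} :
    mSpan k (ind '' S) ≤ PF k F ↔ F ∈ Cov S := by
  classical
  constructor
  · intro h s hs
    have hmem : (monomial (ind s) (1 : k)) ∈ PF k F :=
      h (Ideal.subset_span ⟨ind s, ⟨s, hs, rfl⟩, rfl⟩)
    obtain ⟨v, hvF, hne⟩ := mem_PF.mp hmem (ind s)
      (by rw [support_monomial, if_neg one_ne_zero]; exact Finset.mem_singleton_self _)
    refine ⟨v, ?_, hvF⟩
    rw [ind_apply] at hne
    by_contra hv
    simp [hv] at hne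
  · intro h
    rw [mSpan, Ideal.span_le]
    rintro _ ⟨d, ⟨s, hs, rfl⟩, rfl⟩
    rw [SetLike.mem_coe, mem_PF]
    intro m hm
    rw [support_monomial, if_neg one_ne_zero, Finset.mem_singleton] at hm
    subst hm
    obtain ⟨v, hvs, hvF⟩ := h s hs
    exact ⟨v, hvF, by rw [ind_apply, if_pos hvs]; exact one_ne_zero⟩

lemma cover_of_prime {S : Set (Finset V)} {p : Ideal (MvPolynomial V k)} (hp : p.IsPrime)
    (hle : mSpan k (ind '' S) ≤ p) {F₀ : Finset V} (hF₀ : ∀ v, v ∈ F₀ ↔ X v ∈ p) :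
    F₀ ∈ Cov S ∧ PF k F₀ ≤ p := by
  constructor
  · intro s hs
    have hmem : (∏ v ∈ s, X v : MvPolynomial V k) ∈ p := by
      rw [prod_X_eq]
      exact hle (Ideal.subset_span ⟨ind s, ⟨s, hs, rfl⟩, rfl⟩)
    obtain ⟨v, hvs, hvp⟩ := (Ideal.IsPrime.prod_mem_iff (hp := hp)).mp hmem
    exact ⟨v, hvs, (hF₀ v).mpr hvp⟩
  · rw [PF, Ideal.span_le]
    rintro _ ⟨v, hv, rfl⟩
    exact (hF₀ v).mp hv

lemma minimalPrimes_mSpan (S : Set (Finset V)) :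
    (mSpan k (ind '' S)).minimalPrimes = PF k '' {F | Minimal (· ∈ Cov S) F} := by
  classical
  ext p
  constructor
  · rintro ⟨⟨hp, hle⟩, hmin⟩
    set F₀ := Finset.univ.filter (fun v => X v ∈ p) with hF₀
    obtain ⟨hcov, hPFle⟩ := cover_of_prime hp hle (F₀ := F₀) (fun v => by simp [hF₀])
    have hpeq : p = PF k F₀ :=
      le_antisymm (hmin ⟨PF_isPrime F₀, mSpan_ind_le_PF.mpr hcov⟩ hPFle) hPFle
    refine ⟨F₀, ⟨hcov, ?_⟩, hpeq.symm⟩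
    intro G hG hGF
    have hstep : p ≤ PF k G := hmin ⟨PF_isPrime G, mSpan_ind_le_PF.mpr hG⟩
      (le_trans (PF_le_PF.mpr (Finset.le_iff_subset.mp hGF)) hpeq.ge)
    exact Finset.le_iff_subset.mpr (PF_le_PF.mp (hpeq ▸ hstep))
  · rintro ⟨F, ⟨hF, hmin⟩, rfl⟩
    refine ⟨⟨PF_isPrime F, mSpan_ind_le_PF.mpr hF⟩, ?_⟩
    rintro q ⟨hq, hqle⟩ hqPF
    obtain ⟨hcov, hPFle⟩ := cover_of_prime hq hqle
      (F₀ := Finset.univ.filter (fun v => X v ∈ q)) (fun v => by simp)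
    have hsub : Finset.univ.filter (fun v => X v ∈ q) ⊆ F := by
      intro v hv
      exact X_mem_PF.mp (hqPF (Finset.mem_filter.mp hv).2)
    exact le_trans (PF_le_PF.mpr (hmin hcov hsub)) hPFle

lemma mem_support_mul_monomial {f : MvPolynomial V k} {d m' : V →₀ ℕ} :
    m' ∈ (f * monomial d (1 : k)).support ↔ d ≤ m' ∧ m' - d ∈ f.support := by
  rw [mem_support_iff, coeff_mul_monomial']
  split_ifs with h
  · simp [h, mem_support_iff]
  · simp [h]

lemma ind_erase_le_iff {s : Finset V} {x : V} {m : V →₀ ℕ} :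
    ind (s.erase x) ≤ m ↔ ind s ≤ m + Finsupp.single x 1 := by
  constructor
  · intro h v
    have h1 := h v
    rw [ind_apply] at h1 ⊢
    simp only [Finsupp.coe_add, Pi.add_apply, Finsupp.single_apply]
    by_cases hx : x = v
    · rw [if_pos hx]
      have h2 : (if v ∈ s then 1 else 0) ≤ 1 := by split_ifs <;> omega
      omega
    · rw [if_neg hx]
      have hmem : (v ∈ s.erase x) = (v ∈ s) := propext (by
        rw [Finset.mem_erase]
        exact and_iff_right (fun hh => hx hh.symm))
      simpa only [hmem, add_zero] using h1
  · intro h v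
    have h1 := h v
    rw [ind_apply] at h1 ⊢
    simp only [Finsupp.coe_add, Pi.add_apply, Finsupp.single_apply] at h1
    by_cases hx : x = v
    · rw [if_neg (fun hc => (Finset.mem_erase.mp hc).1 hx.symm)]
      exact Nat.zero_le _
    · rw [if_neg hx] at h1
      have hmem : (v ∈ s.erase x) = (v ∈ s) := propext (by
        rw [Finset.mem_erase]
        exact and_iff_right (fun hh => hx hh.symm))
      simp only [hmem]
      omega

lemma colon_mSpan (S : Set (Finset V)) (x : V) :
    (mSpan k (ind '' S)).colon (Ideal.span {(X x : MvPolynomial V k)}) =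
      mSpan k (ind '' ((fun s => s.erase x) '' S)) := by
  ext f
  rw [Ideal.mem_colon_span_singleton, mem_mSpan, mem_mSpan]
  have hX : (X x : MvPolynomial V k) = monomial (Finsupp.single x 1) 1 := by
    rw [← X_pow_eq_monomial, pow_one]
  rw [hX]
  constructor
  · intro h m hm
    obtain ⟨d, ⟨s, hs, rfl⟩, hd⟩ := h (m + Finsupp.single x 1)
      (mem_support_mul_monomial.mpr ⟨le_add_self, by rwa [add_tsub_cancel_right]⟩)
    exact ⟨ind (s.erase x), ⟨s.erase x, ⟨s, hs, rfl⟩, rfl⟩, ind_erase_le_iff.mpr hd⟩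
  · intro h m' hm'
    obtain ⟨hle, hmem⟩ := mem_support_mul_monomial.mp hm'
    obtain ⟨d, ⟨s', ⟨s, hs, rfl⟩, rfl⟩, hd⟩ := h (m' - Finsupp.single x 1) hmem
    refine ⟨ind s, ⟨s, hs, rfl⟩, ?_⟩
    have := ind_erase_le_iff.mp hd
    rwa [tsub_add_cancel_of_le hle] at this

lemma cov_erase_iff {S : Set (Finset V)} {x : V} {F : Finset V} :
    F ∈ Cov ((fun s => s.erase x) '' S) ↔ F.erase x ∈ Cov S := by
  constructor
  · intro h s hs
    obtain ⟨v, hv, hvF⟩ := h (s.erase x) ⟨s, hs, rfl⟩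
    rw [Finset.mem_erase] at hv
    exact ⟨v, hv.2, Finset.mem_erase.mpr ⟨hv.1, hvF⟩⟩
  · rintro h _ ⟨s, hs, rfl⟩
    obtain ⟨v, hv, hvF⟩ := h s hs
    rw [Finset.mem_erase] at hvF
    exact ⟨v, Finset.mem_erase.mpr ⟨hvF.1, hv⟩, hvF.2⟩

lemma minimal_cov_erase {S : Set (Finset V)} {x : V} {F : Finset V} :
    Minimal (· ∈ Cov ((fun s => s.erase x) '' S)) F ↔ Minimal (· ∈ Cov S) F ∧ x ∉ F := by
  constructor
  · rintro ⟨hF, hmin⟩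
    have hxF : x ∉ F := by
      by_contra hx
      have hFe : F.erase x ∈ Cov ((fun s => s.erase x) '' S) := by
        rw [cov_erase_iff, Finset.erase_idem]
        exact cov_erase_iff.mp hF
      have := hmin hFe (Finset.erase_subset x F)
      exact (Finset.notMem_erase x F) (this hx)
    have hFS : F ∈ Cov S := by
      have := cov_erase_iff.mp hF
      rwa [Finset.erase_eq_of_notMem hxF] at this
    refine ⟨⟨hFS, ?_⟩, hxF⟩
    intro G hG hGF
    have hxG : x ∉ G := fun hx => hxF (hGF hx)
    have hG' : G ∈ Cov ((fun s => s.erase x) '' S) := by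
      rw [cov_erase_iff, Finset.erase_eq_of_notMem hxG]
      exact hG
    exact hmin hG' hGF
  · rintro ⟨⟨hF, hmin⟩, hxF⟩
    constructor
    · show F ∈ Cov ((fun s => s.erase x) '' S)
      rw [cov_erase_iff, Finset.erase_eq_of_notMem hxF]
      exact hF
    · intro G hG hGF
      have hGe := cov_erase_iff.mp hG
      have hFsub : F ⊆ G.erase x := hmin hGe (le_trans (Finset.erase_subset x G) hGF)
      exact le_trans hFsub (Finset.erase_subset x G)

end SqAux
end Aux


/-- Let `I` be a squarefree monomial ideal in a polynomial ring over a
field and `x` a variable. If `I⁽ⁿ⁾ = Iⁿ` for all `n ≥ 1`, then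
`(I : x)⁽ⁿ⁾ = (I : x)ⁿ` for all `n ≥ 1`. -/
theorem colon_symbolicPower_eq_of_symbolicPower_eq
    (k : Type*) [Field k] {V : Type*} [Fintype V] [DecidableEq V]
    (I : Ideal (MvPolynomial V k))
    -- `I` is a squarefree monomial ideal
    (hsqfree : ∃ S : Set (Finset V), I = Ideal.span ((fun s : Finset V => ∏ v ∈ s, X v) '' S))
    (x : V)
    (hI : ∀ n : ℕ, 1 ≤ n → symbolicPower I n = I ^ n) :
    ∀ n : ℕ, 1 ≤ n →
      symbolicPower (I.colon (Ideal.span {(X x : MvPolynomial V k)})) n =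
        (I.colon (Ideal.span {(X x : MvPolynomial V k)})) ^ n := by
  classical
  obtain ⟨S, hS⟩ := hsqfree
  have hI0 : I = SqAux.mSpan k (SqAux.ind '' S) := by
    rw [hS, SqAux.mSpan, Set.image_image]
    exact congrArg _ (Set.image_congr fun s _ => SqAux.prod_X_eq s)
  intro n hn
  set S' : Set (Finset V) := (fun s => s.erase x) '' S with hS'
  have hJ : I.colon (Ideal.span {(X x : MvPolynomial V k)})
      = SqAux.mSpan k (SqAux.ind '' S') := by
    rw [hI0, SqAux.colon_mSpan]
  have hminJ : (I.colon (Ideal.span {(X x : MvPolynomial V k)})).minimalPrimes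
      = SqAux.PF k '' {F | Minimal (· ∈ SqAux.Cov S) F ∧ x ∉ F} := by
    rw [hJ, hS', SqAux.minimalPrimes_mSpan]
    have hsets : {F : Finset V | Minimal (· ∈ SqAux.Cov ((fun s => s.erase x) '' S)) F}
        = {F | Minimal (· ∈ SqAux.Cov S) F ∧ x ∉ F} := by
      ext F
      exact SqAux.minimal_cov_erase
    rw [hsets]
  have hminI : I.minimalPrimes = SqAux.PF k '' {F | Minimal (· ∈ SqAux.Cov S) F} := by
    rw [hI0, SqAux.minimalPrimes_mSpan]
  have h1 : symbolicPower (I.colon (Ideal.span {(X x : MvPolynomial V k)})) n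
      = ⨅ F ∈ {F | Minimal (· ∈ SqAux.Cov S) F ∧ x ∉ F}, SqAux.PF k F ^ n := by
    rw [symbolicPower, hminJ, iInf_image]
  have h2 : symbolicPower I n
      = ⨅ F ∈ {F | Minimal (· ∈ SqAux.Cov S) F}, SqAux.PF k F ^ n := by
    rw [symbolicPower, hminI, iInf_image]
  have key : (⨅ F ∈ {F | Minimal (· ∈ SqAux.Cov S) F ∧ x ∉ F}, SqAux.PF k F ^ n)
      = (⨅ F ∈ {F | Minimal (· ∈ SqAux.Cov S) F}, SqAux.PF k F ^ n).colon
          (Ideal.span {(X x : MvPolynomial V k) ^ n}) := by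
    ext f
    rw [Ideal.mem_colon_span_singleton]
    simp only [Submodule.mem_iInf, Set.mem_setOf_eq]
    constructor
    · intro hf F hF
      by_cases hx : x ∈ F
      · exact Ideal.mul_mem_left _ f (Ideal.pow_mem_pow (SqAux.X_mem_PF.mpr hx) n)
      · exact Ideal.mul_mem_right _ _ (hf F ⟨hF, hx⟩)
    · rintro hf F ⟨hF, hx⟩
      have hmem := hf F hF
      rw [SqAux.mem_PF_pow] at hmem ⊢
      intro m hm
      have hsup : m + Finsupp.single x n ∈ (f * (X x : MvPolynomial V k) ^ n).support := by
        rw [X_pow_eq_monomial]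
        exact SqAux.mem_support_mul_monomial.mpr ⟨le_add_self, by rwa [add_tsub_cancel_right]⟩
      have h3 := hmem _ hsup
      calc n ≤ ∑ v ∈ F, (m + Finsupp.single x n) v := h3
        _ = ∑ v ∈ F, m v := Finset.sum_congr rfl fun v hv => by
            simp only [Finsupp.coe_add, Pi.add_apply, Finsupp.single_apply]
            rw [if_neg (fun hh : x = v => hx (by rw [hh]; exact hv)), add_zero]
  have h4 : (I ^ n).colon (Ideal.span {(X x : MvPolynomial V k) ^ n})
      = (I.colon (Ideal.span {(X x : MvPolynomial V k)})) ^ n := by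
    apply le_antisymm
    · intro f hf
      rw [Ideal.mem_colon_span_singleton, hI0, SqAux.mSpan_pow, SqAux.mem_mSpan] at hf
      rw [hJ, SqAux.mSpan_pow, SqAux.mem_mSpan]
      intro m hm
      have hsup : m + Finsupp.single x n ∈ (f * (X x : MvPolynomial V k) ^ n).support := by
        rw [X_pow_eq_monomial]
        exact SqAux.mem_support_mul_monomial.mpr ⟨le_add_self, by rwa [add_tsub_cancel_right]⟩
      obtain ⟨d, ⟨g, hg, rfl⟩, hd⟩ := hf _ hsup
      choose t ht hgt using hg
      refine ⟨∑ i, SqAux.ind ((t i).erase x),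
        ⟨fun i => SqAux.ind ((t i).erase x),
          fun i => ⟨(t i).erase x, ⟨t i, ht i, rfl⟩, rfl⟩, rfl⟩, ?_⟩
      intro v
      have hdv := hd v
      simp only [Finsupp.coe_finset_sum, Finset.sum_apply] at hdv ⊢
      by_cases hvx : v = x
      · subst hvx
        have hz : ∀ i : Fin n, SqAux.ind ((t i).erase v) v = 0 := fun i => by
          rw [SqAux.ind_apply, if_neg (Finset.notMem_erase v _)]
        rw [Finset.sum_congr rfl fun i _ => hz i, Finset.sum_const, smul_zero]
        exact Nat.zero_le _
      · have heq : ∀ i : Fin n, SqAux.ind ((t i).erase x) v = g i v := fun i => by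
          have hmm : (v ∈ (t i).erase x) = (v ∈ t i) := propext (by
            rw [Finset.mem_erase]
            exact and_iff_right hvx)
          rw [SqAux.ind_apply, ← hgt i, SqAux.ind_apply]
          simp only [hmm]
        rw [Finset.sum_congr rfl fun i _ => heq i]
        have hsingle : Finsupp.single x n v = 0 := by
          rw [Finsupp.single_apply, if_neg (fun hh => hvx hh.symm)]
        simp only [Finsupp.coe_add, Pi.add_apply] at hdv
        rw [hsingle, add_zero] at hdv
        exact hdv
    · intro f hf
      rw [Ideal.mem_colon_span_singleton]
      have hstep : I.colon (Ideal.span {(X x : MvPolynomial V k)})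
          * Ideal.span {(X x : MvPolynomial V k)} ≤ I := by
        rw [Ideal.mul_le]
        intro r hr s hs
        obtain ⟨c, rfl⟩ := Ideal.mem_span_singleton'.mp hs
        have hrX := Ideal.mem_colon_span_singleton.mp hr
        have hre : r * (c * X x) = c * (r * X x) := by ring
        rw [hre]
        exact Ideal.mul_mem_left _ _ hrX
      have h5 : (X x : MvPolynomial V k) ^ n
          ∈ (Ideal.span {(X x : MvPolynomial V k)}) ^ n :=
        Ideal.pow_mem_pow (Ideal.mem_span_singleton_self _) n
      have h6 := Ideal.mul_mem_mul hf h5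
      rw [← mul_pow] at h6
      exact pow_le_pow_left' hstep n h6
  rw [h1, key, ← h2, hI n hn, h4]
end
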